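/- arXiv:1410.2512 — 12 statements merged into one kernel-verified Lean document; each statement's English description precedes it below -/
import Mathlib

section
/- Let f1, f2 : I → ℝ and g1, g2 : J → ℝ be smooth functions on open intervals I, J, and consider the translation surface X(s,t) = (s + g1(t), f1(s) + t, f2(s) + g2(t)). Suppose that for all (s,t) ∈ I × J one has f2''(s) − f1''(s)·g2'(t) + g1'(t)·(f1''(s)·f2'(s) − f1'(s)·f2''(s)) = 0 (i.e. the coefficient l of the second fundamental form vanishes identically, so the Gauss curvature is K = 0). Then every point (s0,t0) ∈ I × J has open subintervals I' ∋ s0 and J' ∋ t0 such that on I' × J' one of the following holds: (a) f1 and f2 are affine functions (so the curve α(s) = (s, f1(s), f2(s)) is a straight line and the surface is cylindrical over β), or (b) g1 and g2 are affine functions (so the curve β(t) = (g1(t), t, g2(t)) is a straight line and the surface is cylindrical over α), or (c) the image of X restricted to I' × J' is contained in an affine plane of ℝ³. -/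
open Set
open scoped ContDiff

private lemma constOn {f : ℝ → ℝ} {a b : ℝ}
    (hd : ∀ x ∈ Ioo a b, HasDerivAt f 0 x) :
    ∀ x ∈ Ioo a b, ∀ y ∈ Ioo a b, f x = f y := by
  intro x hx y hy
  apply (convex_Ioo a b).is_const_of_fderivWithin_eq_zero
      (fun z hz => (hd z hz).differentiableAt.differentiableWithinAt) _ hx hy
  intro z hz
  rw [fderivWithin_of_isOpen isOpen_Ioo hz,
    (hasDerivAt_iff_hasFDerivAt.1 (hd z hz)).fderiv]
  ext
  simp

private lemma affineOn {f : ℝ → ℝ} {a b p : ℝ}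
    (hd : ∀ x ∈ Ioo a b, HasDerivAt f p x) {x₀ : ℝ} (hx₀ : x₀ ∈ Ioo a b) :
    ∀ x ∈ Ioo a b, f x = p * x + (f x₀ - p * x₀) := by
  intro x hx
  have h := constOn (f := fun x => f x - p * x) (a := a) (b := b) ?_ x hx x₀ hx₀
  · linarith
  · intro z hz
    exact ((hd z hz).sub ((hasDerivAt_id z).const_mul p)).congr_deriv (by simp)

private lemma stepDiff {f : ℝ → ℝ} {a b : ℝ} (hf : ContDiffOn ℝ ∞ f (Ioo a b)) :
    (∀ x ∈ Ioo a b, DifferentiableAt ℝ f x) ∧ ContDiffOn ℝ ∞ (deriv f) (Ioo a b) := by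
  have h := (contDiffOn_infty_iff_deriv_of_isOpen isOpen_Ioo).1 hf
  exact ⟨fun x hx => h.1.differentiableAt (isOpen_Ioo.mem_nhds hx), h.2⟩

private lemma affine2 {f : ℝ → ℝ} {a b : ℝ} (hf : ContDiffOn ℝ ∞ f (Ioo a b))
    (h2 : ∀ s ∈ Ioo a b, deriv (deriv f) s = 0) {s₀ : ℝ} (hs₀ : s₀ ∈ Ioo a b) :
    ∃ p q : ℝ, ∀ s ∈ Ioo a b, f s = p * s + q := by
  have hd1 := stepDiff hf
  have hd2 := stepDiff hd1.2
  have hc : ∀ x ∈ Ioo a b, deriv f x = deriv f s₀ := by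
    intro x hx
    refine constOn (f := deriv f) (fun z hz => ?_) x hx s₀ hs₀
    have := (hd2.1 z hz).hasDerivAt
    rwa [h2 z hz] at this
  refine ⟨deriv f s₀, f s₀ - deriv f s₀ * s₀, fun x hx => ?_⟩
  refine affineOn (fun z hz => ?_) hs₀ x hx
  have := (hd1.1 z hz).hasDerivAt
  rwa [hc z hz] at this

/-- For a translation surface `X(s,t) = (s + g₁ t, f₁ s + t, f₂ s + g₂ t)` with
the coefficient `l` of the second fundamental form vanishing identically (so `K = 0`),
locally either `α` is a straight line, or `β` is a straight line, or the surface
is contained in an affine plane. -/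
theorem translation_flat_classification
    (a₁ b₁ a₂ b₂ : ℝ) (h₁ : a₁ < b₁) (h₂ : a₂ < b₂)
    (f₁ f₂ g₁ g₂ : ℝ → ℝ)
    (hf₁ : ContDiffOn ℝ (⊤ : ℕ∞) f₁ (Set.Ioo a₁ b₁))
    (hf₂ : ContDiffOn ℝ (⊤ : ℕ∞) f₂ (Set.Ioo a₁ b₁))
    (hg₁ : ContDiffOn ℝ (⊤ : ℕ∞) g₁ (Set.Ioo a₂ b₂))
    (hg₂ : ContDiffOn ℝ (⊤ : ℕ∞) g₂ (Set.Ioo a₂ b₂))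
    (hl : ∀ s ∈ Set.Ioo a₁ b₁, ∀ t ∈ Set.Ioo a₂ b₂,
      deriv (deriv f₂) s - deriv (deriv f₁) s * deriv g₂ t
        + deriv g₁ t * (deriv (deriv f₁) s * deriv f₂ s - deriv f₁ s * deriv (deriv f₂) s) = 0) :
    ∀ s₀ ∈ Set.Ioo a₁ b₁, ∀ t₀ ∈ Set.Ioo a₂ b₂,
      ∃ c₁ d₁ c₂ d₂ : ℝ,
        s₀ ∈ Set.Ioo c₁ d₁ ∧ Set.Ioo c₁ d₁ ⊆ Set.Ioo a₁ b₁ ∧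
        t₀ ∈ Set.Ioo c₂ d₂ ∧ Set.Ioo c₂ d₂ ⊆ Set.Ioo a₂ b₂ ∧
        ((∃ p q r w : ℝ, ∀ s ∈ Set.Ioo c₁ d₁, f₁ s = p * s + q ∧ f₂ s = r * s + w) ∨
         (∃ p q r w : ℝ, ∀ t ∈ Set.Ioo c₂ d₂, g₁ t = p * t + q ∧ g₂ t = r * t + w) ∨
         (∃ n₁ n₂ n₃ c : ℝ, (n₁, n₂, n₃) ≠ ((0 : ℝ), (0 : ℝ), (0 : ℝ)) ∧
           ∀ s ∈ Set.Ioo c₁ d₁, ∀ t ∈ Set.Ioo c₂ d₂,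
             n₁ * (s + g₁ t) + n₂ * (f₁ s + t) + n₃ * (f₂ s + g₂ t) = c)) := by
  intro s₀ hs₀ t₀ ht₀
  have F1 := stepDiff (hf₁.of_le (by simp))
  have F1' := stepDiff F1.2
  have F2 := stepDiff (hf₂.of_le (by simp))
  have F2' := stepDiff F2.2
  have G1 := stepDiff (hg₁.of_le (by simp))
  have G2 := stepDiff (hg₂.of_le (by simp))
  refine ⟨a₁, b₁, a₂, b₂, hs₀, subset_rfl, ht₀, subset_rfl, ?_⟩
  by_cases hβ : ∀ t ∈ Set.Ioo a₂ b₂, deriv g₁ t = deriv g₁ t₀ ∧ deriv g₂ t = deriv g₂ t₀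
  · right; left
    refine ⟨deriv g₁ t₀, g₁ t₀ - deriv g₁ t₀ * t₀, deriv g₂ t₀, g₂ t₀ - deriv g₂ t₀ * t₀,
      fun t ht => ⟨?_, ?_⟩⟩
    · refine affineOn (fun z hz => ?_) ht₀ t ht
      have := (G1.1 z hz).hasDerivAt
      rwa [(hβ z hz).1] at this
    · refine affineOn (fun z hz => ?_) ht₀ t ht
      have := (G2.1 z hz).hasDerivAt
      rwa [(hβ z hz).2] at this
  · push_neg at hβ
    obtain ⟨t₁, ht₁, hne⟩ := hβ
    have hab : (deriv g₁ t₀ - deriv g₁ t₁) ≠ 0 ∨ (deriv g₂ t₁ - deriv g₂ t₀) ≠ 0 := by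
      by_cases h : deriv g₁ t₁ = deriv g₁ t₀
      · exact Or.inr (sub_ne_zero.2 (hne h))
      · exact Or.inl (sub_ne_zero.2 fun hc => h hc.symm)
    by_cases hdet : ∀ t ∈ Set.Ioo a₂ b₂,
        (deriv g₂ t₀ * deriv g₁ t₁ - deriv g₂ t₁ * deriv g₁ t₀)
          + (deriv g₁ t₀ - deriv g₁ t₁) * deriv g₂ t
          + (deriv g₂ t₁ - deriv g₂ t₀) * deriv g₁ t = 0
    · -- dimension 2 case
      have hR2 : ∀ s ∈ Set.Ioo a₁ b₁,
          (deriv g₁ t₀ - deriv g₁ t₁) * deriv (deriv f₂) s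
            + (deriv g₂ t₀ * deriv g₁ t₁ - deriv g₂ t₁ * deriv g₁ t₀) * deriv (deriv f₁) s = 0 := by
        intro s hs
        have E0 := hl s hs t₀ ht₀
        have E1 := hl s hs t₁ ht₁
        linear_combination (-(deriv g₁ t₁)) * E0 + (deriv g₁ t₀) * E1
      have hφD : ∀ s ∈ Set.Ioo a₁ b₁,
          deriv (deriv f₁) s * ((deriv g₂ t₁ - deriv g₂ t₀)
            + (deriv g₂ t₀ * deriv g₁ t₁ - deriv g₂ t₁ * deriv g₁ t₀) * deriv f₁ s
            + (deriv g₁ t₀ - deriv g₁ t₁) * deriv f₂ s) = 0 := by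
        intro s hs
        have E0 := hl s hs t₀ ht₀
        have E1 := hl s hs t₁ ht₁
        linear_combination (1 - deriv f₁ s * deriv g₁ t₁) * E0
          + (deriv f₁ s * deriv g₁ t₀ - 1) * E1
      have hψD : ∀ s ∈ Set.Ioo a₁ b₁,
          deriv (deriv f₂) s * ((deriv g₂ t₁ - deriv g₂ t₀)
            + (deriv g₂ t₀ * deriv g₁ t₁ - deriv g₂ t₁ * deriv g₁ t₀) * deriv f₁ s
            + (deriv g₁ t₀ - deriv g₁ t₁) * deriv f₂ s) = 0 := by
        intro s hs
        have E0 := hl s hs t₀ ht₀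
        have E1 := hl s hs t₁ ht₁
        linear_combination (deriv g₂ t₁ - deriv f₂ s * deriv g₁ t₁) * E0
          + (deriv f₂ s * deriv g₁ t₀ - deriv g₂ t₀) * E1
      have hDconst : ∀ s ∈ Set.Ioo a₁ b₁,
          (deriv g₂ t₁ - deriv g₂ t₀)
            + (deriv g₂ t₀ * deriv g₁ t₁ - deriv g₂ t₁ * deriv g₁ t₀) * deriv f₁ s
            + (deriv g₁ t₀ - deriv g₁ t₁) * deriv f₂ s
          = (deriv g₂ t₁ - deriv g₂ t₀)
            + (deriv g₂ t₀ * deriv g₁ t₁ - deriv g₂ t₁ * deriv g₁ t₀) * deriv f₁ s₀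
            + (deriv g₁ t₀ - deriv g₁ t₁) * deriv f₂ s₀ := by
        intro s hs
        refine constOn (f := fun x => (deriv g₂ t₁ - deriv g₂ t₀)
            + (deriv g₂ t₀ * deriv g₁ t₁ - deriv g₂ t₁ * deriv g₁ t₀) * deriv f₁ x
            + (deriv g₁ t₀ - deriv g₁ t₁) * deriv f₂ x) (fun z hz => ?_) s hs s₀ hs₀
        have hD := (((((F1'.1 z hz).hasDerivAt.const_mul
            (deriv g₂ t₀ * deriv g₁ t₁ - deriv g₂ t₁ * deriv g₁ t₀)).const_add
            (deriv g₂ t₁ - deriv g₂ t₀)).add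
            ((F2'.1 z hz).hasDerivAt.const_mul (deriv g₁ t₀ - deriv g₁ t₁))))
        have h0 : (deriv g₂ t₀ * deriv g₁ t₁ - deriv g₂ t₁ * deriv g₁ t₀) * deriv (deriv f₁) z
            + (deriv g₁ t₀ - deriv g₁ t₁) * deriv (deriv f₂) z = 0 := by
          linarith [hR2 z hz]
        rw [h0] at hD
        exact hD
      by_cases hD0 : (deriv g₂ t₁ - deriv g₂ t₀)
          + (deriv g₂ t₀ * deriv g₁ t₁ - deriv g₂ t₁ * deriv g₁ t₀) * deriv f₁ s₀
          + (deriv g₁ t₀ - deriv g₁ t₁) * deriv f₂ s₀ = 0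
      · -- planar
        right; right
        refine ⟨deriv g₂ t₁ - deriv g₂ t₀,
          deriv g₂ t₀ * deriv g₁ t₁ - deriv g₂ t₁ * deriv g₁ t₀,
          deriv g₁ t₀ - deriv g₁ t₁,
          (deriv g₂ t₁ - deriv g₂ t₀) * (s₀ + g₁ t₀)
            + (deriv g₂ t₀ * deriv g₁ t₁ - deriv g₂ t₁ * deriv g₁ t₀) * (f₁ s₀ + t₀)
            + (deriv g₁ t₀ - deriv g₁ t₁) * (f₂ s₀ + g₂ t₀), ?_, ?_⟩
        · intro hc
          rw [Prod.mk.injEq, Prod.mk.injEq] at hc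
          rcases hab with h | h
          · exact h hc.2.2
          · exact h hc.1
        · intro s hs t ht
          have hs1 : ∀ x ∈ Set.Ioo a₁ b₁,
              (deriv g₂ t₁ - deriv g₂ t₀) * (x + g₁ t)
                + (deriv g₂ t₀ * deriv g₁ t₁ - deriv g₂ t₁ * deriv g₁ t₀) * (f₁ x + t)
                + (deriv g₁ t₀ - deriv g₁ t₁) * (f₂ x + g₂ t)
              = (deriv g₂ t₁ - deriv g₂ t₀) * (s₀ + g₁ t)
                + (deriv g₂ t₀ * deriv g₁ t₁ - deriv g₂ t₁ * deriv g₁ t₀) * (f₁ s₀ + t)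
                + (deriv g₁ t₀ - deriv g₁ t₁) * (f₂ s₀ + g₂ t) := by
            intro x hx
            refine constOn (f := fun x => (deriv g₂ t₁ - deriv g₂ t₀) * (x + g₁ t)
                + (deriv g₂ t₀ * deriv g₁ t₁ - deriv g₂ t₁ * deriv g₁ t₀) * (f₁ x + t)
                + (deriv g₁ t₀ - deriv g₁ t₁) * (f₂ x + g₂ t)) (fun z hz => ?_) x hx s₀ hs₀
            have hd := ((((hasDerivAt_id z).add_const (g₁ t)).const_mul
                (deriv g₂ t₁ - deriv g₂ t₀)).add
                (((F1.1 z hz).hasDerivAt.add_const t).const_mul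
                  (deriv g₂ t₀ * deriv g₁ t₁ - deriv g₂ t₁ * deriv g₁ t₀))).add
                (((F2.1 z hz).hasDerivAt.add_const (g₂ t)).const_mul
                  (deriv g₁ t₀ - deriv g₁ t₁))
            have h0 : (deriv g₂ t₁ - deriv g₂ t₀) * 1
                + (deriv g₂ t₀ * deriv g₁ t₁ - deriv g₂ t₁ * deriv g₁ t₀) * deriv f₁ z
                + (deriv g₁ t₀ - deriv g₁ t₁) * deriv f₂ z = 0 := by
              have := hDconst z hz
              linarith
            rw [h0] at hd
            exact hd
          have hs2 : ∀ y ∈ Set.Ioo a₂ b₂,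
              (deriv g₂ t₁ - deriv g₂ t₀) * (s₀ + g₁ y)
                + (deriv g₂ t₀ * deriv g₁ t₁ - deriv g₂ t₁ * deriv g₁ t₀) * (f₁ s₀ + y)
                + (deriv g₁ t₀ - deriv g₁ t₁) * (f₂ s₀ + g₂ y)
              = (deriv g₂ t₁ - deriv g₂ t₀) * (s₀ + g₁ t₀)
                + (deriv g₂ t₀ * deriv g₁ t₁ - deriv g₂ t₁ * deriv g₁ t₀) * (f₁ s₀ + t₀)
                + (deriv g₁ t₀ - deriv g₁ t₁) * (f₂ s₀ + g₂ t₀) := by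
            intro y hy
            refine constOn (f := fun y => (deriv g₂ t₁ - deriv g₂ t₀) * (s₀ + g₁ y)
                + (deriv g₂ t₀ * deriv g₁ t₁ - deriv g₂ t₁ * deriv g₁ t₀) * (f₁ s₀ + y)
                + (deriv g₁ t₀ - deriv g₁ t₁) * (f₂ s₀ + g₂ y)) (fun z hz => ?_) y hy t₀ ht₀
            have hd := (((((G1.1 z hz).hasDerivAt.const_add s₀).const_mul
                (deriv g₂ t₁ - deriv g₂ t₀)).add
                (((hasDerivAt_id z).const_add (f₁ s₀)).const_mul
                  (deriv g₂ t₀ * deriv g₁ t₁ - deriv g₂ t₁ * deriv g₁ t₀))).add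
                (((G2.1 z hz).hasDerivAt.const_add (f₂ s₀)).const_mul
                  (deriv g₁ t₀ - deriv g₁ t₁)))
            have h0 : (deriv g₂ t₁ - deriv g₂ t₀) * deriv g₁ z
                + (deriv g₂ t₀ * deriv g₁ t₁ - deriv g₂ t₁ * deriv g₁ t₀) * 1
                + (deriv g₁ t₀ - deriv g₁ t₁) * deriv g₂ z = 0 := by
              have := hdet z hz
              linarith
            rw [h0] at hd
            exact hd
          rw [hs1 s hs, hs2 t ht]
      · -- D nonzero: α is a line
        left
        have hz1 : ∀ s ∈ Set.Ioo a₁ b₁, deriv (deriv f₁) s = 0 := by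
          intro s hs
          have h := hφD s hs
          rw [hDconst s hs] at h
          exact (mul_eq_zero.1 h).resolve_right hD0
        have hz2 : ∀ s ∈ Set.Ioo a₁ b₁, deriv (deriv f₂) s = 0 := by
          intro s hs
          have h := hψD s hs
          rw [hDconst s hs] at h
          exact (mul_eq_zero.1 h).resolve_right hD0
        obtain ⟨p, q, hpq⟩ := affine2 (hf₁.of_le (by simp)) hz1 hs₀
        obtain ⟨r, w, hrw⟩ := affine2 (hf₂.of_le (by simp)) hz2 hs₀
        exact ⟨p, q, r, w, fun s hs => ⟨hpq s hs, hrw s hs⟩⟩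
    · -- dimension 3 case: α is a line
      push_neg at hdet
      obtain ⟨t₂, ht₂, hΔ⟩ := hdet
      left
      have hz1 : ∀ s ∈ Set.Ioo a₁ b₁, deriv (deriv f₁) s = 0 := by
        intro s hs
        have E0 := hl s hs t₀ ht₀
        have E1 := hl s hs t₁ ht₁
        have E2 := hl s hs t₂ ht₂
        have key : deriv (deriv f₁) s
            * ((deriv g₂ t₀ * deriv g₁ t₁ - deriv g₂ t₁ * deriv g₁ t₀)
              + (deriv g₁ t₀ - deriv g₁ t₁) * deriv g₂ t₂
              + (deriv g₂ t₁ - deriv g₂ t₀) * deriv g₁ t₂) = 0 := by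
          linear_combination (deriv g₁ t₂ - deriv g₁ t₁) * E0
            + (deriv g₁ t₀ - deriv g₁ t₂) * E1 + (deriv g₁ t₁ - deriv g₁ t₀) * E2
        exact (mul_eq_zero.1 key).resolve_right hΔ
      have hz2 : ∀ s ∈ Set.Ioo a₁ b₁, deriv (deriv f₂) s = 0 := by
        intro s hs
        have E0 := hl s hs t₀ ht₀
        have E1 := hl s hs t₁ ht₁
        have E2 := hl s hs t₂ ht₂
        have key : deriv (deriv f₂) s
            * ((deriv g₂ t₀ * deriv g₁ t₁ - deriv g₂ t₁ * deriv g₁ t₀)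
              + (deriv g₁ t₀ - deriv g₁ t₁) * deriv g₂ t₂
              + (deriv g₂ t₁ - deriv g₂ t₀) * deriv g₁ t₂) = 0 := by
          linear_combination (deriv g₂ t₁ * deriv g₁ t₂ - deriv g₁ t₁ * deriv g₂ t₂) * E0
            + (deriv g₁ t₀ * deriv g₂ t₂ - deriv g₂ t₀ * deriv g₁ t₂) * E1
            + (deriv g₂ t₀ * deriv g₁ t₁ - deriv g₁ t₀ * deriv g₂ t₁) * E2
        exact (mul_eq_zero.1 key).resolve_right hΔ
      obtain ⟨p, q, hpq⟩ := affine2 (hf₁.of_le (by simp)) hz1 hs₀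
      obtain ⟨r, w, hrw⟩ := affine2 (hf₂.of_le (by simp)) hz2 hs₀
      exact ⟨p, q, r, w, fun s hs => ⟨hpq s hs, hrw s hs⟩⟩
end

section
/- Let f1, f2 : I → ℝ and g1, g2 : J → ℝ be smooth functions on open intervals such that f1'' and g1'' vanish nowhere, and suppose that for all (s,t) ∈ I × J one has f2''(s) − f1''(s)·g2'(t) + g1'(t)·(f1''(s)·f2'(s) − f1'(s)·f2''(s)) = 0. Then there exists a constant a ∈ ℝ such that g2''(t) = a·g1''(t) for all t ∈ J; consequently g1'''(t)·g2''(t) − g1''(t)·g2'''(t) = 0 for all t ∈ J, i.e. the curve β(t) = (g1(t), t, g2(t)) has identically zero torsion and is a planar curve. -/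
/-- If `f₁''` and `g₁''` vanish nowhere and the coefficient `l` of the second
fundamental form of the translation surface vanishes identically, then `g₂'' = a · g₁''` for
some constant `a`; consequently `g₁''' g₂'' - g₁'' g₂''' = 0`, i.e. the curve
`β(t) = (g₁ t, t, g₂ t)` has zero torsion and is planar. -/
theorem translation_flat_second_curve_planar
    (a₁ b₁ a₂ b₂ : ℝ) (h₁ : a₁ < b₁) (h₂ : a₂ < b₂)
    (f₁ f₂ g₁ g₂ : ℝ → ℝ)
    (hf₁ : ContDiffOn ℝ (⊤ : ℕ∞) f₁ (Set.Ioo a₁ b₁))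
    (hf₂ : ContDiffOn ℝ (⊤ : ℕ∞) f₂ (Set.Ioo a₁ b₁))
    (hg₁ : ContDiffOn ℝ (⊤ : ℕ∞) g₁ (Set.Ioo a₂ b₂))
    (hg₂ : ContDiffOn ℝ (⊤ : ℕ∞) g₂ (Set.Ioo a₂ b₂))
    (hf₁'' : ∀ s ∈ Set.Ioo a₁ b₁, deriv (deriv f₁) s ≠ 0)
    (hg₁'' : ∀ t ∈ Set.Ioo a₂ b₂, deriv (deriv g₁) t ≠ 0)
    (hl : ∀ s ∈ Set.Ioo a₁ b₁, ∀ t ∈ Set.Ioo a₂ b₂,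
      deriv (deriv f₂) s - deriv (deriv f₁) s * deriv g₂ t
        + deriv g₁ t * (deriv (deriv f₁) s * deriv f₂ s - deriv f₁ s * deriv (deriv f₂) s) = 0) :
    ∃ a : ℝ,
      (∀ t ∈ Set.Ioo a₂ b₂, deriv (deriv g₂) t = a * deriv (deriv g₁) t) ∧
      (∀ t ∈ Set.Ioo a₂ b₂,
        deriv (deriv (deriv g₁)) t * deriv (deriv g₂) t
          - deriv (deriv g₁) t * deriv (deriv (deriv g₂)) t = 0) := by
  have hopen : IsOpen (Set.Ioo a₂ b₂) := isOpen_Ioo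
  -- smoothness of the derivatives of g₁
  have hg₁' : ContDiffOn ℝ (⊤ : ℕ∞) (deriv g₁) (Set.Ioo a₂ b₂) :=
    hg₁.deriv_of_isOpen hopen (by simp)
  have hg₁'2 : ContDiffOn ℝ (⊤ : ℕ∞) (deriv (deriv g₁)) (Set.Ioo a₂ b₂) :=
    hg₁'.deriv_of_isOpen hopen (by simp)
  -- pick a base point s₀
  set s₀ : ℝ := (a₁ + b₁) / 2 with hs₀def
  have hs₀ : s₀ ∈ Set.Ioo a₁ b₁ := ⟨by simp [hs₀def]; linarith, by simp [hs₀def]; linarith⟩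
  have hF : deriv (deriv f₁) s₀ ≠ 0 := hf₁'' s₀ hs₀
  set c : ℝ := deriv (deriv f₂) s₀ / deriv (deriv f₁) s₀ with hc
  set a : ℝ := deriv f₂ s₀ - deriv f₁ s₀ * c with ha
  -- first-order relation on J
  have key : ∀ t ∈ Set.Ioo a₂ b₂, deriv g₂ t = c + a * deriv g₁ t := by
    intro t ht
    have h := hl s₀ hs₀ t ht
    rw [ha, hc]
    field_simp
    nlinarith [h]
  -- second-order relation
  have key2 : ∀ t ∈ Set.Ioo a₂ b₂, deriv (deriv g₂) t = a * deriv (deriv g₁) t := by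
    intro t ht
    have heq : deriv g₂ =ᶠ[nhds t] fun u => c + a * deriv g₁ u :=
      Filter.eventuallyEq_of_mem (hopen.mem_nhds ht) (fun u hu => key u hu)
    have hdiff : DifferentiableAt ℝ (deriv g₁) t :=
      (hg₁'.contDiffAt (hopen.mem_nhds ht)).differentiableAt (by simp)
    rw [heq.deriv_eq, deriv_const_add, deriv_const_mul _ hdiff]
  refine ⟨a, key2, fun t ht => ?_⟩
  -- third-order relation
  have heq : deriv (deriv g₂) =ᶠ[nhds t] fun u => a * deriv (deriv g₁) u :=
    Filter.eventuallyEq_of_mem (hopen.mem_nhds ht) (fun u hu => key2 u hu)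
  have hdiff : DifferentiableAt ℝ (deriv (deriv g₁)) t :=
    (hg₁'2.contDiffAt (hopen.mem_nhds ht)).differentiableAt (by simp)
  rw [heq.deriv_eq, deriv_const_mul _ hdiff, key2 t ht]
  ring
end

section
/- Let K ∈ ℝ with K ≠ 0, and let θ ∈ ℝ with cos θ ≠ 0 and sin θ ≠ 0. Then there do not exist smooth functions f : I → ℝ and g : J → ℝ on open intervals such that for all (s,t) ∈ I × J: cos²θ · f''(s) · g''(t) = K · ( f'(s)² + g'(t)² + cos²θ − 2 sin θ · f'(s) · g'(t) )². In other words, there is no translation surface with nonzero constant Gauss curvature whose two generating curves lie in the xz-plane and in the plane x cos θ − y sin θ = 0, respectively. -/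
open Polynomial in
private lemma aux_poly_zero (A B σ v₁ v₂ c : ℝ) (hA : A ≠ 0) (hσ : σ ≠ 0)
    (S : Set ℝ) (hS : S.Infinite)
    (H : ∀ u ∈ S, A * (u ^ 2 + v₂ ^ 2 + c ^ 2 - 2 * σ * u * v₂) ^ 2
        = B * (u ^ 2 + v₁ ^ 2 + c ^ 2 - 2 * σ * u * v₁) ^ 2) :
    v₁ = v₂ := by
  set p : ℝ[X] := C (A - B) * X ^ 4 + C (4 * σ * (B * v₁ - A * v₂)) * X ^ 3
      + C (A * (4 * σ ^ 2 * v₂ ^ 2 + 2 * (v₂ ^ 2 + c ^ 2))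
            - B * (4 * σ ^ 2 * v₁ ^ 2 + 2 * (v₁ ^ 2 + c ^ 2))) * X ^ 2
      + C (4 * σ * (B * v₁ * (v₁ ^ 2 + c ^ 2) - A * v₂ * (v₂ ^ 2 + c ^ 2))) * X
      + C (A * (v₂ ^ 2 + c ^ 2) ^ 2 - B * (v₁ ^ 2 + c ^ 2) ^ 2) with hp
  have hroot : ∀ u ∈ S, p.IsRoot u := by
    intro u hu
    have h := H u hu
    simp only [hp, IsRoot, eval_add, eval_mul, eval_pow, eval_C, eval_X]
    linear_combination h
  have hp0 : p = 0 := p.eq_zero_of_infinite_isRoot (hS.mono hroot)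
  have h4 : p.coeff 4 = 0 := by rw [hp0]; simp
  have h3 : p.coeff 3 = 0 := by rw [hp0]; simp
  rw [hp] at h4 h3
  simp only [coeff_add, coeff_C_mul, coeff_X_pow, coeff_X, coeff_C] at h4 h3
  norm_num at h4 h3
  -- h4 : A - B = 0, h3 : 4 * σ * (B * v₁ - A * v₂) = 0
  have hB : B = A := by linarith
  rw [hB] at h3
  rcases h3 with h | h
  · exact absurd h hσ
  · have hA2 : A * (v₁ - v₂) = 0 := by linear_combination h
    rcases mul_eq_zero.1 hA2 with h' | h'
    · exact absurd h' hA
    · linarith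

private lemma aux_nonconst {a b : ℝ} (hab : a < b) {h : ℝ → ℝ}
    (hdd : ∀ t ∈ Set.Ioo a b, deriv (deriv h) t ≠ 0) :
    ∃ t₁ ∈ Set.Ioo a b, ∃ t₂ ∈ Set.Ioo a b, deriv h t₁ ≠ deriv h t₂ := by
  by_contra hcon
  push_neg at hcon
  have ht₀ : (a + b) / 2 ∈ Set.Ioo a b := ⟨by linarith, by linarith⟩
  have heq : deriv h =ᶠ[nhds ((a + b) / 2)] fun _ => deriv h ((a + b) / 2) :=
    Filter.eventuallyEq_of_mem (isOpen_Ioo.mem_nhds ht₀) (fun t ht => hcon t ht _ ht₀)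
  have hd := heq.deriv_eq
  rw [deriv_const] at hd
  exact hdd _ ht₀ hd

/-- There is no translation surface with nonzero constant Gauss curvature
whose generating curves lie in the xz-plane and in the plane `x cos θ − y sin θ = 0`
(with these planes non-orthogonal and non-parallel). -/
theorem no_translation_CGC_two_planar_curves
    (K θ : ℝ) (hK : K ≠ 0) (hcos : Real.cos θ ≠ 0) (hsin : Real.sin θ ≠ 0) :
    ¬ ∃ (a₁ b₁ a₂ b₂ : ℝ) (f g : ℝ → ℝ),
        a₁ < b₁ ∧ a₂ < b₂ ∧
        ContDiffOn ℝ (⊤ : ℕ∞) f (Set.Ioo a₁ b₁) ∧ ContDiffOn ℝ (⊤ : ℕ∞) g (Set.Ioo a₂ b₂) ∧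
        ∀ s ∈ Set.Ioo a₁ b₁, ∀ t ∈ Set.Ioo a₂ b₂,
          Real.cos θ ^ 2 * deriv (deriv f) s * deriv (deriv g) t =
            K * (deriv f s ^ 2 + deriv g t ^ 2 + Real.cos θ ^ 2
              - 2 * Real.sin θ * deriv f s * deriv g t) ^ 2 := by
  rintro ⟨a₁, b₁, a₂, b₂, f, g, hab₁, hab₂, hf, hg, heq⟩
  have hc2 : (0:ℝ) < Real.cos θ ^ 2 := by positivity
  -- Q is positive everywhere
  have hQpos : ∀ u v : ℝ,
      0 < u ^ 2 + v ^ 2 + Real.cos θ ^ 2 - 2 * Real.sin θ * u * v := by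
    intro u v
    nlinarith [sq_nonneg (u - Real.sin θ * v), sq_nonneg v, Real.sin_sq_add_cos_sq θ,
      mul_nonneg hc2.le (sq_nonneg v)]
  -- second derivatives never vanish
  have hff : ∀ s ∈ Set.Ioo a₁ b₁, ∀ t ∈ Set.Ioo a₂ b₂,
      deriv (deriv f) s ≠ 0 ∧ deriv (deriv g) t ≠ 0 := by
    intro s hs t ht
    have h := heq s hs t ht
    have hQ := hQpos (deriv f s) (deriv g t)
    have hR : K * (deriv f s ^ 2 + deriv g t ^ 2 + Real.cos θ ^ 2
        - 2 * Real.sin θ * deriv f s * deriv g t) ^ 2 ≠ 0 :=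
      mul_ne_zero hK (pow_ne_zero 2 hQ.ne')
    rw [← h] at hR
    constructor
    · intro h0; rw [h0] at hR; simp at hR
    · intro h0; rw [h0] at hR; simp at hR
  have hs₀ : (a₁ + b₁) / 2 ∈ Set.Ioo a₁ b₁ := ⟨by linarith, by linarith⟩
  have ht₀ : (a₂ + b₂) / 2 ∈ Set.Ioo a₂ b₂ := ⟨by linarith, by linarith⟩
  -- g' takes two distinct values
  obtain ⟨t₁, ht₁, t₂, ht₂, hgne⟩ :=
    aux_nonconst hab₂ (fun t ht => (hff _ hs₀ t ht).2)
  -- f' takes two distinct values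
  obtain ⟨s₁, hs₁, s₂, hs₂, hfne⟩ :=
    aux_nonconst hab₁ (fun s hs => (hff s hs _ ht₀).1)
  -- range of f' on the interval is infinite
  have hfc : ContinuousOn (deriv f) (Set.Ioo a₁ b₁) := by
    have : ContDiffOn ℝ (⊤ : ℕ∞) (deriv f) (Set.Ioo a₁ b₁) :=
      hf.deriv_of_isOpen isOpen_Ioo (by simp)
    exact this.continuousOn
  set S : Set ℝ := deriv f '' Set.Ioo a₁ b₁ with hSdef
  have hSconn : IsPreconnected S := isPreconnected_Ioo.image _ hfc
  have hu₁ : deriv f s₁ ∈ S := ⟨s₁, hs₁, rfl⟩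
  have hu₂ : deriv f s₂ ∈ S := ⟨s₂, hs₂, rfl⟩
  have hSinf : S.Infinite := by
    rcases lt_or_gt_of_ne hfne with h | h
    · exact (Set.Icc_infinite h).mono (hSconn.Icc_subset hu₁ hu₂)
    · exact (Set.Icc_infinite h).mono (hSconn.Icc_subset hu₂ hu₁)
  -- the key identity on S
  have hkey : ∀ u ∈ S, deriv (deriv g) t₁ *
      (u ^ 2 + (deriv g t₂) ^ 2 + Real.cos θ ^ 2 - 2 * Real.sin θ * u * deriv g t₂) ^ 2
      = deriv (deriv g) t₂ *
      (u ^ 2 + (deriv g t₁) ^ 2 + Real.cos θ ^ 2 - 2 * Real.sin θ * u * deriv g t₁) ^ 2 := by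
    rintro u ⟨s, hs, rfl⟩
    have h1 := heq s hs t₁ ht₁
    have h2 := heq s hs t₂ ht₂
    have hKA : K * (deriv (deriv g) t₁ *
        (deriv f s ^ 2 + (deriv g t₂) ^ 2 + Real.cos θ ^ 2
          - 2 * Real.sin θ * deriv f s * deriv g t₂) ^ 2)
        = K * (deriv (deriv g) t₂ *
        (deriv f s ^ 2 + (deriv g t₁) ^ 2 + Real.cos θ ^ 2
          - 2 * Real.sin θ * deriv f s * deriv g t₁) ^ 2) := by
      linear_combination deriv (deriv g) t₂ * h1 - deriv (deriv g) t₁ * h2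
    exact mul_left_cancel₀ hK hKA
  have := aux_poly_zero (deriv (deriv g) t₁) (deriv (deriv g) t₂) (Real.sin θ)
    (deriv g t₁) (deriv g t₂) (Real.cos θ) (hff _ hs₀ _ ht₁).2 hsin S hSinf hkey
  exact hgne this
end

section
/- Let K ∈ ℝ with K ≠ 0. Then there do not exist smooth functions f : I → ℝ and g1, g2 : J → ℝ on open intervals such that both of the following hold: (i) for all (s,t) ∈ I × J, f''(s)·( g2''(t) − f'(s)·g1''(t) ) = K · ( 1 + g2'(t)² + f'(s)² + f'(s)²·g1'(t)² − 2 f'(s)·g1'(t)·g2'(t) )², and (ii) there exists t0 ∈ J with g1'''(t0)·g2''(t0) − g1''(t0)·g2'''(t0) ≠ 0 (i.e. the curve β(t) = (g1(t), t, g2(t)) is not a planar curve). In other words, there is no translation surface with nonzero constant Gauss curvature one of whose generating curves is planar and the other non-planar. -/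
lemma cubic_zero_of_four_roots (e3 e2 e1 e0 u1 u2 u3 u4 : ℝ)
    (h12 : u1 ≠ u2) (h13 : u1 ≠ u3) (h14 : u1 ≠ u4) (h23 : u2 ≠ u3) (h24 : u2 ≠ u4) (h34 : u3 ≠ u4)
    (h1 : e3*u1^3 + e2*u1^2 + e1*u1 + e0 = 0)
    (h2 : e3*u2^3 + e2*u2^2 + e1*u2 + e0 = 0)
    (h3 : e3*u3^3 + e2*u3^2 + e1*u3 + e0 = 0)
    (h4 : e3*u4^3 + e2*u4^2 + e1*u4 + e0 = 0) :
    ∀ u : ℝ, e3*u^3 + e2*u^2 + e1*u + e0 = 0 := by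
  have d12 := sub_ne_zero.mpr h12
  have d23 := sub_ne_zero.mpr h23
  have d34 := sub_ne_zero.mpr h34
  have d13 := sub_ne_zero.mpr h13
  have d24 := sub_ne_zero.mpr h24
  have d14 := sub_ne_zero.mpr h14
  have g12 : e3*(u1^2+u1*u2+u2^2) + e2*(u1+u2) + e1 = 0 := by
    have : (u1 - u2) * (e3*(u1^2+u1*u2+u2^2) + e2*(u1+u2) + e1) = 0 := by
      linear_combination h1 - h2
    exact (mul_eq_zero.1 this).resolve_left d12
  have g23 : e3*(u2^2+u2*u3+u3^2) + e2*(u2+u3) + e1 = 0 := by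
    have : (u2 - u3) * (e3*(u2^2+u2*u3+u3^2) + e2*(u2+u3) + e1) = 0 := by
      linear_combination h2 - h3
    exact (mul_eq_zero.1 this).resolve_left d23
  have g34 : e3*(u3^2+u3*u4+u4^2) + e2*(u3+u4) + e1 = 0 := by
    have : (u3 - u4) * (e3*(u3^2+u3*u4+u4^2) + e2*(u3+u4) + e1) = 0 := by
      linear_combination h3 - h4
    exact (mul_eq_zero.1 this).resolve_left d34
  have k1 : e3*(u1+u2+u3) + e2 = 0 := by
    have : (u1 - u3) * (e3*(u1+u2+u3) + e2) = 0 := by linear_combination g12 - g23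
    exact (mul_eq_zero.1 this).resolve_left d13
  have k2 : e3*(u2+u3+u4) + e2 = 0 := by
    have : (u2 - u4) * (e3*(u2+u3+u4) + e2) = 0 := by linear_combination g23 - g34
    exact (mul_eq_zero.1 this).resolve_left d24
  have he3 : e3 = 0 := by
    have : (u1 - u4) * e3 = 0 := by linear_combination k1 - k2
    exact (mul_eq_zero.1 this).resolve_left d14
  have he2 : e2 = 0 := by linear_combination k1 - (u1+u2+u3) * he3
  have he1 : e1 = 0 := by linear_combination g12 - (u1^2+u1*u2+u2^2)*he3 - (u1+u2)*he2
  have he0 : e0 = 0 := by linear_combination h1 - u1^3*he3 - u1^2*he2 - u1*he1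
  intro u
  rw [he3, he2, he1, he0]; ring

/-- There is no translation surface with nonzero constant Gauss curvature one
of whose generating curves (`α(s) = (s, 0, f s)`) is planar and the other
(`β(t) = (g₁ t, t, g₂ t)`) is non-planar. -/
theorem no_translation_CGC_one_planar_one_nonplanar
    (K : ℝ) (hK : K ≠ 0) :
    ¬ ∃ (a₁ b₁ a₂ b₂ : ℝ) (f g₁ g₂ : ℝ → ℝ),
        a₁ < b₁ ∧ a₂ < b₂ ∧
        ContDiffOn ℝ (⊤ : ℕ∞) f (Set.Ioo a₁ b₁) ∧
        ContDiffOn ℝ (⊤ : ℕ∞) g₁ (Set.Ioo a₂ b₂) ∧ ContDiffOn ℝ (⊤ : ℕ∞) g₂ (Set.Ioo a₂ b₂) ∧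
        (∀ s ∈ Set.Ioo a₁ b₁, ∀ t ∈ Set.Ioo a₂ b₂,
          deriv (deriv f) s * (deriv (deriv g₂) t - deriv f s * deriv (deriv g₁) t) =
            K * (1 + deriv g₂ t ^ 2 + deriv f s ^ 2 + deriv f s ^ 2 * deriv g₁ t ^ 2
              - 2 * deriv f s * deriv g₁ t * deriv g₂ t) ^ 2) ∧
        (∃ t₀ ∈ Set.Ioo a₂ b₂,
          deriv (deriv (deriv g₁)) t₀ * deriv (deriv g₂) t₀
            - deriv (deriv g₁) t₀ * deriv (deriv (deriv g₂)) t₀ ≠ 0) := by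
  rintro ⟨a₁, b₁, a₂, b₂, f, g₁, g₂, hab₁, hab₂, hf, hg₁, hg₂, heq, t₀, ht₀, htor⟩
  have hg₁' : ContDiffOn ℝ (⊤ : ℕ∞) (deriv g₁) (Set.Ioo a₂ b₂) := hg₁.deriv_of_isOpen isOpen_Ioo (by simp)
  have hg₂' : ContDiffOn ℝ (⊤ : ℕ∞) (deriv g₂) (Set.Ioo a₂ b₂) := hg₂.deriv_of_isOpen isOpen_Ioo (by simp)
  have hg₁'' : ContDiffOn ℝ (⊤ : ℕ∞) (deriv (deriv g₁)) (Set.Ioo a₂ b₂) :=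
    hg₁'.deriv_of_isOpen isOpen_Ioo (by simp)
  have hg₂'' : ContDiffOn ℝ (⊤ : ℕ∞) (deriv (deriv g₂)) (Set.Ioo a₂ b₂) :=
    hg₂'.deriv_of_isOpen isOpen_Ioo (by simp)
  have hD1 : HasDerivAt (deriv g₁) (deriv (deriv g₁) t₀) t₀ :=
    ((hg₁'.differentiableOn (by simp)).differentiableAt (isOpen_Ioo.mem_nhds ht₀)).hasDerivAt
  have hD2 : HasDerivAt (deriv g₂) (deriv (deriv g₂) t₀) t₀ :=
    ((hg₂'.differentiableOn (by simp)).differentiableAt (isOpen_Ioo.mem_nhds ht₀)).hasDerivAt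
  have hDD1 : HasDerivAt (deriv (deriv g₁)) (deriv (deriv (deriv g₁)) t₀) t₀ :=
    ((hg₁''.differentiableOn (by simp)).differentiableAt (isOpen_Ioo.mem_nhds ht₀)).hasDerivAt
  have hDD2 : HasDerivAt (deriv (deriv g₂)) (deriv (deriv (deriv g₂)) t₀) t₀ :=
    ((hg₂''.differentiableOn (by simp)).differentiableAt (isOpen_Ioo.mem_nhds ht₀)).hasDerivAt
  have key1 : ∀ s ∈ Set.Ioo a₁ b₁,
      deriv (deriv f) s * (deriv (deriv g₂) t₀ - deriv f s * deriv (deriv g₁) t₀) =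
        K * (1 + deriv g₂ t₀ ^ 2 + deriv f s ^ 2 + deriv f s ^ 2 * deriv g₁ t₀ ^ 2
          - 2 * deriv f s * deriv g₁ t₀ * deriv g₂ t₀) ^ 2 :=
    fun s hs => heq s hs t₀ ht₀
  have key2 : ∀ s ∈ Set.Ioo a₁ b₁,
      deriv (deriv f) s * (deriv (deriv (deriv g₂)) t₀ - deriv f s * deriv (deriv (deriv g₁)) t₀) =
        K * (2 * (1 + deriv g₂ t₀ ^ 2 + deriv f s ^ 2 + deriv f s ^ 2 * deriv g₁ t₀ ^ 2
            - 2 * deriv f s * deriv g₁ t₀ * deriv g₂ t₀) *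
          (2 * deriv g₂ t₀ * deriv (deriv g₂) t₀
            + deriv f s ^ 2 * (2 * deriv g₁ t₀ * deriv (deriv g₁) t₀)
            - 2 * deriv f s * (deriv (deriv g₁) t₀ * deriv g₂ t₀
                + deriv g₁ t₀ * deriv (deriv g₂) t₀))) := by
    intro s hs
    have hw : HasDerivAt
        (fun t => 1 + deriv g₂ t ^ 2 + deriv f s ^ 2 + deriv f s ^ 2 * deriv g₁ t ^ 2
            - 2 * deriv f s * deriv g₁ t * deriv g₂ t)
        (2 * deriv g₂ t₀ * deriv (deriv g₂) t₀
          + deriv f s ^ 2 * (2 * deriv g₁ t₀ * deriv (deriv g₁) t₀)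
          - 2 * deriv f s * (deriv (deriv g₁) t₀ * deriv g₂ t₀
              + deriv g₁ t₀ * deriv (deriv g₂) t₀)) t₀ := by
      have h1 := ((((hasDerivAt_const t₀ (1:ℝ)).add (hD2.pow 2)).add
          (hasDerivAt_const t₀ (deriv f s ^ 2))).add
          ((hD1.pow 2).const_mul (deriv f s ^ 2))).sub
          ((hD1.const_mul (2 * deriv f s)).mul hD2)
      exact h1.congr_deriv (by push_cast; ring)
    have hL : HasDerivAt
        (fun t => deriv (deriv f) s * (deriv (deriv g₂) t - deriv f s * deriv (deriv g₁) t))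
        (deriv (deriv f) s *
          (deriv (deriv (deriv g₂)) t₀ - deriv f s * deriv (deriv (deriv g₁)) t₀)) t₀ :=
      (hDD2.sub (hDD1.const_mul (deriv f s))).const_mul (deriv (deriv f) s)
    have hR : HasDerivAt
        (fun t => K * (1 + deriv g₂ t ^ 2 + deriv f s ^ 2 + deriv f s ^ 2 * deriv g₁ t ^ 2
            - 2 * deriv f s * deriv g₁ t * deriv g₂ t) ^ 2)
        (K * (2 * (1 + deriv g₂ t₀ ^ 2 + deriv f s ^ 2 + deriv f s ^ 2 * deriv g₁ t₀ ^ 2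
            - 2 * deriv f s * deriv g₁ t₀ * deriv g₂ t₀) *
          (2 * deriv g₂ t₀ * deriv (deriv g₂) t₀
            + deriv f s ^ 2 * (2 * deriv g₁ t₀ * deriv (deriv g₁) t₀)
            - 2 * deriv f s * (deriv (deriv g₁) t₀ * deriv g₂ t₀
                + deriv g₁ t₀ * deriv (deriv g₂) t₀)))) t₀ := by
      have h2 := (hw.pow 2).const_mul K
      exact h2.congr_deriv (by push_cast; ring)
    have hEV : (fun t => deriv (deriv f) s *
          (deriv (deriv g₂) t - deriv f s * deriv (deriv g₁) t)) =ᶠ[nhds t₀]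
        (fun t => K * (1 + deriv g₂ t ^ 2 + deriv f s ^ 2 + deriv f s ^ 2 * deriv g₁ t ^ 2
            - 2 * deriv f s * deriv g₁ t * deriv g₂ t) ^ 2) := by
      filter_upwards [isOpen_Ioo.mem_nhds ht₀] with t ht
      exact heq s hs t ht
    exact hL.deriv.symm.trans (hEV.deriv_eq.trans hR.deriv)
  clear heq hD1 hD2 hDD1 hDD2 hg₁' hg₂' hg₁'' hg₂'' hg₁ hg₂
  generalize hp : deriv (deriv (deriv g₁)) t₀ = p at key2 htor
  generalize hq : deriv (deriv (deriv g₂)) t₀ = q at key2 htor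
  generalize hc : deriv (deriv g₁) t₀ = c at key1 key2 htor
  generalize hd : deriv (deriv g₂) t₀ = d at key1 key2 htor
  generalize ha : deriv g₁ t₀ = a at key1 key2
  generalize hb : deriv g₂ t₀ = b at key1 key2
  -- positivity of Q
  have hQpos : ∀ u : ℝ, 0 < 1 + b ^ 2 + u ^ 2 + u ^ 2 * a ^ 2 - 2 * u * a * b := by
    intro u
    nlinarith [sq_nonneg (b - u * a), sq_nonneg u]
  -- f'' never vanishes on the interval
  have hA : ∀ s ∈ Set.Ioo a₁ b₁, deriv (deriv f) s ≠ 0 := by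
    intro s hs h0
    have h := key1 s hs
    rw [h0, zero_mul] at h
    have hne : K * (1 + b ^ 2 + deriv f s ^ 2 + deriv f s ^ 2 * a ^ 2
        - 2 * deriv f s * a * b) ^ 2 ≠ 0 :=
      mul_ne_zero hK (pow_ne_zero 2 (ne_of_gt (hQpos (deriv f s))))
    exact hne h.symm
  -- injectivity of f' on the interval (Rolle)
  have hinj : ∀ s ∈ Set.Ioo a₁ b₁, ∀ s' ∈ Set.Ioo a₁ b₁, s < s' → deriv f s ≠ deriv f s' := by
    intro s hs s' hs' hss h0
    have hsub : Set.Icc s s' ⊆ Set.Ioo a₁ b₁ := fun x hx =>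
      ⟨lt_of_lt_of_le hs.1 hx.1, lt_of_le_of_lt hx.2 hs'.2⟩
    have hf' : ContDiffOn ℝ (⊤ : ℕ∞) (deriv f) (Set.Ioo a₁ b₁) := hf.deriv_of_isOpen isOpen_Ioo (by simp)
    have hcont : ContinuousOn (deriv f) (Set.Icc s s') := hf'.continuousOn.mono hsub
    obtain ⟨x, hx, hx0⟩ := exists_deriv_eq_zero hss hcont h0
    exact hA x (hsub ⟨le_of_lt hx.1, le_of_lt hx.2⟩) hx0
  -- the cubic F vanishes at f' s for every s
  have hF : ∀ s ∈ Set.Ioo a₁ b₁,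
      ((1 + a^2) * (deriv f s)^2 - 2*a*b*(deriv f s) + (1 + b^2)) * (q - p * deriv f s)
        - 4*(b - a * deriv f s)*(d - c * deriv f s)^2 = 0 := by
    intro s hs
    have h1 := key1 s hs
    have h2 := key2 s hs
    have hmain : K * (1 + b^2 + deriv f s^2 + deriv f s^2 * a^2 - 2 * deriv f s * a * b) *
        (((1 + a^2) * (deriv f s)^2 - 2*a*b*(deriv f s) + (1 + b^2)) * (q - p * deriv f s)
          - 4*(b - a * deriv f s)*(d - c * deriv f s)^2) = 0 := by
      linear_combination (d - deriv f s * c) * h2 - (q - deriv f s * p) * h1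
    have hne : K * (1 + b^2 + deriv f s^2 + deriv f s^2 * a^2 - 2 * deriv f s * a * b) ≠ 0 :=
      mul_ne_zero hK (ne_of_gt (hQpos (deriv f s)))
    exact (mul_eq_zero.1 hmain).resolve_left hne
  -- four points with distinct f' values
  have hs1 : a₁ + (b₁ - a₁)/5 ∈ Set.Ioo a₁ b₁ := ⟨by linarith, by linarith⟩
  have hs2 : a₁ + 2*(b₁ - a₁)/5 ∈ Set.Ioo a₁ b₁ := ⟨by linarith, by linarith⟩
  have hs3 : a₁ + 3*(b₁ - a₁)/5 ∈ Set.Ioo a₁ b₁ := ⟨by linarith, by linarith⟩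
  have hs4 : a₁ + 4*(b₁ - a₁)/5 ∈ Set.Ioo a₁ b₁ := ⟨by linarith, by linarith⟩
  -- F identically vanishes
  have hFall : ∀ u : ℝ,
      ((1 + a^2) * u^2 - 2*a*b*u + (1 + b^2)) * (q - p * u)
        - 4*(b - a*u)*(d - c*u)^2 = 0 := by
    have hco : ∀ u : ℝ,
        (4*a*c^2 - p*(1 + a^2)) * u^3
          + (q*(1 + a^2) + 2*a*b*p - 4*(b*c^2 + 2*a*c*d)) * u^2
          + (4*(2*b*c*d + a*d^2) - 2*a*b*q - p*(1 + b^2)) * u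
          + (q*(1 + b^2) - 4*b*d^2) = 0 := by
      apply cubic_zero_of_four_roots _ _ _ _
        (deriv f (a₁ + (b₁ - a₁)/5)) (deriv f (a₁ + 2*(b₁ - a₁)/5))
        (deriv f (a₁ + 3*(b₁ - a₁)/5)) (deriv f (a₁ + 4*(b₁ - a₁)/5))
        (hinj _ hs1 _ hs2 (by linarith)) (hinj _ hs1 _ hs3 (by linarith))
        (hinj _ hs1 _ hs4 (by linarith)) (hinj _ hs2 _ hs3 (by linarith))
        (hinj _ hs2 _ hs4 (by linarith)) (hinj _ hs3 _ hs4 (by linarith))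
      · linear_combination hF _ hs1
      · linear_combination hF _ hs2
      · linear_combination hF _ hs3
      · linear_combination hF _ hs4
    intro u
    linear_combination hco u
  -- conclude: the torsion at t₀ must vanish, contradiction
  by_cases hc0 : c = 0
  · have h0 := hFall 0
    have h1 := hFall 1
    have hm1 := hFall (-1)
    have h2 := hFall 2
    rw [hc0] at h0 h1 hm1 h2
    have hp0 : p * (1 + a^2) = 0 := by
      linear_combination (-(1:ℝ)/2) * h0 + (1/2) * h1 + (1/6) * hm1 + (-(1:ℝ)/6) * h2
    have hp' : p = 0 := by
      rcases mul_eq_zero.1 hp0 with h | h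
      · exact h
      · exact absurd h (by positivity)
    exact htor (by rw [hp', hc0]; ring)
  · have h := hFall (d/c)
    have hS : d - c*(d/c) = 0 := by field_simp; ring
    have hQP : ((1 + a^2)*(d/c)^2 - 2*a*b*(d/c) + (1 + b^2)) * (q - p*(d/c)) = 0 := by
      linear_combination h + (4*(b - a*(d/c))*(d - c*(d/c))) * hS
    have hQne : (1 + a^2)*(d/c)^2 - 2*a*b*(d/c) + (1 + b^2) ≠ 0 := by
      have := hQpos (d/c)
      intro h'
      nlinarith [this]
    have hP : q - p*(d/c) = 0 := (mul_eq_zero.1 hQP).resolve_left hQne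
    apply htor
    have hcq : c * q - p * d = 0 := by
      have h' : c * (q - p*(d/c)) = 0 := by rw [hP]; ring
      field_simp at h'
      linear_combination h'
    linear_combination -hcq
end

section
/- Let f : I → ℝ and g : J → ℝ be smooth functions on open intervals and set z(x,y) = f(x)·g(y). Suppose z satisfies the minimal surface equation (1 + z_y²)·z_xx − 2 z_x z_y z_xy + (1 + z_x²)·z_yy = 0 on I × J, equivalently f''(x)g(y)(1 + f(x)²g'(y)²) − 2 f(x) f'(x)² g(y) g'(y)² + f(x) g''(y)(1 + f'(x)²g(y)²) = 0 for all (x,y) ∈ I × J. Then every point of I × J has an open subrectangle I' × J' on which one of the following holds: (a) there exist α, β, γ ∈ ℝ with z(x,y) = αx + βy + γ (the graph is part of a plane); (b) there exist b, d ∈ ℝ and c ≠ 0 with z(x,y) = (x + b)·tan(cy + d); or (c) there exist b, d ∈ ℝ and c ≠ 0 with z(x,y) = (y + b)·tan(cx + d) (the graph is part of a helicoid). -/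
open Set

/-- A function with zero derivative on an open interval is constant there. -/
lemma const_of_deriv_zero {h : ℝ → ℝ} {c d : ℝ}
    (H : ∀ x ∈ Ioo c d, HasDerivAt h 0 x) {a b : ℝ}
    (ha : a ∈ Ioo c d) (hb : b ∈ Ioo c d) : h a = h b := by
  rcases lt_trichotomy a b with hab | hab | hab
  · have hsub : Icc a b ⊆ Ioo c d := Icc_subset_Ioo ha.1 hb.2
    have hcont : ContinuousOn h (Icc a b) := fun x hx =>
      (H x (hsub hx)).continuousAt.continuousWithinAt
    obtain ⟨z, hz, hz0⟩ := exists_hasDerivAt_eq_slope h (fun _ => 0) hab hcont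
      (fun x hx => H x (hsub (Ioo_subset_Icc_self hx)))
    have hba : b - a > 0 := by linarith
    have : (0:ℝ) = (h b - h a) / (b - a) := hz0
    have := (div_eq_iff (by linarith : b - a ≠ 0)).1 this.symm
    linarith
  · rw [hab]
  · have hsub : Icc b a ⊆ Ioo c d := Icc_subset_Ioo hb.1 ha.2
    have hcont : ContinuousOn h (Icc b a) := fun x hx =>
      (H x (hsub hx)).continuousAt.continuousWithinAt
    obtain ⟨z, hz, hz0⟩ := exists_hasDerivAt_eq_slope h (fun _ => 0) hab hcont
      (fun x hx => H x (hsub (Ioo_subset_Icc_self hx)))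
    have hba : a - b > 0 := by linarith
    have : (0:ℝ) = (h a - h b) / (a - b) := hz0
    have := (div_eq_iff (by linarith : a - b ≠ 0)).1 this.symm
    linarith

/-- If a function vanishes on an open interval, its derivative there vanishes. -/
lemma deriv_zero_of_zero {h h' : ℝ → ℝ} {c d : ℝ}
    (Hd : ∀ x ∈ Ioo c d, HasDerivAt h (h' x) x)
    (H0 : ∀ x ∈ Ioo c d, h x = 0) : ∀ x ∈ Ioo c d, h' x = 0 := by
  intro x hx
  have hev : h =ᶠ[nhds x] fun _ => (0 : ℝ) :=
    Filter.eventually_of_mem (isOpen_Ioo.mem_nhds hx) H0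
  have : HasDerivAt (fun _ : ℝ => (0 : ℝ)) (h' x) x :=
    (Hd x hx).congr_of_eventuallyEq hev.symm
  have := this.unique (hasDerivAt_const x 0)
  linarith

/-- Shrink to a subinterval where a continuous function is nonvanishing. -/
lemma shrink_ne {h : ℝ → ℝ} {c d x₁ : ℝ} (hx : x₁ ∈ Ioo c d)
    (hc : ContinuousAt h x₁) (h0 : h x₁ ≠ 0) :
    ∃ c' d', c' < d' ∧ Ioo c' d' ⊆ Ioo c d ∧ ∀ x ∈ Ioo c' d', h x ≠ 0 := by
  have h1 : ∀ᶠ x in nhds x₁, h x ≠ 0 := hc.eventually_ne h0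
  have h2 : ∀ᶠ x in nhds x₁, x ∈ Ioo c d ∧ h x ≠ 0 := by
    filter_upwards [h1, isOpen_Ioo.mem_nhds hx] with x hx1 hx2 using ⟨hx2, hx1⟩
  obtain ⟨l, u, hmem, hsub⟩ := mem_nhds_iff_exists_Ioo_subset.1 h2
  exact ⟨l, u, hmem.1.trans hmem.2, fun x hx => (hsub hx).1, fun x hx => (hsub hx).2⟩

/-- The case where `f'' ≡ 0`: the surface is a plane or a helicoid. -/
lemma lin_case {c d c' d' : ℝ} {f g f₁ f₂ g₁ g₂ : ℝ → ℝ}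
    (hcd : c < d) (hcd' : c' < d')
    (hf : ∀ x ∈ Ioo c d, HasDerivAt f (f₁ x) x)
    (hf1 : ∀ x ∈ Ioo c d, HasDerivAt f₁ (f₂ x) x)
    (hg : ∀ y ∈ Ioo c' d', HasDerivAt g (g₁ y) y)
    (hg1 : ∀ y ∈ Ioo c' d', HasDerivAt g₁ (g₂ y) y)
    (hf20 : ∀ x ∈ Ioo c d, f₂ x = 0)
    (hmin : ∀ x ∈ Ioo c d, ∀ y ∈ Ioo c' d',
      f₂ x * g y * (1 + f x ^ 2 * g₁ y ^ 2) - 2 * f x * f₁ x ^ 2 * g y * g₁ y ^ 2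
        + f x * g₂ y * (1 + f₁ x ^ 2 * g y ^ 2) = 0) :
    (∃ α β γ : ℝ, ∀ x ∈ Ioo c d, ∀ y ∈ Ioo c' d', f x * g y = α * x + β * y + γ) ∨
    (∃ b e k : ℝ, k ≠ 0 ∧ ∀ x ∈ Ioo c d, ∀ y ∈ Ioo c' d',
      f x * g y = (x + b) * Real.tan (k * y + e)) := by
  set xs : ℝ := (c + d) / 2 with hxs
  have hxsm : xs ∈ Ioo c d := ⟨by simp only [hxs]; linarith, by simp only [hxs]; linarith⟩
  set ys : ℝ := (c' + d') / 2 with hys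
  have hysm : ys ∈ Ioo c' d' := ⟨by simp only [hys]; linarith, by simp only [hys]; linarith⟩
  set a : ℝ := f₁ xs with ha
  -- f₁ is constant = a
  have hf1c : ∀ x ∈ Ioo c d, f₁ x = a := by
    intro x hx
    exact const_of_deriv_zero (fun t ht => by
      have := hf1 t ht; rwa [hf20 t ht] at this) hx hxsm
  -- f is affine
  set b : ℝ := f xs - a * xs with hb
  have hfa : ∀ x ∈ Ioo c d, f x = a * x + b := by
    intro x hx
    have : (fun t => f t - a * t) x = (fun t => f t - a * t) xs := by
      refine const_of_deriv_zero (h := fun t => f t - a * t) (fun t ht => ?_) hx hxsm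
      have h1 : HasDerivAt (fun t => f t - a * t) (f₁ t - a) t := by
        have h2 : HasDerivAt (fun t : ℝ => a * t) a t := by
          simpa using (hasDerivAt_id t).const_mul a
        exact (hf t ht).sub h2
      rw [hf1c t ht] at h1
      simpa using h1
    simp only at this
    simp only [hb]; linarith [this]
  by_cases haz : a = 0
  · -- f constant = b
    have hfc : ∀ x ∈ Ioo c d, f x = b := fun x hx => by rw [hfa x hx, haz]; ring
    by_cases hbz : b = 0
    · left; exact ⟨0, 0, 0, fun x hx y hy => by rw [hfc x hx, hbz]; ring⟩
    · -- b ≠ 0 : g'' ≡ 0, g affine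
      have hg2z : ∀ y ∈ Ioo c' d', g₂ y = 0 := by
        intro y hy
        have h := hmin xs hxsm y hy
        rw [hf20 xs hxsm, hfc xs hxsm, hf1c xs hxsm, haz] at h
        have hbg : b * g₂ y = 0 := by ring_nf at h ⊢; linarith [h]
        exact (mul_eq_zero.1 hbg).resolve_left hbz
      set e : ℝ := g₁ ys with he
      have hg1c : ∀ y ∈ Ioo c' d', g₁ y = e := by
        intro y hy
        exact const_of_deriv_zero (fun t ht => by
          have := hg1 t ht; rwa [hg2z t ht] at this) hy hysm
      set m : ℝ := g ys - e * ys with hm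
      have hga : ∀ y ∈ Ioo c' d', g y = e * y + m := by
        intro y hy
        have : (fun t => g t - e * t) y = (fun t => g t - e * t) ys := by
          refine const_of_deriv_zero (h := fun t => g t - e * t) (fun t ht => ?_) hy hysm
          have h1 : HasDerivAt (fun t => g t - e * t) (g₁ t - e) t := by
            have h2 : HasDerivAt (fun t : ℝ => e * t) e t := by
              simpa using (hasDerivAt_id t).const_mul e
            exact (hg t ht).sub h2
          rw [hg1c t ht] at h1
          simpa using h1
        simp only at this
        simp only [hm]; linarith [this]
      left; exact ⟨0, b * e, b * m, fun x hx y hy => by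
        rw [hfc x hx, hga y hy]; ring⟩
  · -- a ≠ 0 : find x₂ with f x₂ ≠ 0
    obtain ⟨x₂, hx₂m, hx₂⟩ : ∃ x₂ ∈ Ioo c d, f x₂ ≠ 0 := by
      by_contra hcon
      push_neg at hcon
      have ht₁ : (3 * c + d) / 4 ∈ Ioo c d := ⟨by linarith, by linarith⟩
      have ht₂ : (c + 3 * d) / 4 ∈ Ioo c d := ⟨by linarith, by linarith⟩
      have e₁ := hcon _ ht₁; have e₂ := hcon _ ht₂
      rw [hfa _ ht₁] at e₁; rw [hfa _ ht₂] at e₂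
      have hd : a * ((c - d) / 2) = 0 := by linarith
      rcases mul_eq_zero.1 hd with h | h
      · exact haz h
      · have : c = d := by linarith
        exact absurd this (ne_of_lt hcd)
    -- the ODE for g
    have hH : ∀ y ∈ Ioo c' d', g₂ y * (1 + a ^ 2 * g y ^ 2) = 2 * a ^ 2 * g y * g₁ y ^ 2 := by
      intro y hy
      have h := hmin x₂ hx₂m y hy
      rw [hf20 x₂ hx₂m, hf1c x₂ hx₂m] at h
      have h2 : f x₂ * (g₂ y * (1 + a ^ 2 * g y ^ 2) - 2 * a ^ 2 * g y * g₁ y ^ 2) = 0 := by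
        ring_nf at h ⊢; linarith [h]
      have := (mul_eq_zero.1 h2).resolve_left hx₂
      linarith
    -- K := g₁ / (1 + a²g²) is constant
    have hpos : ∀ y : ℝ, (0:ℝ) < 1 + a ^ 2 * g y ^ 2 := fun y => by positivity
    set k : ℝ := g₁ ys / (1 + a ^ 2 * g ys ^ 2) with hk
    have hKc : ∀ y ∈ Ioo c' d', g₁ y = k * (1 + a ^ 2 * g y ^ 2) := by
      intro y hy
      have hconst : (fun t => g₁ t / (1 + a ^ 2 * g t ^ 2)) y
          = (fun t => g₁ t / (1 + a ^ 2 * g t ^ 2)) ys := by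
        refine const_of_deriv_zero (h := fun t => g₁ t / (1 + a ^ 2 * g t ^ 2))
          (fun t ht => ?_) hy hysm
        have hden : HasDerivAt (fun t => 1 + a ^ 2 * g t ^ 2)
            (a ^ 2 * (2 * g t * g₁ t)) t := by
          have h3 := (((hg t ht).pow 2).const_mul (a ^ 2)).const_add 1
          refine h3.congr_deriv (Eq.symm ?_)
          ring
        have hquot := (hg1 t ht).div hden (ne_of_gt (hpos t))
        have hnum : (g₂ t * (1 + a ^ 2 * g t ^ 2) - g₁ t * (a ^ 2 * (2 * g t * g₁ t)))
            / (1 + a ^ 2 * g t ^ 2) ^ 2 = 0 := by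
          rw [div_eq_zero_iff]; left
          have := hH t ht; nlinarith [this]
        rwa [hnum] at hquot
      simp only at hconst
      rw [div_eq_div_iff (ne_of_gt (hpos y)) (ne_of_gt (hpos ys))] at hconst
      rw [hk, div_mul_eq_mul_div, eq_div_iff (ne_of_gt (hpos ys))]
      linarith [hconst]
    by_cases hkz : k = 0
    · -- g constant
      have hgc : ∀ y ∈ Ioo c' d', g y = g ys := by
        intro y hy
        refine const_of_deriv_zero (fun t ht => ?_) hy hysm
        have h4 := hg t ht
        have h5 : g₁ t = 0 := by rw [hKc t ht, hkz]; ring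
        rwa [h5] at h4
      left
      exact ⟨a * g ys, 0, b * g ys, fun x hx y hy => by
        rw [hfa x hx, hgc y hy]; ring⟩
    · -- helicoid
      set e : ℝ := Real.arctan (a * g ys) - a * k * ys with he
      have harc : ∀ y ∈ Ioo c' d', Real.arctan (a * g y) = a * k * y + e := by
        intro y hy
        have hconst : (fun t => Real.arctan (a * g t) - a * k * t) y
            = (fun t => Real.arctan (a * g t) - a * k * t) ys := by
          refine const_of_deriv_zero (h := fun t => Real.arctan (a * g t) - a * k * t)
            (fun t ht => ?_) hy hysm
          have hag : HasDerivAt (fun t => a * g t) (a * g₁ t) t := (hg t ht).const_mul a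
          have harct := (Real.hasDerivAt_arctan (a * g t)).comp t hag
          have hlin : HasDerivAt (fun t : ℝ => a * k * t) (a * k) t := by
            simpa using (hasDerivAt_id t).const_mul (a * k)
          have h6 := harct.sub hlin
          have hval : 1 / (1 + (a * g t) ^ 2) * (a * g₁ t) - a * k = 0 := by
            rw [hKc t ht]
            have hden' : (1 + (a * g t) ^ 2) ≠ 0 := by positivity
            field_simp
            ring
          rwa [hval] at h6
        simp only at hconst
        simp only [he]; linarith [hconst]
      have htan : ∀ y ∈ Ioo c' d', a * g y = Real.tan (a * k * y + e) := by
        intro y hy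
        rw [← harc y hy, Real.tan_arctan]
      right
      refine ⟨b / a, e, a * k, mul_ne_zero haz hkz, fun x hx y hy => ?_⟩
      rw [hfa x hx, ← htan y hy]
      field_simp

/-- Core contradiction: the minimal surface equation cannot hold on a rectangle on
which `f, f', f''` and `g, g', g''` are all nonvanishing. -/
lemma core_contradiction {c d c' d' : ℝ} {f f₁ f₂ f₃ g g₁ g₂ g₃ : ℝ → ℝ}
    (hcd : c < d) (hcd' : c' < d')
    (hf : ∀ x ∈ Ioo c d, HasDerivAt f (f₁ x) x)
    (hf1 : ∀ x ∈ Ioo c d, HasDerivAt f₁ (f₂ x) x)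
    (hf2 : ∀ x ∈ Ioo c d, HasDerivAt f₂ (f₃ x) x)
    (hg : ∀ y ∈ Ioo c' d', HasDerivAt g (g₁ y) y)
    (hg1 : ∀ y ∈ Ioo c' d', HasDerivAt g₁ (g₂ y) y)
    (hg2 : ∀ y ∈ Ioo c' d', HasDerivAt g₂ (g₃ y) y)
    (hf0 : ∀ x ∈ Ioo c d, f x ≠ 0) (hf10 : ∀ x ∈ Ioo c d, f₁ x ≠ 0)
    (hf20 : ∀ x ∈ Ioo c d, f₂ x ≠ 0)
    (hg0 : ∀ y ∈ Ioo c' d', g y ≠ 0) (hg10 : ∀ y ∈ Ioo c' d', g₁ y ≠ 0)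
    (hg20 : ∀ y ∈ Ioo c' d', g₂ y ≠ 0)
    (hmin : ∀ x ∈ Ioo c d, ∀ y ∈ Ioo c' d',
      f₂ x * g y * (1 + f x ^ 2 * g₁ y ^ 2) - 2 * f x * f₁ x ^ 2 * g y * g₁ y ^ 2
        + f x * g₂ y * (1 + f₁ x ^ 2 * g y ^ 2) = 0) : False := by
  set xs : ℝ := (c + d) / 2 with hxs
  have hxsm : xs ∈ Ioo c d := ⟨by simp only [hxs]; linarith, by simp only [hxs]; linarith⟩
  set ys : ℝ := (c' + d') / 2 with hys
  have hysm : ys ∈ Ioo c' d' := ⟨by simp only [hys]; linarith, by simp only [hys]; linarith⟩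
  -- x-derivative of the minimal surface equation
  have hEx : ∀ x ∈ Ioo c d, ∀ y ∈ Ioo c' d',
      f₃ x * g y + g y * g₁ y ^ 2 * (f₃ x * f x ^ 2 + 2 * f x * f₁ x * f₂ x)
        - 2 * g y * g₁ y ^ 2 * (f₁ x ^ 3 + 2 * f x * f₁ x * f₂ x)
        + f₁ x * g₂ y + g₂ y * g y ^ 2 * (f₁ x ^ 3 + 2 * f x * f₁ x * f₂ x) = 0 := by
    intro x hx y hy
    refine deriv_zero_of_zero
      (h := fun t => f₂ t * g y * (1 + f t ^ 2 * g₁ y ^ 2)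
        - 2 * f t * f₁ t ^ 2 * g y * g₁ y ^ 2 + f t * g₂ y * (1 + f₁ t ^ 2 * g y ^ 2))
      (h' := fun t => f₃ t * g y + g y * g₁ y ^ 2 * (f₃ t * f t ^ 2 + 2 * f t * f₁ t * f₂ t)
        - 2 * g y * g₁ y ^ 2 * (f₁ t ^ 3 + 2 * f t * f₁ t * f₂ t)
        + f₁ t * g₂ y + g₂ y * g y ^ 2 * (f₁ t ^ 3 + 2 * f t * f₁ t * f₂ t))
      (fun t ht => ?_) (fun t ht => hmin t ht y hy) x hx
    have t1 := ((hf2 t ht).mul_const (g y)).mul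
      ((((hf t ht).pow 2).mul_const (g₁ y ^ 2)).const_add 1)
    have t2 := ((((hf t ht).const_mul 2).mul ((hf1 t ht).pow 2)).mul_const (g y)).mul_const
      (g₁ y ^ 2)
    have t3 := ((hf t ht).mul_const (g₂ y)).mul
      ((((hf1 t ht).pow 2).mul_const (g y ^ 2)).const_add 1)
    refine ((t1.sub t2).add t3).congr_deriv (Eq.symm ?_)
    push_cast [Pi.pow_apply, Pi.mul_apply]
    ring
  -- y-derivative of the minimal surface equation
  have hEy : ∀ x ∈ Ioo c d, ∀ y ∈ Ioo c' d',
      f₂ x * g₁ y + f₂ x * f x ^ 2 * (g₁ y ^ 3 + 2 * g y * g₁ y * g₂ y)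
        - 2 * f x * f₁ x ^ 2 * (g₁ y ^ 3 + 2 * g y * g₁ y * g₂ y)
        + f x * g₃ y + f x * f₁ x ^ 2 * (g₃ y * g y ^ 2 + 2 * g y * g₁ y * g₂ y) = 0 := by
    intro x hx y hy
    refine deriv_zero_of_zero
      (h := fun t => f₂ x * g t * (1 + f x ^ 2 * g₁ t ^ 2)
        - 2 * f x * f₁ x ^ 2 * g t * g₁ t ^ 2 + f x * g₂ t * (1 + f₁ x ^ 2 * g t ^ 2))
      (h' := fun t => f₂ x * g₁ t + f₂ x * f x ^ 2 * (g₁ t ^ 3 + 2 * g t * g₁ t * g₂ t)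
        - 2 * f x * f₁ x ^ 2 * (g₁ t ^ 3 + 2 * g t * g₁ t * g₂ t)
        + f x * g₃ t + f x * f₁ x ^ 2 * (g₃ t * g t ^ 2 + 2 * g t * g₁ t * g₂ t))
      (fun t ht => ?_) (fun t ht => hmin x hx t ht) y hy
    have u1 := ((hg t ht).const_mul (f₂ x)).mul
      ((((hg1 t ht).pow 2).const_mul (f x ^ 2)).const_add 1)
    have u2 := (((hg t ht).const_mul (2 * f x * f₁ x ^ 2)).mul ((hg1 t ht).pow 2))
    have u3 := ((hg2 t ht).const_mul (f x)).mul
      ((((hg t ht).pow 2).const_mul (f₁ x ^ 2)).const_add 1)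
    refine ((u1.sub u2).add u3).congr_deriv (Eq.symm ?_)
    push_cast [Pi.pow_apply, Pi.mul_apply]
    ring
  -- mixed second derivative
  have hExy : ∀ x ∈ Ioo c d, ∀ y ∈ Ioo c' d',
      f₃ x * g₁ y
        + (g₁ y ^ 3 + 2 * g y * g₁ y * g₂ y) * (f₃ x * f x ^ 2 + 2 * f x * f₁ x * f₂ x)
        - 2 * (g₁ y ^ 3 + 2 * g y * g₁ y * g₂ y) * (f₁ x ^ 3 + 2 * f x * f₁ x * f₂ x)
        + f₁ x * g₃ y
        + (g₃ y * g y ^ 2 + 2 * g y * g₁ y * g₂ y) * (f₁ x ^ 3 + 2 * f x * f₁ x * f₂ x)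
        = 0 := by
    intro x hx y hy
    refine deriv_zero_of_zero
      (h := fun t => f₃ x * g t + g t * g₁ t ^ 2 * (f₃ x * f x ^ 2 + 2 * f x * f₁ x * f₂ x)
        - 2 * g t * g₁ t ^ 2 * (f₁ x ^ 3 + 2 * f x * f₁ x * f₂ x)
        + f₁ x * g₂ t + g₂ t * g t ^ 2 * (f₁ x ^ 3 + 2 * f x * f₁ x * f₂ x))
      (h' := fun t => f₃ x * g₁ t
        + (g₁ t ^ 3 + 2 * g t * g₁ t * g₂ t) * (f₃ x * f x ^ 2 + 2 * f x * f₁ x * f₂ x)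
        - 2 * (g₁ t ^ 3 + 2 * g t * g₁ t * g₂ t) * (f₁ x ^ 3 + 2 * f x * f₁ x * f₂ x)
        + f₁ x * g₃ t
        + (g₃ t * g t ^ 2 + 2 * g t * g₁ t * g₂ t) * (f₁ x ^ 3 + 2 * f x * f₁ x * f₂ x))
      (fun t ht => ?_) (fun t ht => hEx x hx t ht) y hy
    have tA := (hg t ht).const_mul (f₃ x)
    have tB := ((hg t ht).mul ((hg1 t ht).pow 2)).mul_const
      (f₃ x * f x ^ 2 + 2 * f x * f₁ x * f₂ x)
    have tC := (((hg t ht).const_mul 2).mul ((hg1 t ht).pow 2)).mul_const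
      (f₁ x ^ 3 + 2 * f x * f₁ x * f₂ x)
    have tD := (hg2 t ht).const_mul (f₁ x)
    have tE := ((hg2 t ht).mul ((hg t ht).pow 2)).mul_const
      (f₁ x ^ 3 + 2 * f x * f₁ x * f₂ x)
    refine ((((tA.add tB).sub tC).add tD).add tE).congr_deriv (Eq.symm ?_)
    push_cast [Pi.pow_apply, Pi.mul_apply]
    ring
  -- Eq1 : cleared form of ∂ₓ of the separated equation
  have hEq1 : ∀ x ∈ Ioo c d, ∀ y ∈ Ioo c' d',
      f₃ x * f x - f₁ x * f₂ x + f x ^ 2 * ((f₁ x * f₂ x + f x * f₃ x) * g₁ y ^ 2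
        + (g y * g₂ y - 2 * g₁ y ^ 2) * (2 * f₁ x * f₂ x)) = 0 := by
    intro x hx y hy
    have hmul : g y * (f₃ x * f x - f₁ x * f₂ x
        + f x ^ 2 * ((f₁ x * f₂ x + f x * f₃ x) * g₁ y ^ 2
          + (g y * g₂ y - 2 * g₁ y ^ 2) * (2 * f₁ x * f₂ x))) = 0 := by
      linear_combination (f x) * hEx x hx y hy - (f₁ x) * hmin x hx y hy
    exact (mul_eq_zero.1 hmul).resolve_left (hg0 y hy)
  -- separated mixed equation
  have hSp : ∀ x ∈ Ioo c d, ∀ y ∈ Ioo c' d',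
      (f₁ x * f₂ x + f x * f₃ x) * (2 * g₁ y * g₂ y)
        + (g y * g₃ y - 3 * g₁ y * g₂ y) * (2 * f₁ x * f₂ x) = 0 := by
    intro x hx y hy
    have hmul : (f x * g y) ^ 2 * ((f₁ x * f₂ x + f x * f₃ x) * (2 * g₁ y * g₂ y)
        + (g y * g₃ y - 3 * g₁ y * g₂ y) * (2 * f₁ x * f₂ x)) = 0 := by
      linear_combination (f x * g y) * hExy x hx y hy - (f₁ x * g y) * hEy x hx y hy
        - (f x * g₁ y) * hEx x hx y hy + (f₁ x * g₁ y) * hmin x hx y hy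
    have hne : (f x * g y) ^ 2 ≠ 0 := pow_ne_zero 2 (mul_ne_zero (hf0 x hx) (hg0 y hy))
    exact (mul_eq_zero.1 hmul).resolve_left hne
  -- the separation constant λ
  obtain ⟨lam, hlam⟩ : ∃ l : ℝ, l = (3 * g₁ ys * g₂ ys - g ys * g₃ ys) / (2 * g₁ ys * g₂ ys) :=
    ⟨_, rfl⟩
  have h2g : (2 : ℝ) * g₁ ys * g₂ ys ≠ 0 := by
    have := hg10 ys hysm; have := hg20 ys hysm
    positivity
  have hQ' : ∀ x ∈ Ioo c d, f₁ x * f₂ x + f x * f₃ x = lam * (2 * f₁ x * f₂ x) := by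
    intro x hx
    rw [hlam, div_mul_eq_mul_div, eq_div_iff h2g]
    linear_combination hSp x hx ys hysm
  -- Q - λ R is constant (= μ)
  obtain ⟨mu, hmu⟩ : ∃ m : ℝ, m = f xs * f₂ xs - lam * f₁ xs ^ 2 := ⟨_, rfl⟩
  have hQ : ∀ x ∈ Ioo c d, f x * f₂ x = lam * f₁ x ^ 2 + mu := by
    intro x hx
    have hconst : (fun t => f t * f₂ t - lam * f₁ t ^ 2) x
        = (fun t => f t * f₂ t - lam * f₁ t ^ 2) xs := by
      refine const_of_deriv_zero (h := fun t => f t * f₂ t - lam * f₁ t ^ 2)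
        (fun t ht => ?_) hx hxsm
      have hd := ((hf t ht).mul (hf2 t ht)).sub (((hf1 t ht).pow 2).const_mul lam)
      refine hd.congr_deriv (Eq.symm ?_)
      push_cast
      linear_combination -(hQ' t ht)
    simp only at hconst
    simp only [hmu]; linarith [hconst]
  -- s' = -λ r'
  have hs' : ∀ y ∈ Ioo c' d', g y * g₃ y - 3 * g₁ y * g₂ y = -lam * (2 * g₁ y * g₂ y) := by
    intro y hy
    have h2 : (2 * f₁ xs * f₂ xs) * ((g y * g₃ y - 3 * g₁ y * g₂ y)
        + lam * (2 * g₁ y * g₂ y)) = 0 := by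
      linear_combination hSp xs hxsm y hy - 2 * g₁ y * g₂ y * hQ' xs hxsm
    have hne : (2 : ℝ) * f₁ xs * f₂ xs ≠ 0 := by
      have := hf10 xs hxsm; have := hf20 xs hxsm
      positivity
    have := (mul_eq_zero.1 h2).resolve_left hne
    linarith
  -- s + λ r is constant (= ν)
  obtain ⟨nu, hnu⟩ : ∃ n : ℝ, n = g ys * g₂ ys + (lam - 2) * g₁ ys ^ 2 := ⟨_, rfl⟩
  have hsc : ∀ y ∈ Ioo c' d', g y * g₂ y + (lam - 2) * g₁ y ^ 2 = nu := by
    intro y hy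
    have hconst : (fun t => g t * g₂ t + (lam - 2) * g₁ t ^ 2) y
        = (fun t => g t * g₂ t + (lam - 2) * g₁ t ^ 2) ys := by
      refine const_of_deriv_zero (h := fun t => g t * g₂ t + (lam - 2) * g₁ t ^ 2)
        (fun t ht => ?_) hy hysm
      have hd := ((hg t ht).mul (hg2 t ht)).add (((hg1 t ht).pow 2).const_mul (lam - 2))
      refine hd.congr_deriv (Eq.symm ?_)
      push_cast
      linear_combination -(hs' t ht)
    simp only at hconst
    simp only [hnu]; linarith [hconst]
  -- P' relation
  have hP' : ∀ x ∈ Ioo c d, f₃ x * f x - f₁ x * f₂ x + 2 * nu * f x ^ 2 * f₁ x * f₂ x = 0 := by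
    intro x hx
    have hnud : g ys * g₂ ys = nu - (lam - 2) * g₁ ys ^ 2 := by
      rw [hnu]; ring
    linear_combination hEq1 x hx ys hysm - f x ^ 2 * g₁ ys ^ 2 * hQ' x hx
      - 2 * f x ^ 2 * f₁ x * f₂ x * hnud
  -- P + ν R is constant (= c₀)
  obtain ⟨c₀, hc₀⟩ : ∃ v : ℝ, v = f₂ xs / f xs + nu * f₁ xs ^ 2 := ⟨_, rfl⟩
  have hPc : ∀ x ∈ Ioo c d, f₂ x / f x + nu * f₁ x ^ 2 = c₀ := by
    intro x hx
    have hconst : (fun t => f₂ t / f t + nu * f₁ t ^ 2) x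
        = (fun t => f₂ t / f t + nu * f₁ t ^ 2) xs := by
      refine const_of_deriv_zero (h := fun t => f₂ t / f t + nu * f₁ t ^ 2)
        (fun t ht => ?_) hx hxsm
      have hd := ((hf2 t ht).div (hf t ht) (hf0 t ht)).add
        (((hf1 t ht).pow 2).const_mul nu)
      refine hd.congr_deriv (Eq.symm ?_)
      push_cast
      rw [eq_comm, div_add' _ _ _ (pow_ne_zero 2 (hf0 t ht)), div_eq_zero_iff]
      left
      linear_combination hP' t ht
    simp only at hconst
    rw [hc₀]; linarith [hconst]
  have hP : ∀ x ∈ Ioo c d, f₂ x = f x * (c₀ - nu * f₁ x ^ 2) := by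
    intro x hx
    have h2 : f₂ x / f x = c₀ - nu * f₁ x ^ 2 := by linarith [hPc x hx]
    rw [div_eq_iff (hf0 x hx)] at h2
    rw [h2]; ring
  -- the identity A ≡ 0
  have hA : ∀ x ∈ Ioo c d, c₀ * f x ^ 2 - nu * f x ^ 2 * f₁ x ^ 2 - lam * f₁ x ^ 2 - mu
      = 0 := by
    intro x hx
    linear_combination hQ x hx - f x * hP x hx
  -- solve for g₂
  have hp : ∀ y ∈ Ioo c' d', g₂ y = g y * (-c₀ - mu * g₁ y ^ 2) := by
    intro y hy
    have h4 : g y * g₂ y + (lam - 2) * g₁ y ^ 2 - nu = 0 := by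
      linear_combination hsc y hy
    have hFX : f xs * (g₂ y + c₀ * g y + mu * g y * g₁ y ^ 2) = 0 := by
      linear_combination hmin xs hxsm y hy
        - g y * (1 + f xs ^ 2 * g₁ y ^ 2) * (hP xs hxsm)
        - f xs * g y * g₁ y ^ 2 * (hA xs hxsm)
        - f xs * g y * f₁ xs ^ 2 * h4
    have := (mul_eq_zero.1 hFX).resolve_left (hf0 xs hxsm)
    linarith
  -- differentiate A : get ν = 0, λ = 1
  have hDA : ∀ x ∈ Ioo c d,
      c₀ * (2 * f x * f₁ x) - nu * (2 * f x * f₁ x * f₁ x ^ 2 + f x ^ 2 * (2 * f₁ x * f₂ x))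
        - lam * (2 * f₁ x * f₂ x) = 0 := by
    refine deriv_zero_of_zero
      (h := fun t => c₀ * f t ^ 2 - nu * (f t ^ 2 * f₁ t ^ 2) - lam * f₁ t ^ 2 - mu)
      (h' := fun t => c₀ * (2 * f t * f₁ t)
        - nu * (2 * f t * f₁ t * f₁ t ^ 2 + f t ^ 2 * (2 * f₁ t * f₂ t))
        - lam * (2 * f₁ t * f₂ t)) (fun t ht => ?_) (fun t ht => by
          linear_combination hA t ht)
    have hd := ((((hf t ht).pow 2).const_mul c₀).sub
      ((((hf t ht).pow 2).mul ((hf1 t ht).pow 2)).const_mul nu)).sub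
      (((hf1 t ht).pow 2).const_mul lam)
    have hd2 := hd.sub_const mu
    refine hd2.congr_deriv (Eq.symm ?_)
    push_cast [Pi.pow_apply, Pi.mul_apply]
    ring
  have hbr : ∀ x ∈ Ioo c d, 2 * f₁ x * f₂ x * (1 - nu * f x ^ 2 - lam) = 0 := by
    intro x hx
    have hPe : f x * (c₀ - nu * f₁ x ^ 2) - f₂ x = 0 := by
      linear_combination -hP x hx
    linear_combination hDA x hx - 2 * f₁ x * hPe
  have hkap : ∀ x ∈ Ioo c d, nu * f x ^ 2 = 1 - lam := by
    intro x hx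
    have hne : 2 * f₁ x * f₂ x ≠ 0 := by
      have := hf10 x hx; have := hf20 x hx
      positivity
    have := (mul_eq_zero.1 (hbr x hx)).resolve_left hne
    linarith
  have hnu0 : nu = 0 := by
    have hD := deriv_zero_of_zero (h := fun t => nu * f t ^ 2 - (1 - lam))
      (h' := fun t => nu * (2 * f t * f₁ t)) (fun t ht => ?_)
      (fun t ht => by show nu * f t ^ 2 - (1 - lam) = 0; have := hkap t ht; linarith) xs hxsm
    · have hne : f xs * f₁ xs ≠ 0 := mul_ne_zero (hf0 xs hxsm) (hf10 xs hxsm)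
      rcases mul_eq_zero.1 hD with h | h
      · exact h
      · exact absurd (by linarith : f xs * f₁ xs = 0) hne
    · have hd := (((hf t ht).pow 2).const_mul nu).sub_const (1 - lam)
      refine hd.congr_deriv (Eq.symm ?_)
      push_cast
      ring
  have hlam1 : lam = 1 := by
    have := hkap xs hxsm
    rw [hnu0] at this
    linarith
  -- the identity C ≡ 0 and μ = 0
  have hC : ∀ y ∈ Ioo c' d',
      -c₀ * g y ^ 2 - mu * (g y ^ 2 * g₁ y ^ 2) - (2 - lam) * g₁ y ^ 2 - nu = 0 := by
    intro y hy
    linear_combination hsc y hy - g y * hp y hy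
  have hDC : ∀ y ∈ Ioo c' d',
      -c₀ * (2 * g y * g₁ y) - mu * (2 * g y * g₁ y * g₁ y ^ 2 + g y ^ 2 * (2 * g₁ y * g₂ y))
        - (2 - lam) * (2 * g₁ y * g₂ y) = 0 := by
    refine deriv_zero_of_zero
      (h := fun t => -c₀ * g t ^ 2 - mu * (g t ^ 2 * g₁ t ^ 2) - (2 - lam) * g₁ t ^ 2 - nu)
      (h' := fun t => -c₀ * (2 * g t * g₁ t)
        - mu * (2 * g t * g₁ t * g₁ t ^ 2 + g t ^ 2 * (2 * g₁ t * g₂ t))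
        - (2 - lam) * (2 * g₁ t * g₂ t)) (fun t ht => ?_) (fun t ht => hC t ht)
    have hd := (((((hg t ht).pow 2).const_mul (-c₀)).sub
      ((((hg t ht).pow 2).mul ((hg1 t ht).pow 2)).const_mul mu)).sub
      (((hg1 t ht).pow 2).const_mul (2 - lam))).sub_const nu
    refine hd.congr_deriv (Eq.symm ?_)
    push_cast [Pi.pow_apply, Pi.mul_apply]
    ring
  have hmu0 : mu = 0 := by
    have hpe : g ys * (-c₀ - mu * g₁ ys ^ 2) - g₂ ys = 0 := by
      linear_combination -hp ys hysm
    have h2 : 2 * g₁ ys * g₂ ys * (1 - mu * g ys ^ 2 - (2 - lam)) = 0 := by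
      linear_combination hDC ys hysm - 2 * g₁ ys * hpe
    have hne : 2 * g₁ ys * g₂ ys ≠ 0 := h2g
    have h3 := (mul_eq_zero.1 h2).resolve_left hne
    have h4 : mu * g ys ^ 2 = lam - 1 := by linarith
    rw [hlam1] at h4
    have hgne : g ys ^ 2 ≠ 0 := pow_ne_zero 2 (hg0 ys hysm)
    rcases mul_eq_zero.1 (by linarith : mu * g ys ^ 2 = 0) with h | h
    · exact h
    · exact absurd h hgne
  -- final contradiction
  have hAx := hA xs hxsm
  have hCy := hC ys hysm
  rw [hnu0, hmu0, hlam1] at hAx hCy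
  have h5 : c₀ * f xs ^ 2 = f₁ xs ^ 2 := by linarith
  have h6 : c₀ * g ys ^ 2 = -g₁ ys ^ 2 := by linarith
  have p1 : 0 < f₁ xs ^ 2 :=
    lt_of_le_of_ne (sq_nonneg _) (Ne.symm (pow_ne_zero 2 (hf10 xs hxsm)))
  have p2 : 0 < g₁ ys ^ 2 :=
    lt_of_le_of_ne (sq_nonneg _) (Ne.symm (pow_ne_zero 2 (hg10 ys hysm)))
  have p3 : 0 < f xs ^ 2 :=
    lt_of_le_of_ne (sq_nonneg _) (Ne.symm (pow_ne_zero 2 (hf0 xs hxsm)))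
  have p4 : 0 < g ys ^ 2 :=
    lt_of_le_of_ne (sq_nonneg _) (Ne.symm (pow_ne_zero 2 (hg0 ys hysm)))
  nlinarith [h5, h6, p1, p2, p3, p4]



/-- A minimal homothetical graph `z = f(x)·g(y)` is locally part of a plane
or of a helicoid `z = (x+b)·tan(cy+d)` (or `z = (y+b)·tan(cx+d)`). -/
theorem minimal_homothetical_classification
    (a₁ b₁ a₂ b₂ : ℝ) (h₁ : a₁ < b₁) (h₂ : a₂ < b₂)
    (f g : ℝ → ℝ)
    (hf : ContDiffOn ℝ (⊤ : ℕ∞) f (Set.Ioo a₁ b₁))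
    (hg : ContDiffOn ℝ (⊤ : ℕ∞) g (Set.Ioo a₂ b₂))
    (hmin : ∀ x ∈ Set.Ioo a₁ b₁, ∀ y ∈ Set.Ioo a₂ b₂,
      deriv (deriv f) x * g y * (1 + f x ^ 2 * deriv g y ^ 2)
        - 2 * f x * deriv f x ^ 2 * g y * deriv g y ^ 2
        + f x * deriv (deriv g) y * (1 + deriv f x ^ 2 * g y ^ 2) = 0) :
    ∀ x₀ ∈ Set.Ioo a₁ b₁, ∀ y₀ ∈ Set.Ioo a₂ b₂,
      ∃ c₁ d₁ c₂ d₂ : ℝ,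
        x₀ ∈ Set.Ioo c₁ d₁ ∧ Set.Ioo c₁ d₁ ⊆ Set.Ioo a₁ b₁ ∧
        y₀ ∈ Set.Ioo c₂ d₂ ∧ Set.Ioo c₂ d₂ ⊆ Set.Ioo a₂ b₂ ∧
        ((∃ α β γ : ℝ, ∀ x ∈ Set.Ioo c₁ d₁, ∀ y ∈ Set.Ioo c₂ d₂,
            f x * g y = α * x + β * y + γ) ∨
         (∃ b d : ℝ, ∃ c : ℝ, c ≠ 0 ∧ ∀ x ∈ Set.Ioo c₁ d₁, ∀ y ∈ Set.Ioo c₂ d₂,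
            f x * g y = (x + b) * Real.tan (c * y + d)) ∨
         (∃ b d : ℝ, ∃ c : ℝ, c ≠ 0 ∧ ∀ x ∈ Set.Ioo c₁ d₁, ∀ y ∈ Set.Ioo c₂ d₂,
            f x * g y = (y + b) * Real.tan (c * x + d))) := by
  intro x₀ hx₀ y₀ hy₀
  -- derivative chains from smoothness
  have hfd : ContDiffOn ℝ (⊤ : ℕ∞) (deriv f) (Ioo a₁ b₁) := hf.deriv_of_isOpen isOpen_Ioo (by simp)
  have hfdd : ContDiffOn ℝ (⊤ : ℕ∞) (deriv (deriv f)) (Ioo a₁ b₁) :=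
    hfd.deriv_of_isOpen isOpen_Ioo (by simp)
  have hgd : ContDiffOn ℝ (⊤ : ℕ∞) (deriv g) (Ioo a₂ b₂) := hg.deriv_of_isOpen isOpen_Ioo (by simp)
  have hgdd : ContDiffOn ℝ (⊤ : ℕ∞) (deriv (deriv g)) (Ioo a₂ b₂) :=
    hgd.deriv_of_isOpen isOpen_Ioo (by simp)
  have Hf : ∀ x ∈ Ioo a₁ b₁, HasDerivAt f (deriv f x) x := fun x hx =>
    ((hf.differentiableOn (by simp)).differentiableAt (isOpen_Ioo.mem_nhds hx)).hasDerivAt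
  have Hf1 : ∀ x ∈ Ioo a₁ b₁, HasDerivAt (deriv f) (deriv (deriv f) x) x := fun x hx =>
    ((hfd.differentiableOn (by simp)).differentiableAt (isOpen_Ioo.mem_nhds hx)).hasDerivAt
  have Hf2 : ∀ x ∈ Ioo a₁ b₁, HasDerivAt (deriv (deriv f)) (deriv (deriv (deriv f)) x) x :=
    fun x hx =>
    ((hfdd.differentiableOn (by simp)).differentiableAt (isOpen_Ioo.mem_nhds hx)).hasDerivAt
  have Hg : ∀ y ∈ Ioo a₂ b₂, HasDerivAt g (deriv g y) y := fun y hy =>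
    ((hg.differentiableOn (by simp)).differentiableAt (isOpen_Ioo.mem_nhds hy)).hasDerivAt
  have Hg1 : ∀ y ∈ Ioo a₂ b₂, HasDerivAt (deriv g) (deriv (deriv g) y) y := fun y hy =>
    ((hgd.differentiableOn (by simp)).differentiableAt (isOpen_Ioo.mem_nhds hy)).hasDerivAt
  have Hg2 : ∀ y ∈ Ioo a₂ b₂, HasDerivAt (deriv (deriv g)) (deriv (deriv (deriv g)) y) y :=
    fun y hy =>
    ((hgdd.differentiableOn (by simp)).differentiableAt (isOpen_Ioo.mem_nhds hy)).hasDerivAt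
  by_cases hF : ∀ x ∈ Ioo a₁ b₁, deriv (deriv f) x = 0
  · refine ⟨a₁, b₁, a₂, b₂, hx₀, subset_rfl, hy₀, subset_rfl, ?_⟩
    rcases lin_case h₁ h₂ Hf Hf1 Hg Hg1 hF hmin with h | ⟨b, e, k, hk, H⟩
    · exact Or.inl h
    · exact Or.inr (Or.inl ⟨b, e, k, hk, H⟩)
  by_cases hG : ∀ y ∈ Ioo a₂ b₂, deriv (deriv g) y = 0
  · refine ⟨a₁, b₁, a₂, b₂, hx₀, subset_rfl, hy₀, subset_rfl, ?_⟩
    have hmin' : ∀ y ∈ Ioo a₂ b₂, ∀ x ∈ Ioo a₁ b₁,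
        deriv (deriv g) y * f x * (1 + g y ^ 2 * deriv f x ^ 2)
          - 2 * g y * deriv g y ^ 2 * f x * deriv f x ^ 2
          + g y * deriv (deriv f) x * (1 + deriv g y ^ 2 * f x ^ 2) = 0 := fun y hy x hx => by
      linear_combination hmin x hx y hy
    rcases lin_case h₂ h₁ Hg Hg1 Hf Hf1 hG hmin' with ⟨α, β, γ, H⟩ | ⟨b, e, k, hk, H⟩
    · exact Or.inl ⟨β, α, γ, fun x hx y hy => by linear_combination H y hy x hx⟩
    · exact Or.inr (Or.inr ⟨b, e, k, hk, fun x hx y hy => by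
        linear_combination H y hy x hx⟩)
  exfalso
  push_neg at hF hG
  obtain ⟨x₁, hx₁, hfx₁⟩ := hF
  obtain ⟨y₁, hy₁, hgy₁⟩ := hG
  -- shrink on the f side
  obtain ⟨c1, d1, hlt1, hsub1, hne1⟩ := shrink_ne hx₁ ((Hf2 x₁ hx₁).continuousAt) hfx₁
  obtain ⟨x₂, hx₂, hfx₂⟩ : ∃ x₂ ∈ Ioo c1 d1, deriv f x₂ ≠ 0 := by
    by_contra hcon
    push_neg at hcon
    have h0 := deriv_zero_of_zero (fun t ht => Hf1 t (hsub1 ht)) hcon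
      ((c1 + d1) / 2) ⟨by linarith, by linarith⟩
    exact hne1 _ ⟨by linarith, by linarith⟩ h0
  obtain ⟨c2, d2, hlt2, hsub2, hne2⟩ := shrink_ne hx₂ ((Hf1 x₂ (hsub1 hx₂)).continuousAt) hfx₂
  obtain ⟨x₃, hx₃, hfx₃⟩ : ∃ x₃ ∈ Ioo c2 d2, f x₃ ≠ 0 := by
    by_contra hcon
    push_neg at hcon
    have h0 := deriv_zero_of_zero (fun t ht => Hf t (hsub1 (hsub2 ht))) hcon
      ((c2 + d2) / 2) ⟨by linarith, by linarith⟩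
    exact hne2 _ ⟨by linarith, by linarith⟩ h0
  obtain ⟨c3, d3, hlt3, hsub3, hne3⟩ :=
    shrink_ne hx₃ ((Hf x₃ (hsub1 (hsub2 hx₃))).continuousAt) hfx₃
  -- shrink on the g side
  obtain ⟨e1, k1, hlt1', hsub1', hne1'⟩ := shrink_ne hy₁ ((Hg2 y₁ hy₁).continuousAt) hgy₁
  obtain ⟨y₂, hy₂, hgy₂⟩ : ∃ y₂ ∈ Ioo e1 k1, deriv g y₂ ≠ 0 := by
    by_contra hcon
    push_neg at hcon
    have h0 := deriv_zero_of_zero (fun t ht => Hg1 t (hsub1' ht)) hcon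
      ((e1 + k1) / 2) ⟨by linarith, by linarith⟩
    exact hne1' _ ⟨by linarith, by linarith⟩ h0
  obtain ⟨e2, k2, hlt2', hsub2', hne2'⟩ :=
    shrink_ne hy₂ ((Hg1 y₂ (hsub1' hy₂)).continuousAt) hgy₂
  obtain ⟨y₃, hy₃, hgy₃⟩ : ∃ y₃ ∈ Ioo e2 k2, g y₃ ≠ 0 := by
    by_contra hcon
    push_neg at hcon
    have h0 := deriv_zero_of_zero (fun t ht => Hg t (hsub1' (hsub2' ht))) hcon
      ((e2 + k2) / 2) ⟨by linarith, by linarith⟩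
    exact hne2' _ ⟨by linarith, by linarith⟩ h0
  obtain ⟨e3, k3, hlt3', hsub3', hne3'⟩ :=
    shrink_ne hy₃ ((Hg y₃ (hsub1' (hsub2' hy₃))).continuousAt) hgy₃
  -- inclusions
  have hIf : Ioo c3 d3 ⊆ Ioo a₁ b₁ := fun t ht => hsub1 (hsub2 (hsub3 ht))
  have hIg : Ioo e3 k3 ⊆ Ioo a₂ b₂ := fun t ht => hsub1' (hsub2' (hsub3' ht))
  exact core_contradiction hlt3 hlt3'
    (fun x hx => Hf x (hIf hx)) (fun x hx => Hf1 x (hIf hx)) (fun x hx => Hf2 x (hIf hx))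
    (fun y hy => Hg y (hIg hy)) (fun y hy => Hg1 y (hIg hy)) (fun y hy => Hg2 y (hIg hy))
    (fun x hx => hne3 x hx) (fun x hx => hne2 x (hsub3 hx))
    (fun x hx => hne1 x (hsub2 (hsub3 hx)))
    (fun y hy => hne3' y hy) (fun y hy => hne2' y (hsub3' hy))
    (fun y hy => hne1' y (hsub2' (hsub3' hy)))
    (fun x hx y hy => hmin x (hIf hx) y (hIg hy))
end

section
/- There do not exist smooth functions f : I → ℝ and g : J → ℝ on open intervals such that f, f', f'', g, g', g'' all vanish nowhere on their intervals and such that f''(x)g(y)(1 + f(x)²g'(y)²) − 2 f(x) f'(x)² g(y) g'(y)² + f(x) g''(y)(1 + f'(x)²g(y)²) = 0 for all (x,y) ∈ I × J. In other words, a minimal homothetical graph z = f(x)g(y) cannot have both f'' and g'' nowhere vanishing. -/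
open Set Filter

set_option maxHeartbeats 1600000 in
/-- A minimal homothetical graph `z = f(x)·g(y)` cannot have
`f, f', f'', g, g', g''` all nowhere vanishing. -/
theorem no_minimal_homothetical_second_derivs_nonvanishing :
    ¬ ∃ (a₁ b₁ a₂ b₂ : ℝ) (f g : ℝ → ℝ),
        a₁ < b₁ ∧ a₂ < b₂ ∧
        ContDiffOn ℝ (⊤ : ℕ∞) f (Set.Ioo a₁ b₁) ∧ ContDiffOn ℝ (⊤ : ℕ∞) g (Set.Ioo a₂ b₂) ∧
        (∀ x ∈ Set.Ioo a₁ b₁, f x ≠ 0 ∧ deriv f x ≠ 0 ∧ deriv (deriv f) x ≠ 0) ∧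
        (∀ y ∈ Set.Ioo a₂ b₂, g y ≠ 0 ∧ deriv g y ≠ 0 ∧ deriv (deriv g) y ≠ 0) ∧
        (∀ x ∈ Set.Ioo a₁ b₁, ∀ y ∈ Set.Ioo a₂ b₂,
          deriv (deriv f) x * g y * (1 + f x ^ 2 * deriv g y ^ 2)
            - 2 * f x * deriv f x ^ 2 * g y * deriv g y ^ 2
            + f x * deriv (deriv g) y * (1 + deriv f x ^ 2 * g y ^ 2) = 0) := by
  rintro ⟨a₁, b₁, a₂, b₂, f, g, hab1, hab2, hf, hg, hfn, hgn, hE⟩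
  set f' := deriv f with hf'def
  set f'' := deriv f' with hf''def
  set g' := deriv g with hg'def
  set g'' := deriv g' with hg''def
  set I := Set.Ioo a₁ b₁ with hIdef
  set J := Set.Ioo a₂ b₂ with hJdef
  -- smoothness
  have hfC1 : ContDiffOn ℝ (⊤ : ℕ∞) f' I := hf.deriv_of_isOpen isOpen_Ioo (by simp)
  have hfC2 : ContDiffOn ℝ (⊤ : ℕ∞) f'' I := hfC1.deriv_of_isOpen isOpen_Ioo (by simp)
  have hgC1 : ContDiffOn ℝ (⊤ : ℕ∞) g' J := hg.deriv_of_isOpen isOpen_Ioo (by simp)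
  have hgC2 : ContDiffOn ℝ (⊤ : ℕ∞) g'' J := hgC1.deriv_of_isOpen isOpen_Ioo (by simp)
  have hDf : ∀ x ∈ I, HasDerivAt f (f' x) x := fun x hx =>
    ((hf.contDiffAt (isOpen_Ioo.mem_nhds hx)).differentiableAt (by simp)).hasDerivAt
  have hDf' : ∀ x ∈ I, HasDerivAt f' (f'' x) x := fun x hx =>
    ((hfC1.contDiffAt (isOpen_Ioo.mem_nhds hx)).differentiableAt (by simp)).hasDerivAt
  have hDg : ∀ y ∈ J, HasDerivAt g (g' y) y := fun y hy =>
    ((hg.contDiffAt (isOpen_Ioo.mem_nhds hy)).differentiableAt (by simp)).hasDerivAt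
  have hDg' : ∀ y ∈ J, HasDerivAt g' (g'' y) y := fun y hy =>
    ((hgC1.contDiffAt (isOpen_Ioo.mem_nhds hy)).differentiableAt (by simp)).hasDerivAt
  clear_value f' f'' g' g''
  -- base points
  set x₀ := a₁ + (b₁ - a₁) / 3 with hx₀def
  set x₁ := b₁ - (b₁ - a₁) / 3 with hx₁def
  set y₀ := a₂ + (b₂ - a₂) / 3 with hy₀def
  set y₁ := b₂ - (b₂ - a₂) / 3 with hy₁def
  clear_value x₀ x₁ y₀ y₁
  have hx0I : x₀ ∈ I := ⟨by simp only [hx₀def]; linarith, by simp only [hx₀def]; linarith⟩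
  have hx1I : x₁ ∈ I := ⟨by simp only [hx₁def]; linarith, by simp only [hx₁def]; linarith⟩
  have hy0J : y₀ ∈ J := ⟨by simp only [hy₀def]; linarith, by simp only [hy₀def]; linarith⟩
  have hy1J : y₁ ∈ J := ⟨by simp only [hy₁def]; linarith, by simp only [hy₁def]; linarith⟩
  have hx01 : x₀ < x₁ := by simp only [hx₀def, hx₁def]; linarith
  have hy01 : y₀ < y₁ := by simp only [hy₀def, hy₁def]; linarith
  have hsubf : Icc x₀ x₁ ⊆ I := fun t ht =>
    ⟨lt_of_lt_of_le hx0I.1 ht.1, lt_of_le_of_lt ht.2 hx1I.2⟩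
  have hsubg : Icc y₀ y₁ ⊆ J := fun t ht =>
    ⟨lt_of_lt_of_le hy0J.1 ht.1, lt_of_le_of_lt ht.2 hy1J.2⟩
  -- nonconstancy of (f')² and (g')²
  have hfp2ne : f' x₀ ^ 2 ≠ f' x₁ ^ 2 := by
    intro hcon
    obtain ⟨cc, hcc, hder⟩ := exists_deriv_eq_zero hx01
      ((hfC1.continuousOn.mono hsubf).pow 2) hcon
    have hccI : cc ∈ I := hsubf (Ioo_subset_Icc_self hcc)
    have h2 := ((hDf' cc hccI).pow 2).deriv
    rw [hder] at h2
    obtain ⟨k1, k2, k3⟩ := hfn cc hccI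
    have : (2 : ℝ) * f' cc ^ (2 - 1) * f'' cc ≠ 0 := by
      apply mul_ne_zero (mul_ne_zero two_ne_zero (pow_ne_zero _ k2)) k3
    exact this h2.symm
  have hgp2ne : g' y₀ ^ 2 ≠ g' y₁ ^ 2 := by
    intro hcon
    obtain ⟨cc, hcc, hder⟩ := exists_deriv_eq_zero hy01
      ((hgC1.continuousOn.mono hsubg).pow 2) hcon
    have hccJ : cc ∈ J := hsubg (Ioo_subset_Icc_self hcc)
    have h2 := ((hDg' cc hccJ).pow 2).deriv
    rw [hder] at h2
    obtain ⟨k1, k2, k3⟩ := hgn cc hccJ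
    have : (2 : ℝ) * g' cc ^ (2 - 1) * g'' cc ≠ 0 := by
      apply mul_ne_zero (mul_ne_zero two_ne_zero (pow_ne_zero _ k2)) k3
    exact this h2.symm
  -- separated quantities
  set F1 : ℝ → ℝ := fun x => f'' x / (f x * f' x ^ 2) with hF1def
  set F2 : ℝ → ℝ := fun x => f'' x * f x / f' x ^ 2 with hF2def
  set F3 : ℝ → ℝ := fun x => 1 / f' x ^ 2 with hF3def
  set G1 : ℝ → ℝ := fun y => g'' y / (g y * g' y ^ 2) with hG1def
  set G2 : ℝ → ℝ := fun y => g'' y * g y / g' y ^ 2 with hG2def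
  set G3 : ℝ → ℝ := fun y => 1 / g' y ^ 2 with hG3def
  clear_value F1 F2 F3 G1 G2 G3
  have key : ∀ x ∈ I, ∀ y ∈ J,
      F1 x * G3 y + F2 x + F3 x * G1 y + G2 y - 2 = 0 := by
    intro x hx y hy
    obtain ⟨hfx, hfx', hfx''⟩ := hfn x hx
    obtain ⟨hgy, hgy', hgy''⟩ := hgn y hy
    have hE' := hE x hx y hy
    simp only [hF1def, hF2def, hF3def, hG1def, hG2def, hG3def]
    field_simp
    linear_combination hE'
  have hKdiff : ∀ x ∈ I, ∀ y ∈ J,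
      (F1 x - F1 x₀) * (G3 y - G3 y₀) + (F3 x - F3 x₀) * (G1 y - G1 y₀) = 0 := by
    intro x hx y hy
    linear_combination key x hx y hy - key x₀ hx0I y hy - key x hx y₀ hy0J +
      key x₀ hx0I y₀ hy0J
  -- the denominators for separation constants
  have hG3ne : G3 y₁ - G3 y₀ ≠ 0 := by
    simp only [hG3def]
    intro h
    obtain ⟨k1, k2, k3⟩ := hgn y₀ hy0J
    obtain ⟨l1, l2, l3⟩ := hgn y₁ hy1J
    apply hgp2ne
    have h' : 1 / g' y₁ ^ 2 = 1 / g' y₀ ^ 2 := by linarith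
    field_simp at h'
    linarith
  have hF3ne : F3 x₁ - F3 x₀ ≠ 0 := by
    simp only [hF3def]
    intro h
    obtain ⟨k1, k2, k3⟩ := hfn x₀ hx0I
    obtain ⟨l1, l2, l3⟩ := hfn x₁ hx1I
    apply hfp2ne
    have h' : 1 / f' x₁ ^ 2 = 1 / f' x₀ ^ 2 := by linarith
    field_simp at h'
    linarith
  -- separation constants
  set c : ℝ := -((G1 y₁ - G1 y₀) / (G3 y₁ - G3 y₀)) with hcdef
  clear_value c
  have hc1 : ∀ x ∈ I, F1 x - F1 x₀ = c * (F3 x - F3 x₀) := by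
    intro x hx
    have h := hKdiff x hx y₁ hy1J
    rw [hcdef]
    field_simp
    linear_combination h
  have hc2 : ∀ y ∈ J, G1 y - G1 y₀ = -c * (G3 y - G3 y₀) := by
    intro y hy
    have h := hKdiff x₁ hx1I y hy
    have h1 := hc1 x₁ hx1I
    have h2 : (F3 x₁ - F3 x₀) * ((G1 y - G1 y₀) + c * (G3 y - G3 y₀)) = 0 := by
      linear_combination h - (G3 y - G3 y₀) * h1
    rcases mul_eq_zero.mp h2 with h3 | h3
    · exact absurd h3 hF3ne
    · linear_combination h3
  set a : ℝ := F1 x₀ - c * F3 x₀ with hadef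
  set bb : ℝ := G1 y₀ + c * G3 y₀ with hbbdef
  clear_value a bb
  have hF1eq : ∀ x ∈ I, F1 x = c * F3 x + a := by
    intro x hx
    rw [hadef]
    linear_combination hc1 x hx
  have hG1eq : ∀ y ∈ J, G1 y = -c * G3 y + bb := by
    intro y hy
    rw [hbbdef]
    linear_combination hc2 y hy
  have hsep : ∀ x ∈ I, ∀ y ∈ J, a * G3 y + F2 x + bb * F3 x + G2 y - 2 = 0 := by
    intro x hx y hy
    linear_combination key x hx y hy - G3 y * hF1eq x hx - F3 x * hG1eq y hy
  set A : ℝ := F2 x₀ + bb * F3 x₀ with hAdef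
  clear_value A
  have hF2eq : ∀ x ∈ I, F2 x + bb * F3 x = A := by
    intro x hx
    have h1 := hsep x hx y₀ hy0J
    have h2 := hsep x₀ hx0I y₀ hy0J
    rw [hAdef]
    linear_combination h1 - h2
  have hG2eq : ∀ y ∈ J, G2 y + a * G3 y = 2 - A := by
    intro y hy
    have h1 := hsep x₀ hx0I y hy
    rw [hAdef]
    linear_combination h1
  -- polynomial forms
  have hE1 : ∀ x ∈ I, f'' x * f x + bb = A * f' x ^ 2 := by
    intro x hx
    obtain ⟨h1, h2, h3⟩ := hfn x hx
    have h := hF2eq x hx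
    simp only [hF2def, hF3def] at h
    field_simp at h
    have h9 : (f'' x * f x + bb - A * f' x ^ 2) * f' x ^ 2 = 0 := by
      linear_combination f' x ^ 2 * h
    rcases mul_eq_zero.mp h9 with h4 | h4
    · linear_combination h4
    · exact absurd h4 (pow_ne_zero _ h2)
  have hE3 : ∀ x ∈ I, f'' x = c * f x + a * f x * f' x ^ 2 := by
    intro x hx
    obtain ⟨h1, h2, h3⟩ := hfn x hx
    have h := hF1eq x hx
    simp only [hF1def, hF3def] at h
    field_simp at h
    have h9 : (f'' x - (c * f x + a * f x * f' x ^ 2)) * f' x ^ 2 = 0 := by linear_combination f' x ^ 2 * h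
    rcases mul_eq_zero.mp h9 with h4 | h4
    · linear_combination h4
    · exact absurd h4 (pow_ne_zero _ h2)
  have hE2 : ∀ y ∈ J, g'' y * g y + a = (2 - A) * g' y ^ 2 := by
    intro y hy
    obtain ⟨h1, h2, h3⟩ := hgn y hy
    have h := hG2eq y hy
    simp only [hG2def, hG3def] at h
    field_simp at h
    have h9 : (g'' y * g y + a - (2 - A) * g' y ^ 2) * g' y ^ 2 = 0 := by
      linear_combination g' y ^ 2 * h
    rcases mul_eq_zero.mp h9 with h4 | h4
    · linear_combination h4
    · exact absurd h4 (pow_ne_zero _ h2)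
  have hE4 : ∀ y ∈ J, g'' y = -c * g y + bb * g y * g' y ^ 2 := by
    intro y hy
    obtain ⟨h1, h2, h3⟩ := hgn y hy
    have h := hG1eq y hy
    simp only [hG1def, hG3def] at h
    field_simp at h
    have h9 : (g'' y - (-c * g y + bb * g y * g' y ^ 2)) * g' y ^ 2 = 0 := by linear_combination g' y ^ 2 * h
    rcases mul_eq_zero.mp h9 with h4 | h4
    · linear_combination h4
    · exact absurd h4 (pow_ne_zero _ h2)
  -- the f-side first integral and its derivative
  have hPhi : ∀ x ∈ I, c * f x ^ 2 + a * (f x ^ 2 * f' x ^ 2) + bb - A * f' x ^ 2 = 0 := by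
    intro x hx
    linear_combination hE1 x hx - f x * hE3 x hx
  have hPhi' : ∀ x ∈ I,
      c * f x + a * (f x * f' x ^ 2 + f x ^ 2 * f'' x) - A * f'' x = 0 := by
    intro x hx
    obtain ⟨h1, h2, h3⟩ := hfn x hx
    have hhas : HasDerivAt (fun z => c * f z ^ 2 + a * (f z ^ 2 * f' z ^ 2) + bb - A * f' z ^ 2)
        (2 * f' x * (c * f x + a * (f x * f' x ^ 2 + f x ^ 2 * f'' x) - A * f'' x)) x := by
      have h := (((((hDf x hx).pow 2).const_mul c).add
        ((((hDf x hx).pow 2).mul ((hDf' x hx).pow 2)).const_mul a)).add_const bb).sub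
        (((hDf' x hx).pow 2).const_mul A)
      exact h.congr_deriv (by simp only [Pi.pow_apply, Pi.mul_apply]; ring)
    have hev : (fun z => c * f z ^ 2 + a * (f z ^ 2 * f' z ^ 2) + bb - A * f' z ^ 2)
        =ᶠ[nhds x] fun _ => (0 : ℝ) :=
      eventuallyEq_of_mem (isOpen_Ioo.mem_nhds hx) (fun z hz => hPhi z hz)
    have hd0 : deriv (fun z => c * f z ^ 2 + a * (f z ^ 2 * f' z ^ 2) + bb - A * f' z ^ 2) x
        = 0 := by rw [hev.deriv_eq]; exact deriv_const x 0
    have hval := hhas.deriv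
    rw [hd0] at hval
    have := mul_eq_zero.mp hval.symm
    rcases this with h4 | h4
    · exact absurd h4 (mul_ne_zero two_ne_zero h2)
    · exact h4
  have hE7 : ∀ x ∈ I, a * f' x ^ 2 = c * A + a * bb - c := by
    intro x hx
    obtain ⟨h1, h2, h3⟩ := hfn x hx
    have ht : f x * (a * f' x ^ 2 - (c * A + a * bb - c)) = 0 := by
      linear_combination hPhi' x hx - (a * f x ^ 2 - A) * hE3 x hx - a * f x * hPhi x hx
    rcases mul_eq_zero.mp ht with h4 | h4
    · exact absurd h4 h1
    · linear_combination h4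
  -- a = 0
  have ha : a = 0 := by
    by_contra ha
    have hev : (fun z => a * f' z ^ 2) =ᶠ[nhds x₀] fun _ => c * A + a * bb - c :=
      eventuallyEq_of_mem (isOpen_Ioo.mem_nhds hx0I) (fun z hz => hE7 z hz)
    have hd0 : deriv (fun z => a * f' z ^ 2) x₀ = 0 := by
      rw [hev.deriv_eq]; exact deriv_const x₀ _
    have h2 := (((hDf' x₀ hx0I).pow 2).const_mul a).deriv
    simp only [Pi.pow_apply] at h2
    rw [hd0] at h2
    obtain ⟨k1, k2, k3⟩ := hfn x₀ hx0I
    have : a * ((2 : ℝ) * f' x₀ ^ (2 - 1) * f'' x₀) ≠ 0 :=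
      mul_ne_zero ha (mul_ne_zero (mul_ne_zero two_ne_zero (pow_ne_zero _ k2)) k3)
    exact this h2.symm
  -- c ≠ 0 and A = 1
  obtain ⟨k1, k2, k3⟩ := hfn x₀ hx0I
  have hcne : c ≠ 0 := by
    intro hc0
    have h := hE3 x₀ hx0I
    rw [ha, hc0] at h
    simp at h
    exact k3 h
  have hA1 : A = 1 := by
    have h := hE7 x₀ hx0I
    rw [ha] at h
    have h' : c * (A - 1) = 0 := by linear_combination -h
    rcases mul_eq_zero.mp h' with h4 | h4
    · exact absurd h4 hcne
    · linarith
  -- g-side first integral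
  have hTheta : ∀ y ∈ J, bb * (g y ^ 2 * g' y ^ 2) - c * g y ^ 2 - g' y ^ 2 = 0 := by
    intro y hy
    have h2 := hE2 y hy
    rw [ha, hA1] at h2
    linear_combination h2 - g y * hE4 y hy
  have hTheta' : ∀ y ∈ J,
      bb * (g y * g' y ^ 2 + g y ^ 2 * g'' y) - c * g y - g'' y = 0 := by
    intro y hy
    obtain ⟨h1, h2, h3⟩ := hgn y hy
    have hhas : HasDerivAt (fun z => bb * (g z ^ 2 * g' z ^ 2) - c * g z ^ 2 - g' z ^ 2)
        (2 * g' y * (bb * (g y * g' y ^ 2 + g y ^ 2 * g'' y) - c * g y - g'' y)) y := by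
      have h := (((((hDg y hy).pow 2).mul ((hDg' y hy).pow 2)).const_mul bb).sub
        (((hDg y hy).pow 2).const_mul c)).sub ((hDg' y hy).pow 2)
      exact h.congr_deriv (by simp only [Pi.pow_apply, Pi.mul_apply]; ring)
    have hev : (fun z => bb * (g z ^ 2 * g' z ^ 2) - c * g z ^ 2 - g' z ^ 2)
        =ᶠ[nhds y] fun _ => (0 : ℝ) :=
      eventuallyEq_of_mem (isOpen_Ioo.mem_nhds hy) (fun z hz => hTheta z hz)
    have hd0 : deriv (fun z => bb * (g z ^ 2 * g' z ^ 2) - c * g z ^ 2 - g' z ^ 2) y = 0 := by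
      rw [hev.deriv_eq]; exact deriv_const y 0
    have hval := hhas.deriv
    rw [hd0] at hval
    rcases mul_eq_zero.mp hval.symm with h4 | h4
    · exact absurd h4 (mul_ne_zero two_ne_zero h2)
    · exact h4
  -- bb = 0
  obtain ⟨l1, l2, l3⟩ := hgn y₀ hy0J
  have hbb : bb = 0 := by
    have hth := hTheta y₀ hy0J
    have hth' := hTheta' y₀ hy0J
    have h2 := hE2 y₀ hy0J
    rw [ha, hA1] at h2
    have hz : bb * (g y₀ ^ 2 * g' y₀ ^ 2) = 0 := by
      linear_combination g y₀ * hth' - bb * g y₀ ^ 2 * h2 - hth + h2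
    rcases mul_eq_zero.mp hz with h4 | h4
    · exact h4
    · exact absurd h4 (mul_ne_zero (pow_ne_zero _ l1) (pow_ne_zero _ l2))
  -- final contradiction
  have hcf : c * f x₀ ^ 2 = f' x₀ ^ 2 := by
    have h := hPhi x₀ hx0I
    rw [ha, hA1, hbb] at h
    linear_combination h
  have hcg : c * g y₀ ^ 2 = -(g' y₀ ^ 2) := by
    have h := hTheta y₀ hy0J
    rw [hbb] at h
    linear_combination -h
  have p1 : 0 < f x₀ ^ 2 := pow_two_pos_of_ne_zero k1
  have p2 : 0 < f' x₀ ^ 2 := pow_two_pos_of_ne_zero k2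
  have p3 : 0 < g y₀ ^ 2 := pow_two_pos_of_ne_zero l1
  have p4 : 0 < g' y₀ ^ 2 := pow_two_pos_of_ne_zero l2
  nlinarith [mul_pos p2 p3, mul_pos p4 p1, hcf, hcg]
end

section
/- Let f : I → ℝ and g : J → ℝ be smooth functions on open intervals such that f, f', f'', g, g', g'' all vanish nowhere, and suppose f(x)·f''(x)·g(y)·g''(y) = f'(x)²·g'(y)² for all (x,y) ∈ I × J. Then there exists a constant a ∈ ℝ, a ≠ 0, such that f(x)·f''(x) = a·f'(x)² for all x ∈ I and a·g(y)·g''(y) = g'(y)² for all y ∈ J. -/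
/-- If `f, f', f'', g, g', g''` are nowhere vanishing and
`f f'' g g'' = f'² g'²`, then the variables separate: there is a nonzero constant `a` with
`f f'' = a f'²` and `a g g'' = g'²`. -/
theorem flat_homothetical_separation
    (a₁ b₁ a₂ b₂ : ℝ) (h₁ : a₁ < b₁) (h₂ : a₂ < b₂)
    (f g : ℝ → ℝ)
    (hf : ContDiffOn ℝ (⊤ : ℕ∞) f (Set.Ioo a₁ b₁))
    (hg : ContDiffOn ℝ (⊤ : ℕ∞) g (Set.Ioo a₂ b₂))
    (hfne : ∀ x ∈ Set.Ioo a₁ b₁, f x ≠ 0 ∧ deriv f x ≠ 0 ∧ deriv (deriv f) x ≠ 0)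
    (hgne : ∀ y ∈ Set.Ioo a₂ b₂, g y ≠ 0 ∧ deriv g y ≠ 0 ∧ deriv (deriv g) y ≠ 0)
    (hflat : ∀ x ∈ Set.Ioo a₁ b₁, ∀ y ∈ Set.Ioo a₂ b₂,
      f x * deriv (deriv f) x * g y * deriv (deriv g) y = deriv f x ^ 2 * deriv g y ^ 2) :
    ∃ a : ℝ, a ≠ 0 ∧
      (∀ x ∈ Set.Ioo a₁ b₁, f x * deriv (deriv f) x = a * deriv f x ^ 2) ∧
      (∀ y ∈ Set.Ioo a₂ b₂, a * g y * deriv (deriv g) y = deriv g y ^ 2) := by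
  set x₀ := (a₁ + b₁) / 2 with hx₀
  set y₀ := (a₂ + b₂) / 2 with hy₀
  have hx₀m : x₀ ∈ Set.Ioo a₁ b₁ := ⟨by simp [hx₀]; linarith, by simp [hx₀]; linarith⟩
  have hy₀m : y₀ ∈ Set.Ioo a₂ b₂ := ⟨by simp [hy₀]; linarith, by simp [hy₀]; linarith⟩
  obtain ⟨hg0, hg1, hg2⟩ := hgne y₀ hy₀m
  obtain ⟨hf0, hf1, hf2⟩ := hfne x₀ hx₀m
  refine ⟨deriv g y₀ ^ 2 / (g y₀ * deriv (deriv g) y₀), ?_, ?_, ?_⟩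
  · exact div_ne_zero (pow_ne_zero 2 hg1) (mul_ne_zero hg0 hg2)
  · intro x hx
    have h := hflat x hx y₀ hy₀m
    field_simp
    linarith [h]
  · intro y hy
    obtain ⟨hG0, hG1, hG2⟩ := hgne y hy
    have h := hflat x₀ hx₀m y hy
    have h0 := hflat x₀ hx₀m y₀ hy₀m
    have hfa : f x₀ * deriv (deriv f) x₀ = deriv g y₀ ^ 2 / (g y₀ * deriv (deriv g) y₀) * deriv f x₀ ^ 2 := by
      field_simp
      linarith [h0]
    rw [hfa] at h
    have hfp : deriv f x₀ ^ 2 ≠ 0 := pow_ne_zero 2 hf1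
    field_simp at h ⊢
    have key : deriv f x₀ ^ 2 * (deriv g y₀ ^ 2 * g y * deriv (deriv g) y) =
        deriv f x₀ ^ 2 * (deriv g y ^ 2 * (g y₀ * deriv (deriv g) y₀)) := by
      rw [h]; ring
    have hc := mul_left_cancel₀ hfp key
    linarith [hc]
end

section
/- Let f : I → ℝ and g : J → ℝ be smooth positive functions on open intervals satisfying f(x)·f''(x)·g(y)·g''(y) = f'(x)²·g'(y)² for all (x,y) ∈ I × J (i.e. the homothetical graph z = f(x)g(y) has Gauss curvature K = 0). Then every point of I × J has an open subrectangle I' × J' on which one of the following holds: (a) f is constant on I' (the surface is a cylindrical surface with rulings parallel to the x-axis); (b) g is constant on J' (cylindrical surface with rulings parallel to the y-axis); (c) there exist p, q > 0 and b, c ≠ 0 with f(x) = p·e^{bx} and g(y) = q·e^{cy}; or (d) there exist a ∉ {0,1}, b, c ≠ 0, and p, q ∈ ℝ with (1−a)bx + p > 0 and ((a−1)/a)cy + q > 0 on I' × J', such that f(x) = ((1−a)bx + p)^{1/(1−a)} and g(y) = (((a−1)/a)cy + q)^{a/(a−1)}. -/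
open Set Real


lemma constOn_of_hasDerivAt_zero {s : Set ℝ} (hso : IsOpen s) (hsc : Convex ℝ s)
    {F : ℝ → ℝ} (h : ∀ x ∈ s, HasDerivAt F 0 x) :
    ∀ x ∈ s, ∀ y ∈ s, F x = F y := by
  intro x hx y hy
  refine hsc.is_const_of_fderivWithin_eq_zero (𝕜 := ℝ) (f := F) ?_ ?_ hx hy
  · exact fun z hz => (h z hz).differentiableAt.differentiableWithinAt
  · intro z hz
    rw [fderivWithin_of_isOpen hso hz, (h z hz).hasFDerivAt.fderiv]
    ext t; simp

lemma affineOn_of_hasDerivAt_const {s : Set ℝ} (hso : IsOpen s) (hsc : Convex ℝ s)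
    {F : ℝ → ℝ} {m : ℝ} (h : ∀ x ∈ s, HasDerivAt F m x) {x₁ : ℝ} (hx₁ : x₁ ∈ s) :
    ∀ x ∈ s, F x = m * x + (F x₁ - m * x₁) := by
  have key : ∀ x ∈ s, HasDerivAt (fun x => F x - m * x) 0 x := by
    intro x hx
    have := (h x hx).sub ((hasDerivAt_id x).const_mul m)
    exact this.congr_deriv (by ring)
  intro x hx
  have := constOn_of_hasDerivAt_zero hso hsc key x hx x₁ hx₁
  linarith [this]

/-- From `f·f'' = λ·f'²` deduce `f' = C·f^λ`. -/
lemma ode_step1 {s : Set ℝ} (hso : IsOpen s) (hsc : Convex ℝ s)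
    {f : ℝ → ℝ} {lam : ℝ}
    (hf1 : ∀ x ∈ s, HasDerivAt f (deriv f x) x)
    (hf2 : ∀ x ∈ s, HasDerivAt (deriv f) (deriv (deriv f) x) x)
    (hpos : ∀ x ∈ s, 0 < f x)
    (hode : ∀ x ∈ s, f x * deriv (deriv f) x = lam * (deriv f x) ^ 2)
    {x₁ : ℝ} (hx₁ : x₁ ∈ s) :
    ∀ x ∈ s, deriv f x = (deriv f x₁ * f x₁ ^ (-lam)) * f x ^ lam := by
  have key : ∀ x ∈ s, HasDerivAt (fun x => deriv f x * f x ^ (-lam)) 0 x := by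
    intro x hx
    have hfx := hpos x hx
    have h1 : HasDerivAt (fun x => f x ^ (-lam))
        (deriv f x * (-lam) * f x ^ (-lam - 1)) x :=
      (hf1 x hx).rpow_const (Or.inl hfx.ne')
    have h2 := (hf2 x hx).mul h1
    refine h2.congr_deriv ?_
    have hode' := hode x hx
    have e1 : f x ^ (-lam) = f x ^ (-lam - 1) * f x := by
      rw [show (-lam : ℝ) = (-lam - 1) + 1 by ring, Real.rpow_add hfx, Real.rpow_one]
      norm_num
    have hdd : deriv (deriv f) x = lam * (deriv f x) ^ 2 / f x := by
      field_simp
      linarith [hode']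
    rw [hdd, e1]
    field_simp
    ring
  intro x hx
  have hc := constOn_of_hasDerivAt_zero hso hsc key x hx x₁ hx₁
  have hfx := hpos x hx
  have e2 : f x ^ (-lam) * f x ^ lam = 1 := by
    rw [← Real.rpow_add hfx]; simp
  calc deriv f x = deriv f x * (f x ^ (-lam) * f x ^ lam) := by rw [e2]; ring
    _ = (deriv f x₁ * f x₁ ^ (-lam)) * f x ^ lam := by rw [← mul_assoc, hc]

/-- From `f' = C·f` deduce `f = p·e^{Cx}`. -/
lemma ode_exp {s : Set ℝ} (hso : IsOpen s) (hsc : Convex ℝ s)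
    {f : ℝ → ℝ} {C : ℝ}
    (hf1 : ∀ x ∈ s, HasDerivAt f (deriv f x) x)
    (hpos : ∀ x ∈ s, 0 < f x)
    (hC : ∀ x ∈ s, deriv f x = C * f x)
    {x₁ : ℝ} (hx₁ : x₁ ∈ s) :
    ∀ x ∈ s, f x = (f x₁ * Real.exp (-(C * x₁))) * Real.exp (C * x) := by
  have key : ∀ x ∈ s, HasDerivAt (fun x => Real.log (f x)) C x := by
    intro x hx
    have := (hf1 x hx).log (hpos x hx).ne'
    rw [hC x hx] at this
    convert this using 1
    field_simp [(hpos x hx).ne']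
  intro x hx
  have := affineOn_of_hasDerivAt_const hso hsc key hx₁ x hx
  have hx' := Real.exp_log (hpos x hx)
  have hx₁' := Real.exp_log (hpos x₁ hx₁)
  calc f x = Real.exp (Real.log (f x)) := hx'.symm
    _ = Real.exp (C * x + (Real.log (f x₁) - C * x₁)) := by rw [this]
    _ = (f x₁ * Real.exp (-(C * x₁))) * Real.exp (C * x) := by
        rw [Real.exp_add, Real.exp_sub, hx₁']; rw [Real.exp_neg]; ring

/-- From `f' = C·f^λ`, `λ ≠ 1`, deduce `f^{1-λ}` affine and `f` a power function. -/
lemma ode_pow {s : Set ℝ} (hso : IsOpen s) (hsc : Convex ℝ s)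
    {f : ℝ → ℝ} {C lam : ℝ} (hlam : lam ≠ 1)
    (hf1 : ∀ x ∈ s, HasDerivAt f (deriv f x) x)
    (hpos : ∀ x ∈ s, 0 < f x)
    (hC : ∀ x ∈ s, deriv f x = C * f x ^ lam)
    {x₁ : ℝ} (hx₁ : x₁ ∈ s) :
    ∀ x ∈ s, 0 < (1 - lam) * C * x + (f x₁ ^ (1 - lam) - (1 - lam) * C * x₁) ∧
      f x = ((1 - lam) * C * x + (f x₁ ^ (1 - lam) - (1 - lam) * C * x₁)) ^ (1 / (1 - lam)) := by
  have key : ∀ x ∈ s, HasDerivAt (fun x => f x ^ (1 - lam)) ((1 - lam) * C) x := by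
    intro x hx
    have hfx := hpos x hx
    have h1 := (hf1 x hx).rpow_const (p := 1 - lam) (Or.inl hfx.ne')
    rw [hC x hx] at h1
    convert h1 using 1
    have e1 : f x ^ lam * f x ^ (1 - lam - 1) = 1 := by
      rw [← Real.rpow_add hfx]; norm_num
    calc (1 - lam) * C = C * (f x ^ lam * f x ^ (1 - lam - 1)) * (1 - lam) := by
          rw [e1]; ring
      _ = C * f x ^ lam * (1 - lam) * f x ^ (1 - lam - 1) := by ring
  intro x hx
  have haff := affineOn_of_hasDerivAt_const hso hsc key hx₁ x hx
  have hfx := hpos x hx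
  have heq : f x ^ (1 - lam) = (1 - lam) * C * x + (f x₁ ^ (1 - lam) - (1 - lam) * C * x₁) := by
    simpa using haff
  have hbpos : 0 < (1 - lam) * C * x + (f x₁ ^ (1 - lam) - (1 - lam) * C * x₁) := by
    rw [← heq]; exact Real.rpow_pos_of_pos hfx _
  refine ⟨hbpos, ?_⟩
  have h1ml : (1 - lam) ≠ 0 := sub_ne_zero.mpr (fun h => hlam (by linarith))
  rw [← heq, ← Real.rpow_mul hfx.le, mul_one_div, div_self h1ml, Real.rpow_one]


/-- Classification of flat (`K = 0`) homothetical graphs `z = f(x)·g(y)` with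
`f, g` positive: locally, `f` is constant, or `g` is constant, or both are exponentials,
or they are the power functions `f = ((1−a)bx+p)^{1/(1−a)}`, `g = (((a−1)/a)cy+q)^{a/(a−1)}`. -/
theorem flat_homothetical_classification
    (a₁ b₁ a₂ b₂ : ℝ) (h₁ : a₁ < b₁) (h₂ : a₂ < b₂)
    (f g : ℝ → ℝ)
    (hf : ContDiffOn ℝ (⊤ : ℕ∞) f (Set.Ioo a₁ b₁))
    (hg : ContDiffOn ℝ (⊤ : ℕ∞) g (Set.Ioo a₂ b₂))
    (hfpos : ∀ x ∈ Set.Ioo a₁ b₁, 0 < f x)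
    (hgpos : ∀ y ∈ Set.Ioo a₂ b₂, 0 < g y)
    (hflat : ∀ x ∈ Set.Ioo a₁ b₁, ∀ y ∈ Set.Ioo a₂ b₂,
      f x * deriv (deriv f) x * g y * deriv (deriv g) y = deriv f x ^ 2 * deriv g y ^ 2) :
    ∀ x₀ ∈ Set.Ioo a₁ b₁, ∀ y₀ ∈ Set.Ioo a₂ b₂,
      ∃ c₁ d₁ c₂ d₂ : ℝ,
        x₀ ∈ Set.Ioo c₁ d₁ ∧ Set.Ioo c₁ d₁ ⊆ Set.Ioo a₁ b₁ ∧
        y₀ ∈ Set.Ioo c₂ d₂ ∧ Set.Ioo c₂ d₂ ⊆ Set.Ioo a₂ b₂ ∧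
        ((∃ k : ℝ, ∀ x ∈ Set.Ioo c₁ d₁, f x = k) ∨
         (∃ k : ℝ, ∀ y ∈ Set.Ioo c₂ d₂, g y = k) ∨
         (∃ p q b c : ℝ, 0 < p ∧ 0 < q ∧ b ≠ 0 ∧ c ≠ 0 ∧
            (∀ x ∈ Set.Ioo c₁ d₁, f x = p * Real.exp (b * x)) ∧
            (∀ y ∈ Set.Ioo c₂ d₂, g y = q * Real.exp (c * y))) ∨
         (∃ a b c p q : ℝ, a ≠ 0 ∧ a ≠ 1 ∧ b ≠ 0 ∧ c ≠ 0 ∧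
            (∀ x ∈ Set.Ioo c₁ d₁, 0 < (1 - a) * b * x + p ∧
              f x = ((1 - a) * b * x + p) ^ ((1 : ℝ) / (1 - a))) ∧
            (∀ y ∈ Set.Ioo c₂ d₂, 0 < ((a - 1) / a) * c * y + q ∧
              g y = (((a - 1) / a) * c * y + q) ^ (a / (a - 1))))) := by
  intro x₀ hx₀ y₀ hy₀
  have hIo : IsOpen (Set.Ioo a₁ b₁) := isOpen_Ioo
  have hIc : Convex ℝ (Set.Ioo a₁ b₁) := convex_Ioo _ _
  have hJo : IsOpen (Set.Ioo a₂ b₂) := isOpen_Ioo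
  have hJc : Convex ℝ (Set.Ioo a₂ b₂) := convex_Ioo _ _
  have hf1 : ∀ x ∈ Set.Ioo a₁ b₁, HasDerivAt f (deriv f x) x := fun x hx =>
    ((hf.contDiffAt (hIo.mem_nhds hx)).differentiableAt (by simp)).hasDerivAt
  have hg1 : ∀ y ∈ Set.Ioo a₂ b₂, HasDerivAt g (deriv g y) y := fun y hy =>
    ((hg.contDiffAt (hJo.mem_nhds hy)).differentiableAt (by simp)).hasDerivAt
  have hfd : ContDiffOn ℝ (⊤ : ℕ∞) (deriv f) (Set.Ioo a₁ b₁) := hf.deriv_of_isOpen hIo (by simp)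
  have hgd : ContDiffOn ℝ (⊤ : ℕ∞) (deriv g) (Set.Ioo a₂ b₂) := hg.deriv_of_isOpen hJo (by simp)
  have hf2 : ∀ x ∈ Set.Ioo a₁ b₁, HasDerivAt (deriv f) (deriv (deriv f) x) x := fun x hx =>
    ((hfd.contDiffAt (hIo.mem_nhds hx)).differentiableAt (by simp)).hasDerivAt
  have hg2 : ∀ y ∈ Set.Ioo a₂ b₂, HasDerivAt (deriv g) (deriv (deriv g) y) y := fun y hy =>
    ((hgd.contDiffAt (hJo.mem_nhds hy)).differentiableAt (by simp)).hasDerivAt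
  refine ⟨a₁, b₁, a₂, b₂, hx₀, subset_rfl, hy₀, subset_rfl, ?_⟩
  by_cases hfc : ∀ x ∈ Set.Ioo a₁ b₁, deriv f x = 0
  · left
    refine ⟨f x₀, fun x hx => ?_⟩
    exact constOn_of_hasDerivAt_zero hIo hIc
      (fun z hz => hfc z hz ▸ hf1 z hz) x hx x₀ hx₀
  by_cases hgc : ∀ y ∈ Set.Ioo a₂ b₂, deriv g y = 0
  · right; left
    refine ⟨g y₀, fun y hy => ?_⟩
    exact constOn_of_hasDerivAt_zero hJo hJc
      (fun z hz => hgc z hz ▸ hg1 z hz) y hy y₀ hy₀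
  push_neg at hfc hgc
  obtain ⟨x₁, hx₁, hfx₁⟩ := hfc
  obtain ⟨y₁, hy₁, hgy₁⟩ := hgc
  have hkey := hflat x₁ hx₁ y₁ hy₁
  have hne : deriv f x₁ ^ 2 * deriv g y₁ ^ 2 ≠ 0 := by positivity
  have hFne : f x₁ * deriv (deriv f) x₁ ≠ 0 := by
    intro h
    apply hne
    rw [← hkey]
    rw [show f x₁ * deriv (deriv f) x₁ * g y₁ * deriv (deriv g) y₁
      = (f x₁ * deriv (deriv f) x₁) * (g y₁ * deriv (deriv g) y₁) by ring, h, zero_mul]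
  have hGne : g y₁ * deriv (deriv g) y₁ ≠ 0 := by
    intro h
    apply hne
    rw [← hkey]
    rw [show f x₁ * deriv (deriv f) x₁ * g y₁ * deriv (deriv g) y₁
      = (f x₁ * deriv (deriv f) x₁) * (g y₁ * deriv (deriv g) y₁) by ring, h, mul_zero]
  set lam := deriv g y₁ ^ 2 / (g y₁ * deriv (deriv g) y₁) with hlam_def
  set mu := deriv f x₁ ^ 2 / (f x₁ * deriv (deriv f) x₁) with hmu_def
  have hlamne : lam ≠ 0 := div_ne_zero (pow_ne_zero _ hgy₁) hGne
  have hmune : mu ≠ 0 := div_ne_zero (pow_ne_zero _ hfx₁) hFne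
  have hlm : lam * mu = 1 := by
    rw [hlam_def, hmu_def, div_mul_div_comm,
      div_eq_one_iff_eq (mul_ne_zero hGne hFne)]
    linear_combination -hkey
  have hodef : ∀ x ∈ Set.Ioo a₁ b₁, f x * deriv (deriv f) x = lam * (deriv f x) ^ 2 := by
    intro x hx
    rw [hlam_def, div_mul_eq_mul_div, eq_div_iff hGne]
    linear_combination hflat x hx y₁ hy₁
  have hodeg : ∀ y ∈ Set.Ioo a₂ b₂, g y * deriv (deriv g) y = mu * (deriv g y) ^ 2 := by
    intro y hy
    rw [hmu_def, div_mul_eq_mul_div, eq_div_iff hFne]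
    linear_combination hflat x₁ hx₁ y hy
  have hCf := ode_step1 hIo hIc hf1 hf2 hfpos hodef hx₁
  have hDg := ode_step1 hJo hJc hg1 hg2 hgpos hodeg hy₁
  set C := deriv f x₁ * f x₁ ^ (-lam) with hC_def
  set D := deriv g y₁ * g y₁ ^ (-mu) with hD_def
  have hCne : C ≠ 0 := mul_ne_zero hfx₁ (Real.rpow_pos_of_pos (hfpos x₁ hx₁) _).ne'
  have hDne : D ≠ 0 := mul_ne_zero hgy₁ (Real.rpow_pos_of_pos (hgpos y₁ hy₁) _).ne'
  by_cases hl1 : lam = 1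
  · have hm1 : mu = 1 := by rw [hl1, one_mul] at hlm; exact hlm
    right; right; left
    refine ⟨f x₁ * Real.exp (-(C * x₁)), g y₁ * Real.exp (-(D * y₁)), C, D,
      mul_pos (hfpos x₁ hx₁) (Real.exp_pos _), mul_pos (hgpos y₁ hy₁) (Real.exp_pos _), hCne, hDne, ?_, ?_⟩
    · exact ode_exp hIo hIc hf1 hfpos
        (fun x hx => by rw [hCf x hx, hl1, Real.rpow_one]) hx₁
    · exact ode_exp hJo hJc hg1 hgpos
        (fun y hy => by rw [hDg y hy, hm1, Real.rpow_one]) hy₁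
  · have hm1 : mu ≠ 1 := by
      intro h; rw [h, mul_one] at hlm; exact hl1 hlm
    right; right; right
    have hpf := ode_pow hIo hIc hl1 hf1 hfpos hCf hx₁
    have hpg := ode_pow hJo hJc hm1 hg1 hgpos hDg hy₁
    have e1 : 1 - mu = (lam - 1) / lam := by
      field_simp
      linear_combination -hlm
    have e2 : (1 : ℝ) / (1 - mu) = lam / (lam - 1) := by
      rw [e1, one_div_div]
    refine ⟨lam, C, D,
      f x₁ ^ (1 - lam) - (1 - lam) * C * x₁,
      g y₁ ^ ((lam - 1) / lam) - ((lam - 1) / lam) * D * y₁,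
      hlamne, hl1, hCne, hDne, hpf, ?_⟩
    intro y hy
    obtain ⟨h1, h2⟩ := hpg y hy
    rw [e1] at h1 h2
    rw [one_div_div] at h2
    exact ⟨h1, h2⟩
end

section
/- Let K ∈ ℝ with K ≠ 0. Then there do not exist smooth functions f : I → ℝ and g : J → ℝ on open intervals such that f(x)·g(y)·f''(x)·g''(y) − f'(x)²·g'(y)² = K · ( 1 + f'(x)²·g(y)² + f(x)²·g'(y)² )² for all (x,y) ∈ I × J. In other words, there is no homothetical surface in Euclidean space with nonzero constant Gauss curvature. -/
set_option maxHeartbeats 1000000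

open Set Filter



private lemma poly4_zero {s : Set ℝ} (hs : s.Infinite) {a0 a1 a2 a3 a4 : ℝ}
    (h : ∀ v ∈ s, a0 + a1*v + a2*v^2 + a3*v^3 + a4*v^4 = 0) :
    a0 = 0 ∧ a1 = 0 ∧ a2 = 0 ∧ a3 = 0 ∧ a4 = 0 := by
  classical
  set p : Polynomial ℝ := Polynomial.C a0 * Polynomial.X ^ 0 + Polynomial.C a1 * Polynomial.X ^ 1
      + Polynomial.C a2 * Polynomial.X ^ 2 + Polynomial.C a3 * Polynomial.X ^ 3
      + Polynomial.C a4 * Polynomial.X ^ 4 with hpdef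
  have hroot : s ⊆ {x : ℝ | p.IsRoot x} := by
    intro v hv
    simp only [mem_setOf_eq, Polynomial.IsRoot, hpdef, Polynomial.eval_add, Polynomial.eval_mul,
      Polynomial.eval_pow, Polynomial.eval_C, Polynomial.eval_X]
    have := h v hv
    ring_nf
    ring_nf at this
    linarith
  have hp0 : p = 0 := Polynomial.eq_zero_of_infinite_isRoot _ (hs.mono hroot)
  have hc : ∀ i : ℕ, p.coeff i = 0 := by intro i; rw [hp0]; simp
  have h0 := hc 0
  have h1 := hc 1
  have h2 := hc 2
  have h3 := hc 3
  have h4 := hc 4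
  simp only [hpdef, Polynomial.coeff_add, Polynomial.coeff_C_mul, Polynomial.coeff_X_pow] at h0 h1 h2 h3 h4
  norm_num at h0 h1 h2 h3 h4
  exact ⟨h0, h1, h2, h3, h4⟩

private lemma poly2_zero {s : Set ℝ} (hs : s.Infinite) {a0 a1 a2 : ℝ}
    (h : ∀ v ∈ s, a0 + a1*v + a2*v^2 = 0) :
    a0 = 0 ∧ a1 = 0 ∧ a2 = 0 := by
  have := poly4_zero hs (a0 := a0) (a1 := a1) (a2 := a2) (a3 := 0) (a4 := 0)
    (fun v hv => by linear_combination h v hv)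
  exact ⟨this.1, this.2.1, this.2.2.1⟩

private lemma deriv_val_eq_zero_of_const {u : ℝ → ℝ} {α β x d r : ℝ}
    (h : ∀ t ∈ Ioo α β, u t = r) (hx : x ∈ Ioo α β) (hd : HasDerivAt u d x) : d = 0 := by
  have h1 : (fun _ : ℝ => r) =ᶠ[nhds x] u :=
    eventually_of_mem (Ioo_mem_nhds hx.1 hx.2) (fun t ht => (h t ht).symm)
  have h2 : HasDerivAt (fun _ : ℝ => r) d x := hd.congr_of_eventuallyEq h1.symm.symm
  exact h2.unique (hasDerivAt_const x r)

private lemma exists_pair_ne_of_hasDerivAt {u u' : ℝ → ℝ} {α β x₀ : ℝ}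
    (h : ∀ t ∈ Ioo α β, HasDerivAt u (u' t) t) (hx₀ : x₀ ∈ Ioo α β) (h0 : u' x₀ ≠ 0) :
    ∃ x₁ ∈ Ioo α β, ∃ x₂ ∈ Ioo α β, u x₁ ≠ u x₂ := by
  by_contra hc
  push_neg at hc
  exact h0 (deriv_val_eq_zero_of_const (fun t ht => hc t ht x₀ hx₀) hx₀ (h x₀ hx₀))

private lemma image_infinite {u : ℝ → ℝ} {α β y₂ y₃ : ℝ} (hc : ContinuousOn u (Ioo α β))
    (h2 : y₂ ∈ Ioo α β) (h3 : y₃ ∈ Ioo α β) (hne : u y₂ ≠ u y₃) :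
    (u '' Ioo α β).Infinite := by
  have hsub : uIcc y₂ y₃ ⊆ Ioo α β := ordConnected_Ioo.uIcc_subset h2 h3
  have him : uIcc (u y₂) (u y₃) ⊆ u '' uIcc y₂ y₃ := intermediate_value_uIcc (hc.mono hsub)
  have hinf : (uIcc (u y₂) (u y₃)).Infinite := by
    rw [← Icc_min_max]
    exact Set.Icc_infinite (min_lt_max.mpr hne)
  exact hinf.mono (him.trans (image_mono hsub))

private lemma shrink_Ioo {u : ℝ → ℝ} {α β x₀ : ℝ} (hc : ContinuousOn u (Ioo α β))
    (hx₀ : x₀ ∈ Ioo α β) (h0 : u x₀ ≠ 0) :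
    ∃ α' β', α' < β' ∧ Ioo α' β' ⊆ Ioo α β ∧ ∀ x ∈ Ioo α' β', u x ≠ 0 := by
  have hca : ContinuousAt u x₀ := hc.continuousAt (Ioo_mem_nhds hx₀.1 hx₀.2)
  have h1 : ∀ᶠ x in nhds x₀, u x ≠ 0 := hca.eventually_ne h0
  have h2 : ∀ᶠ x in nhds x₀, x ∈ Ioo α β :=
    eventually_of_mem (Ioo_mem_nhds hx₀.1 hx₀.2) (fun _ h => h)
  obtain ⟨l, r, hmem, hsub⟩ := mem_nhds_iff_exists_Ioo_subset.1 (h1.and h2)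
  exact ⟨l, r, lt_trans hmem.1 hmem.2, fun x hx => (hsub hx).2, fun x hx => (hsub hx).1⟩

private lemma smooth_package {f : ℝ → ℝ} {a b : ℝ} (hf : ContDiffOn ℝ (⊤ : ℕ∞) f (Ioo a b)) :
    (∀ x ∈ Ioo a b, HasDerivAt f (deriv f x) x) ∧
    (∀ x ∈ Ioo a b, HasDerivAt (deriv f) (deriv (deriv f) x) x) ∧
    ContinuousOn f (Ioo a b) ∧ ContinuousOn (deriv f) (Ioo a b) ∧
    ContinuousOn (deriv (deriv f)) (Ioo a b) := by
  have h0 : ContDiffOn ℝ (⊤ : ℕ∞) f (Ioo a b) := hf.of_le (by simp)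
  have h1 : ContDiffOn ℝ (⊤ : ℕ∞) (deriv f) (Ioo a b) :=
    h0.deriv_of_isOpen isOpen_Ioo (by simp)
  have h2 : ContDiffOn ℝ (⊤ : ℕ∞) (deriv (deriv f)) (Ioo a b) :=
    h1.deriv_of_isOpen isOpen_Ioo (by simp)
  have hd0 : ∀ x ∈ Ioo a b, HasDerivAt f (deriv f x) x := by
    intro x hx
    exact ((h0.differentiableOn (by simp)).differentiableAt (Ioo_mem_nhds hx.1 hx.2)).hasDerivAt
  have hd1 : ∀ x ∈ Ioo a b, HasDerivAt (deriv f) (deriv (deriv f) x) x := by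
    intro x hx
    exact ((h1.differentiableOn (by simp)).differentiableAt (Ioo_mem_nhds hx.1 hx.2)).hasDerivAt
  exact ⟨hd0, hd1, h0.continuousOn, h1.continuousOn, h2.continuousOn⟩


private lemma K_eq_zero {K s t : ℝ} (hs : 0 ≤ s) (ht : 0 ≤ t)
    (h : K * (1 + s + t)^2 = 0) : K = 0 := by
  rcases mul_eq_zero.mp h with h' | h'
  · exact h'
  · exfalso
    have := pow_eq_zero_iff (n := 2) (by norm_num) |>.mp h'
    linarith

section
variable {K : ℝ} {f g : ℝ → ℝ} {a₁ b₁ a₂ b₂ : ℝ}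

private lemma phase1 (hK : K ≠ 0) (h₁ : a₁ < b₁) (h₂ : a₂ < b₂)
    (hf : ContDiffOn ℝ (⊤ : ℕ∞) f (Ioo a₁ b₁))
    (hE : ∀ x ∈ Ioo a₁ b₁, ∀ y ∈ Ioo a₂ b₂,
      f x * g y * deriv (deriv f) x * deriv (deriv g) y - deriv f x ^ 2 * deriv g y ^ 2 =
        K * (1 + deriv f x ^ 2 * g y ^ 2 + f x ^ 2 * deriv g y ^ 2) ^ 2) :
    ∃ a b, a < b ∧ Ioo a b ⊆ Ioo a₁ b₁ ∧
      ∀ x ∈ Ioo a b, f x ≠ 0 ∧ deriv f x ≠ 0 ∧ deriv (deriv f) x ≠ 0 := by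
  obtain ⟨hd1, hd2, hfc, hf1c, hf2c⟩ := smooth_package hf
  have hy₀ : (a₂ + b₂)/2 ∈ Ioo a₂ b₂ := ⟨by linarith, by linarith⟩
  -- Step 1 : deriv f is not identically zero
  by_cases hc1 : ∀ x ∈ Ioo a₁ b₁, deriv f x = 0
  · exfalso
    have hx₀ : (a₁ + b₁)/2 ∈ Ioo a₁ b₁ := ⟨by linarith, by linarith⟩
    have hF2 : deriv (deriv f) ((a₁+b₁)/2) = 0 :=
      deriv_val_eq_zero_of_const hc1 hx₀ (hd2 _ hx₀)
    have e := hE _ hx₀ _ hy₀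
    refine hK (K_eq_zero (s := deriv f ((a₁+b₁)/2) ^ 2 * g ((a₂+b₂)/2) ^ 2)
      (t := f ((a₁+b₁)/2) ^ 2 * deriv g ((a₂+b₂)/2) ^ 2) (by positivity) (by positivity) ?_)
    linear_combination (-1 : ℝ) * e
      + (f ((a₁+b₁)/2) * g ((a₂+b₂)/2) * deriv (deriv g) ((a₂+b₂)/2)) * hF2
      - (deriv f ((a₁+b₁)/2) * deriv g ((a₂+b₂)/2) ^ 2) * (hc1 _ hx₀)
  push_neg at hc1
  obtain ⟨x₀, hx₀, hF1x₀⟩ := hc1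
  obtain ⟨c₁, d₁, hcd₁, hsub₁, hne₁⟩ := shrink_Ioo hf1c hx₀ hF1x₀
  -- Step 2 : deriv (deriv f) is not identically zero on Ioo c₁ d₁
  by_cases hc2 : ∀ x ∈ Ioo c₁ d₁, deriv (deriv f) x = 0
  · exfalso
    have hx₀' : (c₁ + d₁)/2 ∈ Ioo c₁ d₁ := ⟨by linarith, by linarith⟩
    -- deriv g never vanishes on Ioo a₂ b₂
    have hQ : ∀ y ∈ Ioo a₂ b₂, deriv g y ≠ 0 := by
      intro y hy hq0
      have e := hE _ (hsub₁ hx₀') y hy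
      refine hK (K_eq_zero (s := deriv f ((c₁+d₁)/2) ^ 2 * g y ^ 2)
        (t := f ((c₁+d₁)/2) ^ 2 * deriv g y ^ 2) (by positivity) (by positivity) ?_)
      linear_combination (-1 : ℝ) * e
        + (f ((c₁+d₁)/2) * g y * deriv (deriv g) y) * (hc2 _ hx₀')
        - (deriv f ((c₁+d₁)/2) ^ 2 * deriv g y) * hq0
    set g₀ : ℝ := g ((a₂+b₂)/2) with hg₀
    set q₀ : ℝ := deriv g ((a₂+b₂)/2) ^ 2 with hq₀
    have hq₀ne : q₀ ≠ 0 := pow_ne_zero 2 (hQ _ hy₀)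
    have hq₀nn : 0 ≤ q₀ := sq_nonneg _
    -- Ψ vanishes on Ioo c₁ d₁
    have hΨ0 : ∀ x ∈ Ioo c₁ d₁,
        K * (1 + deriv f x ^ 2 * g₀ ^ 2 + f x ^ 2 * q₀) ^ 2 + deriv f x ^ 2 * q₀ = 0 := by
      intro x hx
      have e := hE _ (hsub₁ hx) _ hy₀
      linear_combination (-1 : ℝ) * e + (f x * g₀ * deriv (deriv g) ((a₂+b₂)/2)) * (hc2 x hx)
    -- its derivative vanishes as well
    have hfz : ∀ x ∈ Ioo c₁ d₁, f x = 0 := by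
      intro x hx
      have hu : HasDerivAt (fun x => deriv f x ^ 2) (2 * deriv f x * deriv (deriv f) x) x := by
        have : HasDerivAt (fun x => deriv f x ^ 2) _ x := (hd2 x (hsub₁ hx)).pow 2
        convert this using 1
        push_cast
        ring
      have hv : HasDerivAt (fun x => f x ^ 2) (2 * f x * deriv f x) x := by
        have : HasDerivAt (fun x => f x ^ 2) _ x := (hd1 x (hsub₁ hx)).pow 2
        convert this using 1
        push_cast
        ring
      have hinner : HasDerivAt (fun x => 1 + deriv f x ^ 2 * g₀ ^ 2 + f x ^ 2 * q₀)
          ((2 * deriv f x * deriv (deriv f) x) * g₀ ^ 2 + (2 * f x * deriv f x) * q₀) x := by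
        have : HasDerivAt (fun x => 1 + deriv f x ^ 2 * g₀ ^ 2 + f x ^ 2 * q₀) _ x :=
          ((hu.mul_const (g₀ ^ 2)).const_add 1).add (hv.mul_const q₀)
        convert this using 1
      have hsq := hinner.pow 2
      have hΨd := (hsq.const_mul K).add (hu.mul_const q₀)
      have hval : K * ((2:ℕ) * (1 + deriv f x ^ 2 * g₀ ^ 2 + f x ^ 2 * q₀) ^ (2-1) *
            ((2 * deriv f x * deriv (deriv f) x) * g₀ ^ 2 + (2 * f x * deriv f x) * q₀))
          + (2 * deriv f x * deriv (deriv f) x) * q₀ = 0 :=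
        deriv_val_eq_zero_of_const hΨ0 hx hΨd
      have hprod : K * (1 + deriv f x ^ 2 * g₀ ^ 2 + f x ^ 2 * q₀) * f x * deriv f x * q₀ = 0 := by
        have h2 := hc2 x hx
        push_cast at hval
        linear_combination (1/4 : ℝ) * hval
          - (K * (1 + deriv f x ^ 2 * g₀ ^ 2 + f x ^ 2 * q₀) * deriv f x * g₀ ^ 2
              + (1/2 : ℝ) * deriv f x * q₀) * h2
      have hTpos : (0:ℝ) < 1 + deriv f x ^ 2 * g₀ ^ 2 + f x ^ 2 * q₀ := by positivity
      by_contra hf0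
      exact (mul_ne_zero (mul_ne_zero (mul_ne_zero (mul_ne_zero hK hTpos.ne') hf0)
        (hne₁ x hx)) hq₀ne) hprod
    have hF1z : deriv f ((c₁+d₁)/2) = 0 :=
      deriv_val_eq_zero_of_const hfz hx₀' (hd1 _ (hsub₁ hx₀'))
    exact hne₁ _ hx₀' hF1z
  push_neg at hc2
  obtain ⟨x₁, hx₁, hF2x₁⟩ := hc2
  obtain ⟨c₂, d₂, hcd₂, hsub₂, hne₂⟩ := shrink_Ioo (hf2c.mono hsub₁) hx₁ hF2x₁
  -- Step 3 : f is not identically zero on Ioo c₂ d₂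
  by_cases hc3 : ∀ x ∈ Ioo c₂ d₂, f x = 0
  · exfalso
    have hx₂ : (c₂ + d₂)/2 ∈ Ioo c₂ d₂ := ⟨by linarith, by linarith⟩
    have : deriv f ((c₂+d₂)/2) = 0 :=
      deriv_val_eq_zero_of_const hc3 hx₂ (hd1 _ (hsub₁ (hsub₂ hx₂)))
    exact hne₁ _ (hsub₂ hx₂) this
  push_neg at hc3
  obtain ⟨x₂, hx₂, hfx₂⟩ := hc3
  obtain ⟨c₃, d₃, hcd₃, hsub₃, hne₃⟩ := shrink_Ioo (hfc.mono (hsub₂.trans hsub₁ |>.trans (fun _ h => h))) hx₂ hfx₂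
  refine ⟨c₃, d₃, hcd₃, fun x hx => hsub₁ (hsub₂ (hsub₃ hx)), fun x hx =>
    ⟨hne₃ x hx, hne₁ x (hsub₂ (hsub₃ hx)), hne₂ x (hsub₃ hx)⟩⟩

end


/-- There is no homothetical surface `z = f(x)·g(y)` in Euclidean space with
nonzero constant Gauss curvature `K`. -/
theorem no_homothetical_nonzero_CGC (K : ℝ) (hK : K ≠ 0) :
    ¬ ∃ (a₁ b₁ a₂ b₂ : ℝ) (f g : ℝ → ℝ),
        a₁ < b₁ ∧ a₂ < b₂ ∧
        ContDiffOn ℝ (⊤ : ℕ∞) f (Set.Ioo a₁ b₁) ∧ ContDiffOn ℝ (⊤ : ℕ∞) g (Set.Ioo a₂ b₂) ∧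
        ∀ x ∈ Set.Ioo a₁ b₁, ∀ y ∈ Set.Ioo a₂ b₂,
          f x * g y * deriv (deriv f) x * deriv (deriv g) y
              - deriv f x ^ 2 * deriv g y ^ 2 =
            K * (1 + deriv f x ^ 2 * g y ^ 2 + f x ^ 2 * deriv g y ^ 2) ^ 2 := by
  rintro ⟨a₁, b₁, a₂, b₂, f, g, h₁, h₂, hf, hg, hE⟩
  obtain ⟨p₁, p₂, hp, hIsub, hfprop⟩ := phase1 hK h₁ h₂ hf hE
  have hEsym : ∀ y ∈ Ioo a₂ b₂, ∀ x ∈ Ioo p₁ p₂,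
      g y * f x * deriv (deriv g) y * deriv (deriv f) x - deriv g y ^ 2 * deriv f x ^ 2 =
        K * (1 + deriv g y ^ 2 * f x ^ 2 + g y ^ 2 * deriv f x ^ 2) ^ 2 :=
    fun y hy x hx => by linear_combination hE x (hIsub hx) y hy
  obtain ⟨q₁, q₂, hq, hJsub, hgprop⟩ := phase1 hK h₂ hp hg hEsym
  obtain ⟨hdf1, hdf2, hfc, hf1c, hf2c⟩ := smooth_package hf
  obtain ⟨hdg1, hdg2, hgc, hg1c, hg2c⟩ := smooth_package hg
  set Af : ℝ → ℝ := fun x => f x * deriv (deriv f) x with hAfdef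
  set Bf : ℝ → ℝ := fun x => deriv f x ^ 2 with hBfdef
  set Cf : ℝ → ℝ := fun x => f x ^ 2 with hCfdef
  set Pg : ℝ → ℝ := fun y => g y * deriv (deriv g) y with hPgdef
  set Qg : ℝ → ℝ := fun y => deriv g y ^ 2 with hQgdef
  set Sg : ℝ → ℝ := fun y => g y ^ 2 with hSgdef
  have hE2 : ∀ x ∈ Ioo p₁ p₂, ∀ y ∈ Ioo q₁ q₂,
      Af x * Pg y - Bf x * Qg y = K * (1 + Bf x * Sg y + Cf x * Qg y) ^ 2 := by
    intro x hx y hy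
    simp only [hAfdef, hBfdef, hCfdef, hPgdef, hQgdef, hSgdef]
    linear_combination hE x (hIsub hx) y (hJsub hy)
  set ys : ℝ := (q₁ + q₂)/2 with hysdef
  have hysmem : ys ∈ Ioo q₁ q₂ := ⟨by rw [hysdef]; linarith, by rw [hysdef]; linarith⟩
  have hPne : ∀ y ∈ Ioo q₁ q₂, Pg y ≠ 0 := fun y hy => by
    simp only [hPgdef]; exact mul_ne_zero (hgprop y hy).1 (hgprop y hy).2.2
  have hQpos : ∀ y ∈ Ioo q₁ q₂, 0 < Qg y := fun y hy => by
    simp only [hQgdef]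
    exact lt_of_le_of_ne (sq_nonneg _) (Ne.symm (pow_ne_zero 2 (hgprop y hy).2.1))
  have hSpos : ∀ y ∈ Ioo q₁ q₂, 0 < Sg y := fun y hy => by
    simp only [hSgdef]
    exact lt_of_le_of_ne (sq_nonneg _) (Ne.symm (pow_ne_zero 2 (hgprop y hy).1))
  have hPgc : ContinuousOn Pg (Ioo q₁ q₂) := by
    rw [hPgdef]; exact (hgc.mono hJsub).mul (hg2c.mono hJsub)
  have hQgc : ContinuousOn Qg (Ioo q₁ q₂) := by
    rw [hQgdef]; exact (hg1c.mono hJsub).pow 2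
  have hSgc : ContinuousOn Sg (Ioo q₁ q₂) := by
    rw [hSgdef]; exact (hgc.mono hJsub).pow 2
  have hCfc : ContinuousOn Cf (Ioo p₁ p₂) := by
    rw [hCfdef]; exact (hfc.mono hIsub).pow 2
  have hQd : ∀ y ∈ Ioo q₁ q₂, HasDerivAt Qg (2 * deriv g y * deriv (deriv g) y) y := by
    intro y hy
    rw [hQgdef]
    have : HasDerivAt (fun y => deriv g y ^ 2) _ y := (hdg2 y (hJsub hy)).pow 2
    convert this using 1
    push_cast
    ring
  have hSd : ∀ y ∈ Ioo q₁ q₂, HasDerivAt Sg (2 * g y * deriv g y) y := by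
    intro y hy
    rw [hSgdef]
    have : HasDerivAt (fun y => g y ^ 2) _ y := (hdg1 y (hJsub hy)).pow 2
    convert this using 1
    push_cast
    ring
  have hCd : ∀ x ∈ Ioo p₁ p₂, HasDerivAt Cf (2 * f x * deriv f x) x := by
    intro x hx
    rw [hCfdef]
    have : HasDerivAt (fun x => f x ^ 2) _ x := (hdf1 x (hIsub hx)).pow 2
    convert this using 1
    push_cast
    ring
  have hQne2 : ∃ u₁ ∈ Ioo q₁ q₂, ∃ u₂ ∈ Ioo q₁ q₂, Qg u₁ ≠ Qg u₂ :=
    exists_pair_ne_of_hasDerivAt hQd hysmem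
      (mul_ne_zero (mul_ne_zero two_ne_zero (hgprop ys hysmem).2.1) (hgprop ys hysmem).2.2)
  have hSne2 : ∃ u₁ ∈ Ioo q₁ q₂, ∃ u₂ ∈ Ioo q₁ q₂, Sg u₁ ≠ Sg u₂ :=
    exists_pair_ne_of_hasDerivAt hSd hysmem
      (mul_ne_zero (mul_ne_zero two_ne_zero (hgprop ys hysmem).1) (hgprop ys hysmem).2.1)
  have hSimg : (Sg '' (Ioo q₁ q₂)).Infinite := by
    obtain ⟨u₁, hu₁, u₂, hu₂, hne⟩ := hSne2
    exact image_infinite hSgc hu₁ hu₂ hne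
  have hQimg : (Qg '' (Ioo q₁ q₂)).Infinite := by
    obtain ⟨u₁, hu₁, u₂, hu₂, hne⟩ := hQne2
    exact image_infinite hQgc hu₁ hu₂ hne
  have hV : ∀ y₀ ∈ Ioo q₁ q₂, ∀ y₁ ∈ Ioo q₁ q₂, ∀ x ∈ Ioo p₁ p₂,
      (Pg y₁ * K - Pg y₀ * K)
      + (Pg y₁ * (Qg y₀ + 2*K*Sg y₀) - Pg y₀ * (Qg y₁ + 2*K*Sg y₁)) * Bf x
      + (Pg y₁ * (2*K*Qg y₀) - Pg y₀ * (2*K*Qg y₁)) * Cf x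
      + (Pg y₁ * (K*Sg y₀^2) - Pg y₀ * (K*Sg y₁^2)) * Bf x^2
      + (Pg y₁ * (2*K*Sg y₀*Qg y₀) - Pg y₀ * (2*K*Sg y₁*Qg y₁)) * (Bf x * Cf x)
      + (Pg y₁ * (K*Qg y₀^2) - Pg y₀ * (K*Qg y₁^2)) * Cf x^2 = 0 := by
    intro y₀ hy₀ y₁ hy₁ x hx
    linear_combination Pg y₀ * (hE2 x hx y₁ hy₁) - Pg y₁ * (hE2 x hx y₀ hy₀)
  by_cases hA : ∀ y ∈ Ioo q₁ q₂,
      (Pg ys * K - Pg y * K = 0) ∧ (Pg ys * (2*K*Qg y) - Pg y * (2*K*Qg ys) = 0)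
  · have hPconst : ∀ y ∈ Ioo q₁ q₂, Pg y = Pg ys := by
      intro y hy
      have h1 := (hA y hy).1
      have : (Pg ys - Pg y) * K = 0 := by linear_combination h1
      rcases mul_eq_zero.mp this with h | h
      · linarith
      · exact absurd h hK
    have hQconst : ∀ y ∈ Ioo q₁ q₂, Qg y = Qg ys := by
      intro y hy
      have h3 := (hA y hy).2
      rw [hPconst y hy] at h3
      have : Pg ys * (2*K) * (Qg y - Qg ys) = 0 := by linear_combination h3
      rcases mul_eq_zero.mp this with h | h
      · rcases mul_eq_zero.mp h with h | h
        · exact absurd h (hPne ys hysmem)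
        · exact absurd (by linarith : K = 0) hK
      · linarith
    obtain ⟨u₁, hu₁, u₂, hu₂, hne⟩ := hQne2
    rw [hQconst u₁ hu₁, hQconst u₂ hu₂] at hne
    exact hne rfl
  push_neg at hA
  obtain ⟨yo, hyo, hno⟩ := hA
  set z1 : ℝ := Pg ys * K - Pg yo * K with hz1def
  set z2 : ℝ := Pg ys * (Qg yo + 2*K*Sg yo) - Pg yo * (Qg ys + 2*K*Sg ys) with hz2def
  set z3 : ℝ := Pg ys * (2*K*Qg yo) - Pg yo * (2*K*Qg ys) with hz3def
  set z4 : ℝ := Pg ys * (K*Sg yo^2) - Pg yo * (K*Sg ys^2) with hz4def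
  set z5 : ℝ := Pg ys * (2*K*Sg yo*Qg yo) - Pg yo * (2*K*Sg ys*Qg ys) with hz5def
  set z6 : ℝ := Pg ys * (K*Qg yo^2) - Pg yo * (K*Qg ys^2) with hz6def
  have hz13 : z1 ≠ 0 ∨ z3 ≠ 0 := by tauto
  by_cases hBI : ∀ y₀ ∈ Ioo q₁ q₂, ∀ y₁ ∈ Ioo q₁ q₂, ∃ μ : ℝ,
      (Pg y₁ * K - Pg y₀ * K = μ * z1) ∧
      (Pg y₁ * (Qg y₀ + 2*K*Sg y₀) - Pg y₀ * (Qg y₁ + 2*K*Sg y₁) = μ * z2) ∧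
      (Pg y₁ * (2*K*Qg y₀) - Pg y₀ * (2*K*Qg y₁) = μ * z3) ∧
      (Pg y₁ * (K*Sg y₀^2) - Pg y₀ * (K*Sg y₁^2) = μ * z4) ∧
      (Pg y₁ * (2*K*Sg y₀*Qg y₀) - Pg y₀ * (2*K*Sg y₁*Qg y₁) = μ * z5) ∧
      (Pg y₁ * (K*Qg y₀^2) - Pg y₀ * (K*Qg y₁^2) = μ * z6)
  · -- CASE B-I
    by_cases hz1 : z1 = 0
    · have hPconst : ∀ y ∈ Ioo q₁ q₂, Pg y = Pg ys := by
        intro y hy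
        obtain ⟨μ, hh1, _, _, _, _, _⟩ := hBI y hy ys hysmem
        rw [hz1, mul_zero] at hh1
        have : (Pg ys - Pg y) * K = 0 := by linear_combination hh1
        rcases mul_eq_zero.mp this with h | h
        · linarith
        · exact absurd h hK
      by_cases hz3 : z3 = 0
      · have hQconst : ∀ y ∈ Ioo q₁ q₂, Qg y = Qg ys := by
          intro y hy
          obtain ⟨μ, _, _, hh3, _, _, _⟩ := hBI y hy ys hysmem
          rw [hz3, mul_zero] at hh3
          rw [hPconst y hy] at hh3
          have : Pg ys * (2*K) * (Qg y - Qg ys) = 0 := by linear_combination hh3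
          rcases mul_eq_zero.mp this with h | h
          · rcases mul_eq_zero.mp h with h | h
            · exact absurd h (hPne ys hysmem)
            · exact absurd (by linarith : K = 0) hK
          · linarith
        obtain ⟨u₁, hu₁, u₂, hu₂, hne⟩ := hQne2
        rw [hQconst u₁ hu₁, hQconst u₂ hu₂] at hne
        exact hne rfl
      · have hquad : ∀ v ∈ Qg '' (Ioo q₁ q₂),
            (2*z6*Qg ys - z3*Qg ys^2) + (-2*z6)*v + z3*v^2 = 0 := by
          rintro v ⟨y, hy, rfl⟩
          obtain ⟨μ, _, _, hh3, _, _, hh6⟩ := hBI y hy ys hysmem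
          rw [hPconst y hy] at hh3 hh6
          have helim : K * Pg ys *
              ((2*z6*Qg ys - z3*Qg ys^2) + (-2*z6)*(Qg y) + z3*(Qg y)^2) = 0 := by
            linear_combination (-z6) * hh3 + z3 * hh6
          rcases mul_eq_zero.mp helim with h | h
          · exfalso
            rcases mul_eq_zero.mp h with h | h
            exacts [hK h, hPne ys hysmem h]
          · linarith
        exact hz3 (poly2_zero hQimg hquad).2.2
    · by_cases hPc : ∀ y ∈ Ioo q₁ q₂, Pg y = Pg ys
      · have hQconst : ∀ y ∈ Ioo q₁ q₂, Qg y = Qg ys := by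
          intro y hy
          obtain ⟨μ, hh1, _, hh3, _, _, _⟩ := hBI y hy ys hysmem
          rw [hPc y hy] at hh1 hh3
          have hμ : μ = 0 := by
            have h0 : μ * z1 = 0 := by linear_combination -hh1
            rcases mul_eq_zero.mp h0 with h | h
            exacts [h, absurd h hz1]
          rw [hμ, zero_mul] at hh3
          have : Pg ys * (2*K) * (Qg y - Qg ys) = 0 := by linear_combination hh3
          rcases mul_eq_zero.mp this with h | h
          · rcases mul_eq_zero.mp h with h | h
            exacts [absurd h (hPne ys hysmem), absurd (by linarith : K = 0) hK]
          · linarith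
        obtain ⟨u₁, hu₁, u₂, hu₂, hne⟩ := hQne2
        rw [hQconst u₁ hu₁, hQconst u₂ hu₂] at hne
        exact hne rfl
      · push_neg at hPc
        obtain ⟨y₂, hy₂, hPy₂⟩ := hPc
        have hPimg : (Pg '' (Ioo q₁ q₂)).Infinite := image_infinite hPgc hy₂ hysmem hPy₂
        have hPys := hPne ys hysmem
        have hL3 : ∀ y ∈ Ioo q₁ q₂,
            2*z1*(Pg ys*Qg y - Pg y*Qg ys) - z3*(Pg ys - Pg y) = 0 := by
          intro y hy
          obtain ⟨μ, hh1, _, hh3, _, _, _⟩ := hBI y hy ys hysmem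
          have hL3K : K * (2*z1*(Pg ys*Qg y - Pg y*Qg ys) - z3*(Pg ys - Pg y)) = 0 := by
            linear_combination z1 * hh3 - z3 * hh1
          rcases mul_eq_zero.mp hL3K with h | h
          exacts [absurd h hK, h]
        have hL6 : ∀ y ∈ Ioo q₁ q₂,
            z1*(Pg ys*Qg y^2 - Pg y*Qg ys^2) - z6*(Pg ys - Pg y) = 0 := by
          intro y hy
          obtain ⟨μ, hh1, _, _, _, _, hh6⟩ := hBI y hy ys hysmem
          have hL6K : K * (z1*(Pg ys*Qg y^2 - Pg y*Qg ys^2) - z6*(Pg ys - Pg y)) = 0 := by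
            linear_combination z1 * hh6 - z6 * hh1
          rcases mul_eq_zero.mp hL6K with h | h
          exacts [absurd h hK, h]
        have hquad : ∀ v ∈ Pg '' (Ioo q₁ q₂),
            (Pg ys^3*z3^2 - 4*z1*z6*Pg ys^3)
            + (2*z3*Pg ys^2*(2*z1*Qg ys - z3) - 4*z1^2*Pg ys^2*Qg ys^2 + 4*z1*Pg ys^2*z6)*v
            + (Pg ys*(2*z1*Qg ys - z3)^2)*v^2 = 0 := by
          rintro v ⟨y, hy, rfl⟩
          linear_combination 4*z1*Pg ys^2*(hL6 y hy)
            - Pg ys*(2*z1*(Pg ys*Qg y + Pg y*Qg ys) + z3*(Pg ys - Pg y))*(hL3 y hy)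
        have hc2 := (poly2_zero hPimg hquad).2.2
        have h2z : 2*z1*Qg ys - z3 = 0 := by
          rcases mul_eq_zero.mp hc2 with h | h
          exacts [absurd h hPys, pow_eq_zero_iff (n := 2) (by norm_num) |>.mp h]
        have hQconst : ∀ y ∈ Ioo q₁ q₂, Qg y = Qg ys := by
          intro y hy
          have h0 : 2*z1*Pg ys*(Qg y - Qg ys) = 0 := by
            linear_combination (hL3 y hy) - (Pg ys - Pg y)*h2z
          rcases mul_eq_zero.mp h0 with h | h
          · exfalso
            rcases mul_eq_zero.mp h with h' | h'
            · have : z1 = 0 := by linarith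
              exact hz1 this
            · exact hPys h'
          · linarith
        obtain ⟨u₁, hu₁, u₂, hu₂, hne⟩ := hQne2
        rw [hQconst u₁ hu₁, hQconst u₂ hu₂] at hne
        exact hne rfl
  · -- CASE B-II
    push_neg at hBI
    obtain ⟨ya, hya, yb, hyb, hne⟩ := hBI
    set z1' : ℝ := Pg yb * K - Pg ya * K with hz1'def
    set z2' : ℝ := Pg yb * (Qg ya + 2*K*Sg ya) - Pg ya * (Qg yb + 2*K*Sg yb) with hz2'def
    set z3' : ℝ := Pg yb * (2*K*Qg ya) - Pg ya * (2*K*Qg yb) with hz3'def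
    set z4' : ℝ := Pg yb * (K*Sg ya^2) - Pg ya * (K*Sg yb^2) with hz4'def
    set z5' : ℝ := Pg yb * (2*K*Sg ya*Qg ya) - Pg ya * (2*K*Sg yb*Qg yb) with hz5'def
    set z6' : ℝ := Pg yb * (K*Qg ya^2) - Pg ya * (K*Qg yb^2) with hz6'def
    have hVz : ∀ x ∈ Ioo p₁ p₂,
        z1 + z2*Bf x + z3*Cf x + z4*Bf x^2 + z5*(Bf x*Cf x) + z6*Cf x^2 = 0 := by
      intro x hx
      simp only [hz1def, hz2def, hz3def, hz4def, hz5def, hz6def]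
      linear_combination hV yo hyo ys hysmem x hx
    have hVz' : ∀ x ∈ Ioo p₁ p₂,
        z1' + z2'*Bf x + z3'*Cf x + z4'*Bf x^2 + z5'*(Bf x*Cf x) + z6'*Cf x^2 = 0 := by
      intro x hx
      simp only [hz1'def, hz2'def, hz3'def, hz4'def, hz5'def, hz6'def]
      linear_combination hV ya hya yb hyb x hx
    have hw : ∃ w1 w2 w3 w5 w6 : ℝ,
        (∀ x ∈ Ioo p₁ p₂, w1 + w2*Bf x + w3*Cf x + w5*(Bf x*Cf x) + w6*Cf x^2 = 0) ∧
        ¬(w1 = 0 ∧ w2 = 0 ∧ w3 = 0 ∧ w5 = 0 ∧ w6 = 0) := by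
      by_cases h44 : z4 = 0 ∧ z4' = 0
      · refine ⟨z1, z2, z3, z5, z6, fun x hx => ?_, ?_⟩
        · have hv := hVz x hx
          rw [h44.1] at hv
          linear_combination hv
        · rintro ⟨e1, _, e3, _, _⟩
          rcases hz13 with h | h
          exacts [h e1, h e3]
      · refine ⟨z4'*z1 - z4*z1', z4'*z2 - z4*z2', z4'*z3 - z4*z3',
          z4'*z5 - z4*z5', z4'*z6 - z4*z6', fun x hx => ?_, ?_⟩
        · linear_combination z4' * (hVz x hx) - z4 * (hVz' x hx)
        · rintro ⟨e1, e2, e3, e5, e6⟩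
          by_cases hz4 : z4 = 0
          · have hz4' : z4' ≠ 0 := fun h => h44 ⟨hz4, h⟩
            rcases hz13 with h | h
            · apply h
              have h0 : z4' * z1 = 0 := by linear_combination e1 + z1' * hz4
              rcases mul_eq_zero.mp h0 with h' | h'
              exacts [absurd h' hz4', h']
            · apply h
              have h0 : z4' * z3 = 0 := by linear_combination e3 + z3' * hz4
              rcases mul_eq_zero.mp h0 with h' | h'
              exacts [absurd h' hz4', h']
          · have heq : ∀ u u' : ℝ, z4'*u - z4*u' = 0 → u' = z4'/z4*u := by
              intro u u' he
              rw [div_mul_eq_mul_div, eq_div_iff hz4]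
              linear_combination -he
            have h4eq : z4' = z4'/z4*z4 := (div_mul_cancel₀ z4' hz4).symm
            exact hne (z4'/z4) (heq z1 z1' e1) (heq z2 z2' e2) (heq z3 z3' e3) h4eq
              (heq z5 z5' e5) (heq z6 z6' e6)
    obtain ⟨w1, w2, w3, w5, w6, hCON, hwne⟩ := hw
    have hxc : (p₁+p₂)/2 ∈ Ioo p₁ p₂ := ⟨by linarith, by linarith⟩
    by_cases hD : ∀ x ∈ Ioo p₁ p₂, w2 + w5*Cf x = 0
    · obtain ⟨x₁, hx₁, x₂, hx₂, hCne⟩ := exists_pair_ne_of_hasDerivAt hCd hxc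
        (mul_ne_zero (mul_ne_zero two_ne_zero (hfprop _ hxc).1) (hfprop _ hxc).2.1)
      have hw5 : w5 = 0 := by
        have hd1 := hD x₁ hx₁
        have hd2 := hD x₂ hx₂
        have : w5*(Cf x₁ - Cf x₂) = 0 := by linear_combination hd1 - hd2
        rcases mul_eq_zero.mp this with h | h
        exacts [h, absurd (by linarith) hCne]
      have hw2 : w2 = 0 := by
        have := hD x₁ hx₁; rw [hw5] at this; linarith
      have hCimg : (Cf '' (Ioo p₁ p₂)).Infinite := image_infinite hCfc hx₁ hx₂ hCne
      have hquad : ∀ v ∈ Cf '' (Ioo p₁ p₂), w1 + w3*v + w6*v^2 = 0 := by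
        rintro v ⟨x, hx, rfl⟩
        have := hCON x hx
        rw [hw5, hw2] at this
        linear_combination this
      obtain ⟨e1, e3, e6⟩ := poly2_zero hCimg hquad
      exact hwne ⟨e1, hw2, e3, hw5, e6⟩
    · push_neg at hD
      obtain ⟨x₀, hx₀, hD0⟩ := hD
      obtain ⟨r₁, r₂, hr, hrsub, hDne⟩ := shrink_Ioo (u := fun x => w2 + w5*Cf x)
        (continuousOn_const.add (continuousOn_const.mul hCfc)) hx₀ hD0
      have hBD : ∀ x ∈ Ioo r₁ r₂,
          Bf x*(w2 + w5*Cf x) = -(w1 + w3*Cf x + w6*Cf x^2) := by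
        intro x hx
        linear_combination hCON x (hrsub hx)
      have hAD : ∀ x ∈ Ioo r₁ r₂,
          Af x*(w2 + w5*Cf x) = -(Cf x)*(w3 + w5*Bf x + 2*w6*Cf x) := by
        intro x hx
        have hxI : x ∈ Ioo a₁ b₁ := hIsub (hrsub hx)
        have hu : HasDerivAt (fun t => deriv f t ^ 2) (2*deriv f x*deriv (deriv f) x) x := by
          have : HasDerivAt (fun t => deriv f t ^ 2) _ x := (hdf2 x hxI).pow 2
          convert this using 1
          push_cast
          ring
        have hv : HasDerivAt (fun t => f t ^ 2) (2*f x*deriv f x) x := by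
          have : HasDerivAt (fun t => f t ^ 2) _ x := (hdf1 x hxI).pow 2
          convert this using 1
          push_cast
          ring
        have hbc := hu.mul hv
        have hc2 := hv.pow 2
        have hh : HasDerivAt (fun t => w1 + w2*(deriv f t ^ 2) + w3*(f t ^ 2)
              + w5*(deriv f t ^ 2 * f t ^ 2) + w6*((f t ^ 2)^2))
            (2*deriv f x*(w2*deriv (deriv f) x + w3*f x
              + w5*(deriv (deriv f) x*f x^2 + f x*deriv f x^2) + 2*w6*f x^3)) x := by
          have : HasDerivAt (fun t => w1 + w2*(deriv f t ^ 2) + w3*(f t ^ 2)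
                + w5*(deriv f t ^ 2 * f t ^ 2) + w6*((f t ^ 2)^2)) _ x := ((((hu.const_mul w2).const_add w1).add (hv.const_mul w3)).add
            (hbc.const_mul w5)).add (hc2.const_mul w6)
          convert this using 1
          push_cast
          ring
        have hzero : ∀ t ∈ Ioo r₁ r₂, (fun t => w1 + w2*(deriv f t ^ 2) + w3*(f t ^ 2)
            + w5*(deriv f t ^ 2 * f t ^ 2) + w6*((f t ^ 2)^2)) t = 0 := by
          intro t ht
          have := hCON t (hrsub ht)
          simp only [hBfdef, hCfdef] at this
          linear_combination this
        have hDval := deriv_val_eq_zero_of_const hzero hx hh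
        have hbr : w2*deriv (deriv f) x + w3*f x
            + w5*(deriv (deriv f) x*f x^2 + f x*deriv f x^2) + 2*w6*f x^3 = 0 := by
          have h2F1 : (2*deriv f x) ≠ 0 :=
            mul_ne_zero two_ne_zero (hfprop x (hrsub hx)).2.1
          rcases mul_eq_zero.mp hDval with h | h
          exacts [absurd h h2F1, h]
        simp only [hAfdef, hBfdef, hCfdef]
        linear_combination (f x) * hbr
      have hxc4 : (r₁+r₂)/2 ∈ Ioo r₁ r₂ := ⟨by linarith, by linarith⟩
      obtain ⟨u₁, hu₁, u₂, hu₂, hCne4⟩ := exists_pair_ne_of_hasDerivAt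
        (fun x hx => hCd x (hrsub hx)) hxc4
        (mul_ne_zero (mul_ne_zero two_ne_zero (hfprop _ (hrsub hxc4)).1)
          (hfprop _ (hrsub hxc4)).2.1)
      have hCimg4 : (Cf '' (Ioo r₁ r₂)).Infinite :=
        image_infinite (hCfc.mono hrsub) hu₁ hu₂ hCne4
      have hquart : ∀ y ∈ Ioo q₁ q₂, ∀ v ∈ Cf '' (Ioo r₁ r₂),
          (-(K*w2^2) + 2*Sg y*K*w1*w2 - Sg y^2*K*w1^2 + Qg y*w1*w2)
          + (-(2*K*w2*w5) + 2*Sg y*K*w2*w3 + 2*Sg y*K*w1*w5 - 2*Sg y^2*K*w1*w3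
              + Qg y*w2*w3 + Qg y*w1*w5 - 2*Qg y*K*w2^2 + 2*Qg y*Sg y*K*w1*w2
              - Pg y*w2*w3 + Pg y*w1*w5)*v
          + (-(K*w5^2) + 2*Sg y*K*w3*w5 + 2*Sg y*K*w2*w6 - Sg y^2*K*w3^2
              - 2*Sg y^2*K*w1*w6 + Qg y*w3*w5 + Qg y*w2*w6 - 4*Qg y*K*w2*w5
              + 2*Qg y*Sg y*K*w2*w3 + 2*Qg y*Sg y*K*w1*w5 - Qg y^2*K*w2^2
              - 2*Pg y*w2*w6)*v^2
          + (2*Sg y*K*w5*w6 - 2*Sg y^2*K*w3*w6 + Qg y*w5*w6 - 2*Qg y*K*w5^2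
              + 2*Qg y*Sg y*K*w3*w5 + 2*Qg y*Sg y*K*w2*w6 - 2*Qg y^2*K*w2*w5
              - Pg y*w5*w6)*v^3
          + (-(Sg y^2*K*w6^2) + 2*Qg y*Sg y*K*w5*w6 - Qg y^2*K*w5^2)*v^4 = 0 := by
        intro y hy
        rintro v ⟨x, hx, rfl⟩
        have e := hE2 x (hrsub hx) y hy
        have hbd := hBD x hx
        have had := hAD x hx
        linear_combination ((w2 + w5*Cf x)^2) * e - (Pg y*(w2 + w5*Cf x)) * had
          + (Pg y*w5*Cf x + Qg y*(w2 + w5*Cf x)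
            + K*Sg y*(((w2 + w5*Cf x) - (w1 + w3*Cf x + w6*Cf x^2)*Sg y
                + Cf x*(w2 + w5*Cf x)*Qg y)
              + (1 + Bf x*Sg y + Cf x*Qg y)*(w2 + w5*Cf x))) * hbd
      have hcoef : ∀ y ∈ Ioo q₁ q₂,
          (-(K*w2^2) + 2*Sg y*K*w1*w2 - Sg y^2*K*w1^2 + Qg y*w1*w2) = 0 ∧
          (-(2*K*w2*w5) + 2*Sg y*K*w2*w3 + 2*Sg y*K*w1*w5 - 2*Sg y^2*K*w1*w3
              + Qg y*w2*w3 + Qg y*w1*w5 - 2*Qg y*K*w2^2 + 2*Qg y*Sg y*K*w1*w2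
              - Pg y*w2*w3 + Pg y*w1*w5) = 0 ∧
          (-(K*w5^2) + 2*Sg y*K*w3*w5 + 2*Sg y*K*w2*w6 - Sg y^2*K*w3^2
              - 2*Sg y^2*K*w1*w6 + Qg y*w3*w5 + Qg y*w2*w6 - 4*Qg y*K*w2*w5
              + 2*Qg y*Sg y*K*w2*w3 + 2*Qg y*Sg y*K*w1*w5 - Qg y^2*K*w2^2
              - 2*Pg y*w2*w6) = 0 ∧
          (2*Sg y*K*w5*w6 - 2*Sg y^2*K*w3*w6 + Qg y*w5*w6 - 2*Qg y*K*w5^2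
              + 2*Qg y*Sg y*K*w3*w5 + 2*Qg y*Sg y*K*w2*w6 - 2*Qg y^2*K*w2*w5
              - Pg y*w5*w6) = 0 ∧
          (-(Sg y^2*K*w6^2) + 2*Qg y*Sg y*K*w5*w6 - Qg y^2*K*w5^2) = 0 :=
        fun y hy => poly4_zero hCimg4 (hquart y hy)
      by_cases hw5 : w5 = 0
      · have h4 := (hcoef ys hysmem).2.2.2.2
        have hw6 : w6 = 0 := by
          have hsq : K*(w6*Sg ys)^2 = 0 := by rw [hw5] at h4; linear_combination -h4
          rcases mul_eq_zero.mp hsq with h | h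
          · exact absurd h hK
          · have := pow_eq_zero_iff (n := 2) (by norm_num) |>.mp h
            rcases mul_eq_zero.mp this with h' | h'
            exacts [h', absurd h' (hSpos ys hysmem).ne']
        have hw2 : w2 ≠ 0 := by
          intro h
          exact hD0 (by rw [h, hw5]; ring)
        have hQS : ∀ y ∈ Ioo q₁ q₂, w2*Qg y = w3*Sg y := by
          intro y hy
          have h2 := (hcoef y hy).2.2.1
          rw [hw5, hw6] at h2
          have hsq : K*(w3*Sg y - w2*Qg y)^2 = 0 := by linear_combination -h2
          rcases mul_eq_zero.mp hsq with h | h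
          · exact absurd h hK
          · have := pow_eq_zero_iff (n := 2) (by norm_num) |>.mp h
            linarith
        have hfin : ∀ v ∈ Sg '' (Ioo q₁ q₂),
            K*w2^3 + (-(2*K*w2^2*w1) - w1*w2*w3)*v + (K*w2*w1^2)*v^2 = 0 := by
          rintro v ⟨y, hy, rfl⟩
          have h0 := (hcoef y hy).1
          linear_combination (-w2)*h0 + w1*w2*(hQS y hy)
        have hKw2 := (poly2_zero hSimg hfin).1
        rcases mul_eq_zero.mp hKw2 with h | h
        · exact hK h
        · exact hw2 (pow_eq_zero_iff (n := 3) (by norm_num) |>.mp h)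
      · have hQS : ∀ y ∈ Ioo q₁ q₂, w5*Qg y = w6*Sg y := by
          intro y hy
          have h4 := (hcoef y hy).2.2.2.2
          have hsq : K*(w5*Qg y - w6*Sg y)^2 = 0 := by linear_combination -h4
          rcases mul_eq_zero.mp hsq with h | h
          · exact absurd h hK
          · have := pow_eq_zero_iff (n := 2) (by norm_num) |>.mp h
            linarith
        have hw6 : w6 ≠ 0 := by
          intro h
          have h0 := hQS ys hysmem
          rw [h, zero_mul] at h0
          rcases mul_eq_zero.mp h0 with h' | h'
          exacts [hw5 h', absurd h' (hQpos ys hysmem).ne']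
        have hPQ : ∀ y ∈ Ioo q₁ q₂, Pg y = Qg y := by
          intro y hy
          have h3 := (hcoef y hy).2.2.2.1
          have h0 : w5*w6*(Qg y - Pg y) = 0 := by
            linear_combination h3 + 2*K*(w5 + w2*Qg y - w3*Sg y)*(hQS y hy)
          rcases mul_eq_zero.mp h0 with h | h
          · exfalso
            rcases mul_eq_zero.mp h with h' | h'
            exacts [hw5 h', hw6 h']
          · linarith
        obtain ⟨ρ, hw6e⟩ : ∃ ρ : ℝ, w6 = ρ*w5 := ⟨w6/w5, (div_mul_cancel₀ w6 hw5).symm⟩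
        have hQρ : ∀ y ∈ Ioo q₁ q₂, Qg y = ρ*Sg y := by
          intro y hy
          have h0 : w5*(Qg y - ρ*Sg y) = 0 := by
            linear_combination (hQS y hy) + Sg y * hw6e
          rcases mul_eq_zero.mp h0 with h | h
          exacts [absurd h hw5, by linarith]
        have hfin : ∀ v ∈ Sg '' (Ioo q₁ q₂),
            (-(K*w5^2)) + (ρ*w3*w5 - ρ^2*w2*w5 + 2*K*w3*w5 - 2*K*ρ*w2*w5)*v
              + (-(K*w3^2) + 2*K*ρ*w2*w3 - K*ρ^2*w2^2)*v^2 = 0 := by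
          rintro v ⟨y, hy, rfl⟩
          have h2 := (hcoef y hy).2.2.1
          rw [hPQ y hy, hQρ y hy, hw6e] at h2
          linear_combination h2
        have h0 := (poly2_zero hSimg hfin).1
        have : K*w5^2 = 0 := by linarith
        rcases mul_eq_zero.mp this with h | h
        · exact hK h
        · exact hw5 (pow_eq_zero_iff (n := 2) (by norm_num) |>.mp h)
end

section
/- Let a, b ∈ ℝ with (a,b) ≠ (0,0), let K ∈ ℝ with K ≠ 0, and set f(x) = a·cosh(x) + b·sinh(x). Then there is no smooth function g : J → ℝ on an open interval with g'' vanishing nowhere such that f(x)·g(y)·f''(x)·g''(y) − f'(x)²·g'(y)² = K · ( 1 + f'(x)²·g(y)² + f(x)²·g'(y)² )² for all x ∈ ℝ and y ∈ J. -/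
/-- The function `x ↦ (a cosh x + b sinh x)^2` is unbounded when `(a,b) ≠ 0`. -/
lemma unbdd_cosh_sinh_sq (a b : ℝ) (hab : 0 < a ^ 2 + b ^ 2) (T : ℝ) :
    ∃ x : ℝ, T < (a * Real.cosh x + b * Real.sinh x) ^ 2 := by
  by_contra h
  push_neg at h
  have hT0 : 0 ≤ T := (sq_nonneg _).trans (h 0)
  set q := Real.sqrt (a ^ 2 + b ^ 2) with hq_def
  have hq : 0 < q := Real.sqrt_pos.mpr hab
  have hq2 : q ^ 2 = a ^ 2 + b ^ 2 := Real.sq_sqrt hab.le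
  set R := 2 * (Real.sqrt T + 1) / q with hR_def
  have hsT : 0 ≤ Real.sqrt T := Real.sqrt_nonneg T
  have hsT2 : Real.sqrt T ^ 2 = T := Real.sq_sqrt hT0
  have hR0 : 0 ≤ R := by positivity
  have hsinh : R / 2 ≤ Real.sinh R := by
    rw [Real.sinh_eq]
    have h1 : R + 1 ≤ Real.exp R := Real.add_one_le_exp R
    have h2 : Real.exp (-R) ≤ 1 :=
      (Real.exp_le_exp.mpr (neg_nonpos.mpr hR0)).trans_eq Real.exp_zero
    linarith
  have hsum : (a * Real.cosh R + b * Real.sinh R) ^ 2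
      + (a * Real.cosh (-R) + b * Real.sinh (-R)) ^ 2
      = 2 * a ^ 2 * Real.cosh R ^ 2 + 2 * b ^ 2 * Real.sinh R ^ 2 := by
    rw [Real.cosh_neg, Real.sinh_neg]; ring
  have hcs := Real.cosh_sq_sub_sinh_sq R
  have hRq : q * R = 2 * (Real.sqrt T + 1) := by
    rw [hR_def]; field_simp
  have h1 := h R
  have h2 := h (-R)
  -- sinh R ≥ R/2 ≥ 0, so sinh R ^ 2 ≥ R^2/4
  have hs2 : (R / 2) ^ 2 ≤ Real.sinh R ^ 2 := by
    have : 0 ≤ R / 2 := by linarith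
    nlinarith
  nlinarith [sq_nonneg (Real.sinh R), sq_nonneg R, sq_nonneg (q * R), hq.le,
    mul_pos hq hq]

/-- For `f(x) = a·cosh x + b·sinh x` with `(a,b) ≠ (0,0)` there is no `g`
with `g''` nowhere vanishing making the homothetical graph `z = f(x)·g(y)` have nonzero
constant Gauss curvature `K`. -/
theorem no_homothetical_CGC_cosh_sinh
    (a b K : ℝ) (hab : (a, b) ≠ ((0 : ℝ), (0 : ℝ))) (hK : K ≠ 0) :
    ¬ ∃ (a₂ b₂ : ℝ) (g : ℝ → ℝ),
        a₂ < b₂ ∧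
        ContDiffOn ℝ (⊤ : ℕ∞) g (Set.Ioo a₂ b₂) ∧
        (∀ y ∈ Set.Ioo a₂ b₂, deriv (deriv g) y ≠ 0) ∧
        ∀ x : ℝ, ∀ y ∈ Set.Ioo a₂ b₂,
          (a * Real.cosh x + b * Real.sinh x) * g y *
              deriv (deriv (fun u => a * Real.cosh u + b * Real.sinh u)) x *
              deriv (deriv g) y
            - (deriv (fun u => a * Real.cosh u + b * Real.sinh u) x) ^ 2 * deriv g y ^ 2 =
          K * (1 + (deriv (fun u => a * Real.cosh u + b * Real.sinh u) x) ^ 2 * g y ^ 2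
            + (a * Real.cosh x + b * Real.sinh x) ^ 2 * deriv g y ^ 2) ^ 2 := by
  rintro ⟨a₂, b₂, g, hlt, -, -, hEq⟩
  have hab2 : 0 < a ^ 2 + b ^ 2 := by
    rcases eq_or_ne a 0 with rfl | ha
    · rcases eq_or_ne b 0 with rfl | hb
      · exact absurd rfl hab
      · positivity
    · positivity
  set y₀ : ℝ := (a₂ + b₂) / 2 with hy₀_def
  have hy₀ : y₀ ∈ Set.Ioo a₂ b₂ := ⟨by simp [hy₀_def]; linarith, by simp [hy₀_def]; linarith⟩
  -- derivatives of f
  have hder1 : deriv (fun u => a * Real.cosh u + b * Real.sinh u)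
      = fun x => a * Real.sinh x + b * Real.cosh x := by
    funext x
    exact (((Real.hasDerivAt_cosh x).const_mul a).add
      ((Real.hasDerivAt_sinh x).const_mul b)).deriv
  have hder2 : ∀ x, deriv (deriv (fun u => a * Real.cosh u + b * Real.sinh u)) x
      = a * Real.cosh x + b * Real.sinh x := by
    intro x
    rw [hder1]
    exact (((Real.hasDerivAt_sinh x).const_mul a).add
      ((Real.hasDerivAt_cosh x).const_mul b)).deriv
  have h : ∀ x : ℝ,
      (a * Real.cosh x + b * Real.sinh x) * g y₀ * (a * Real.cosh x + b * Real.sinh x) *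
          deriv (deriv g) y₀
        - (a * Real.sinh x + b * Real.cosh x) ^ 2 * deriv g y₀ ^ 2 =
      K * (1 + (a * Real.sinh x + b * Real.cosh x) ^ 2 * g y₀ ^ 2
        + (a * Real.cosh x + b * Real.sinh x) ^ 2 * deriv g y₀ ^ 2) ^ 2 := by
    intro x
    have := hEq x y₀ hy₀
    rwa [hder2, hder1] at this
  -- key polynomial identity in t = (a cosh x + b sinh x)^2
  have key : ∀ x : ℝ,
      K * (g y₀ ^ 2 + deriv g y₀ ^ 2) ^ 2 * ((a * Real.cosh x + b * Real.sinh x) ^ 2) ^ 2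
      + (2 * K * (1 + (b ^ 2 - a ^ 2) * g y₀ ^ 2) * (g y₀ ^ 2 + deriv g y₀ ^ 2)
          - g y₀ * deriv (deriv g) y₀ + deriv g y₀ ^ 2) * (a * Real.cosh x + b * Real.sinh x) ^ 2
      + (K * (1 + (b ^ 2 - a ^ 2) * g y₀ ^ 2) ^ 2 + (b ^ 2 - a ^ 2) * deriv g y₀ ^ 2) = 0 := by
    intro x
    have hx := h x
    have hv : (a * Real.sinh x + b * Real.cosh x) ^ 2
        = (a * Real.cosh x + b * Real.sinh x) ^ 2 + (b ^ 2 - a ^ 2) := by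
      have hcs := Real.cosh_sq_sub_sinh_sq x
      linear_combination (b ^ 2 - a ^ 2) * hcs
    rw [hv] at hx
    linear_combination -hx
  -- three points with increasing values of t
  obtain ⟨x₁, hx₁⟩ := unbdd_cosh_sinh_sq a b hab2 ((a * Real.cosh 0 + b * Real.sinh 0) ^ 2)
  obtain ⟨x₂, hx₂⟩ := unbdd_cosh_sinh_sq a b hab2 ((a * Real.cosh x₁ + b * Real.sinh x₁) ^ 2)
  set t₀ := (a * Real.cosh 0 + b * Real.sinh 0) ^ 2 with ht₀
  set t₁ := (a * Real.cosh x₁ + b * Real.sinh x₁) ^ 2 with ht₁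
  set t₂ := (a * Real.cosh x₂ + b * Real.sinh x₂) ^ 2 with ht₂
  set al := K * (g y₀ ^ 2 + deriv g y₀ ^ 2) ^ 2 with hal_def
  set be := 2 * K * (1 + (b ^ 2 - a ^ 2) * g y₀ ^ 2) * (g y₀ ^ 2 + deriv g y₀ ^ 2)
      - g y₀ * deriv (deriv g) y₀ + deriv g y₀ ^ 2 with hbe_def
  set ga := K * (1 + (b ^ 2 - a ^ 2) * g y₀ ^ 2) ^ 2 + (b ^ 2 - a ^ 2) * deriv g y₀ ^ 2
      with hga_def
  have e₀ : al * t₀ ^ 2 + be * t₀ + ga = 0 := key 0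
  have e₁ : al * t₁ ^ 2 + be * t₁ + ga = 0 := key x₁
  have e₂ : al * t₂ ^ 2 + be * t₂ + ga = 0 := key x₂
  have h10 : al * (t₁ + t₀) + be = 0 := by
    have hf : (t₁ - t₀) * (al * (t₁ + t₀) + be) = 0 := by linear_combination e₁ - e₀
    rcases mul_eq_zero.mp hf with hc | hc
    · exact absurd hc (sub_ne_zero.mpr (ne_of_gt hx₁))
    · exact hc
  have h20 : al * (t₂ + t₀) + be = 0 := by
    have hf : (t₂ - t₀) * (al * (t₂ + t₀) + be) = 0 := by linear_combination e₂ - e₀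
    rcases mul_eq_zero.mp hf with hc | hc
    · exact absurd hc (sub_ne_zero.mpr (ne_of_gt (hx₁.trans hx₂)))
    · exact hc
  have hal0 : al = 0 := by
    have hf : al * (t₂ - t₁) = 0 := by linarith
    rcases mul_eq_zero.mp hf with hc | hc
    · exact hc
    · exact absurd hc (sub_ne_zero.mpr (ne_of_gt hx₂))
  -- from al = 0 and K ≠ 0 deduce g y₀ = 0 and deriv g y₀ = 0
  have hAB : (g y₀ ^ 2 + deriv g y₀ ^ 2) ^ 2 = 0 := by
    rcases mul_eq_zero.mp (hal_def.symm.trans hal0) with hc | hc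
    · exact absurd hc hK
    · exact hc
  have hAB0 : g y₀ ^ 2 + deriv g y₀ ^ 2 = 0 := pow_eq_zero_iff two_ne_zero |>.mp hAB
  have hA2 : g y₀ ^ 2 = 0 := by
    have h1 := sq_nonneg (g y₀)
    have h2 := sq_nonneg (deriv g y₀)
    linarith
  have hB2 : deriv g y₀ ^ 2 = 0 := by
    have h1 := sq_nonneg (g y₀)
    linarith
  have hA : g y₀ = 0 := pow_eq_zero_iff two_ne_zero |>.mp hA2
  have hB : deriv g y₀ = 0 := pow_eq_zero_iff two_ne_zero |>.mp hB2
  have h0 := h 0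
  rw [hA, hB] at h0
  simp at h0
  exact hK h0.symm
end

section
/- Let a, b ∈ ℝ with (a,b) ≠ (0,0), let K ∈ ℝ with K ≠ 0, and set f(x) = a·cos(x) + b·sin(x). Then there is no smooth function g : J → ℝ on an open interval with g'' vanishing nowhere such that f(x)·g(y)·f''(x)·g''(y) − f'(x)²·g'(y)² = K · ( 1 + f'(x)²·g(y)² + f(x)²·g'(y)² )² for all x ∈ ℝ and y ∈ J. -/
/-- For `f(x) = a·cos x + b·sin x` with `(a,b) ≠ (0,0)` there is no `g`
with `g''` nowhere vanishing making the homothetical graph `z = f(x)·g(y)` have nonzero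
constant Gauss curvature `K`. -/
theorem no_homothetical_CGC_cos_sin
    (a b K : ℝ) (hab : (a, b) ≠ ((0 : ℝ), (0 : ℝ))) (hK : K ≠ 0) :
    ¬ ∃ (a₂ b₂ : ℝ) (g : ℝ → ℝ),
        a₂ < b₂ ∧
        ContDiffOn ℝ (⊤ : ℕ∞) g (Set.Ioo a₂ b₂) ∧
        (∀ y ∈ Set.Ioo a₂ b₂, deriv (deriv g) y ≠ 0) ∧
        ∀ x : ℝ, ∀ y ∈ Set.Ioo a₂ b₂,
          (a * Real.cos x + b * Real.sin x) * g y *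
              deriv (deriv (fun u => a * Real.cos u + b * Real.sin u)) x *
              deriv (deriv g) y
            - (deriv (fun u => a * Real.cos u + b * Real.sin u) x) ^ 2 * deriv g y ^ 2 =
          K * (1 + (deriv (fun u => a * Real.cos u + b * Real.sin u) x) ^ 2 * g y ^ 2
            + (a * Real.cos x + b * Real.sin x) ^ 2 * deriv g y ^ 2) ^ 2 := by
  rintro ⟨a₂, b₂, g, hlt, hg, hg2, heq⟩
  -- first and second derivative of f
  have hf' : (deriv fun u => a * Real.cos u + b * Real.sin u)
      = fun x => b * Real.cos x - a * Real.sin x := by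
    funext x
    have h := ((Real.hasDerivAt_cos x).const_mul a).add ((Real.hasDerivAt_sin x).const_mul b)
    rw [show (fun u => a * Real.cos u + b * Real.sin u) = ((fun y => a * Real.cos y) + fun y => b * Real.sin y) from rfl, h.deriv]; ring
  have hf2 : (deriv fun x => b * Real.cos x - a * Real.sin x)
      = fun x => -(a * Real.cos x + b * Real.sin x) := by
    funext x
    have h := ((Real.hasDerivAt_cos x).const_mul b).sub ((Real.hasDerivAt_sin x).const_mul a)
    rw [show (fun x => b * Real.cos x - a * Real.sin x) = ((fun y => b * Real.cos y) - fun y => a * Real.sin y) from rfl, h.deriv]; ring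
  simp only [hf', hf2] at heq
  -- nondegeneracy
  have hab' : a ≠ 0 ∨ b ≠ 0 := by
    by_contra h
    push_neg at h
    exact hab (by simp [h.1, h.2])
  have hs : 0 < a ^ 2 + b ^ 2 := by
    rcases hab' with h | h <;> positivity
  set r : ℝ := Real.sqrt (a ^ 2 + b ^ 2) with hrdef
  have hr : 0 < r := Real.sqrt_pos.mpr hs
  have hr2 : r ^ 2 = a ^ 2 + b ^ 2 := Real.sq_sqrt hs.le
  -- angle θ with cos θ = a/r, sin θ = b/r
  set z : ℂ := ⟨a, b⟩ with hzdef
  have hz : z ≠ 0 := by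
    intro h
    rw [Complex.ext_iff] at h
    rcases hab' with h' | h' <;> simp_all
  have habs : ‖z‖ = r := by
    rw [Complex.norm_def, hzdef, Complex.normSq_mk, hrdef]
    congr 1; ring
  set θ : ℝ := Complex.arg z with hθdef
  have hcθ : Real.cos θ = a / r := by
    have := Complex.cos_arg hz
    rw [habs] at this
    simpa using this
  have hsθ : Real.sin θ = b / r := by
    have := Complex.sin_arg z
    rw [habs] at this
    simpa using this
  -- values of f and f' at θ, θ+π/2, θ+π/4
  have p1 : a * Real.cos θ + b * Real.sin θ = r := by
    rw [hcθ, hsθ]; field_simp; linear_combination -hr2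
  have p2 : b * Real.cos θ - a * Real.sin θ = 0 := by
    rw [hcθ, hsθ]; field_simp; ring
  have p3 : a * Real.cos (θ + Real.pi / 2) + b * Real.sin (θ + Real.pi / 2) = 0 := by
    simp [Real.cos_add, Real.sin_add, hcθ, hsθ]; ring
  have p4 : b * Real.cos (θ + Real.pi / 2) - a * Real.sin (θ + Real.pi / 2) = -r := by
    simp [Real.cos_add, Real.sin_add, hcθ, hsθ]
    field_simp
    linear_combination hr2
  have p5 : a * Real.cos (θ + Real.pi / 4) + b * Real.sin (θ + Real.pi / 4)
      = r * (Real.sqrt 2 / 2) := by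
    rw [Real.cos_add, Real.sin_add, Real.cos_pi_div_four, Real.sin_pi_div_four, hcθ, hsθ]
    field_simp
    linear_combination (-1 : ℝ) * hr2
  have p6 : b * Real.cos (θ + Real.pi / 4) - a * Real.sin (θ + Real.pi / 4)
      = -(r * (Real.sqrt 2 / 2)) := by
    rw [Real.cos_add, Real.sin_add, Real.cos_pi_div_four, Real.sin_pi_div_four, hcθ, hsθ]
    field_simp
    linear_combination hr2
  have h2 : Real.sqrt 2 ^ 2 = 2 := Real.sq_sqrt (by norm_num)
  -- the key pointwise facts
  have key : ∀ y ∈ Set.Ioo a₂ b₂,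
      (g y) ^ 2 = (deriv g y) ^ 2 ∧
      r ^ 2 * (g y) ^ 2 + K * (1 + r ^ 2 * (g y) ^ 2) ^ 2 = 0 := by
    intro y hy
    have E1 := heq θ y hy
    rw [p1, p2] at E1
    have E0 := heq (θ + Real.pi / 2) y hy
    rw [p3, p4] at E0
    have E2 := heq (θ + Real.pi / 4) y hy
    rw [p5, p6] at E2
    -- clean E2 using (√2)^2 = 2
    have e2 : -(r ^ 2 / 2 * (g y * deriv (deriv g) y + (deriv g y) ^ 2))
        = K * (1 + r ^ 2 / 2 * (g y) ^ 2 + r ^ 2 / 2 * (deriv g y) ^ 2) ^ 2 := by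
      linear_combination E2 + ((r ^ 2 / 4) * (g y * deriv (deriv g) y + (deriv g y) ^ 2)
        + K * (2 + (r ^ 2 / 2 + r ^ 2 * Real.sqrt 2 ^ 2 / 4) * ((g y) ^ 2 + (deriv g y) ^ 2))
          * (r ^ 2 * ((g y) ^ 2 + (deriv g y) ^ 2) / 4)) * h2
    have t1 : K * (r ^ 2 * ((g y) ^ 2 - (deriv g y) ^ 2)) ^ 2 = 0 := by
      linear_combination (-2 : ℝ) * E0 + (-2 : ℝ) * E1 + (4 : ℝ) * e2
    have hX : r ^ 2 * ((g y) ^ 2 - (deriv g y) ^ 2) = 0 := by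
      rcases mul_eq_zero.mp t1 with h | h
      · exact absurd h hK
      · exact (pow_eq_zero_iff two_ne_zero).mp h
    have hGB : (g y) ^ 2 = (deriv g y) ^ 2 := by
      rcases mul_eq_zero.mp hX with h | h
      · exact absurd h (by positivity)
      · linarith [sub_eq_zero.mp h]
    refine ⟨hGB, ?_⟩
    linear_combination (-1 : ℝ) * E0 + r ^ 2 * hGB
  -- g and g' never vanish on the interval
  have gne : ∀ y ∈ Set.Ioo a₂ b₂, g y ≠ 0 := by
    intro y hy h0
    have := (key y hy).2
    rw [h0] at this
    simp at this
    exact hK (by linarith)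
  have g'ne : ∀ y ∈ Set.Ioo a₂ b₂, deriv g y ≠ 0 := by
    intro y hy h0
    have h1 := (key y hy).1
    rw [h0] at h1
    exact gne y hy ((pow_eq_zero_iff two_ne_zero).mp (by simpa using h1))
  -- differentiability of g
  have hdg : ∀ y ∈ Set.Ioo a₂ b₂, HasDerivAt g (deriv g y) y := by
    intro y hy
    exact ((hg.contDiffAt (isOpen_Ioo.mem_nhds hy)).differentiableAt (by simp)).hasDerivAt
  -- (g y)^2 is constant on the interval
  have hconst : ∀ y ∈ Set.Ioo a₂ b₂,
      1 + 2 * K * (1 + r ^ 2 * (g y) ^ 2) = 0 := by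
    intro y hy
    have hG := (hdg y hy).pow 2
    have hΦ := ((hG.const_mul (r ^ 2)).add
      ((((hG.const_mul (r ^ 2)).const_add 1).pow 2).const_mul K))
    have hev : (fun y => r ^ 2 * g y ^ 2 + K * (1 + r ^ 2 * g y ^ 2) ^ 2)
        =ᶠ[nhds y] fun _ => (0 : ℝ) := by
      filter_upwards [isOpen_Ioo.mem_nhds hy] with t ht using (key t ht).2
    have hD0 : r ^ 2 * ((2 : ℕ) * g y ^ (2 - 1) * deriv g y)
        + K * ((2 : ℕ) * (1 + r ^ 2 * g y ^ 2) ^ (2 - 1)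
          * (r ^ 2 * ((2 : ℕ) * g y ^ (2 - 1) * deriv g y))) = 0 := by
      exact hΦ.unique ((hasDerivAt_const y (0:ℝ)).congr_of_eventuallyEq hev)
    have hfac : (2 * r ^ 2 * g y * deriv g y)
        * (1 + 2 * K * (1 + r ^ 2 * (g y) ^ 2)) = 0 := by
      linear_combination hD0
    rcases mul_eq_zero.mp hfac with h | h
    · exfalso
      have := mul_ne_zero (mul_ne_zero (mul_ne_zero two_ne_zero (by positivity : r ^ 2 ≠ 0))
        (gne y hy)) (g'ne y hy)
      exact this h
    · exact h
  -- hence g^2 is a constant function, contradicting g·g' ≠ 0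
  set y₀ : ℝ := (a₂ + b₂) / 2 with hy₀def
  have hy₀ : y₀ ∈ Set.Ioo a₂ b₂ := by constructor <;> (rw [hy₀def]; linarith)
  have hG := (hdg y₀ hy₀).pow 2
  have hev2 : (fun y => g y ^ 2) =ᶠ[nhds y₀]
      fun _ => (-1 / (2 * K) - 1) / r ^ 2 := by
    filter_upwards [isOpen_Ioo.mem_nhds hy₀] with t ht
    have h := hconst t ht
    have hr2ne : r ^ 2 ≠ 0 := by positivity
    field_simp
    linarith
  have hzero : (2 : ℕ) * g y₀ ^ (2 - 1) * deriv g y₀ = 0 := by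
    exact hG.unique ((hasDerivAt_const y₀ _).congr_of_eventuallyEq hev2)
  have : g y₀ * deriv g y₀ = 0 := by
    simpa using hzero
  rcases mul_eq_zero.mp this with h | h
  · exact gne y₀ hy₀ h
  · exact g'ne y₀ hy₀ h
end

section
/- Let K ∈ ℝ with K ≠ 0, and let θ ∈ ℝ with cos θ ≠ 0 and sin θ ≠ 0. Then there do not exist smooth functions f : I → ℝ and g : J → ℝ on open intervals such that for all (s,t) ∈ I × J: −cos²θ · f''(s) · g''(t) = K · ( −f'(s)² − g'(t)² + cos²θ + 2 sin θ · f'(s) · g'(t) )² and −f'(s)² − g'(t)² + cos²θ + 2 sin θ · f'(s) · g'(t) ≠ 0. In other words, in Lorentz–Minkowski space L³ there is no non-degenerate translation surface with nonzero constant Gauss curvature generated by the planar curves α(s) = (s, 0, f(s)) and β(t) = (t sin θ, t cos θ, g(t)). -/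
open Polynomial in
lemma quartic_zero (e0 e1 e2 e3 e4 v₁ v₂ : ℝ) (hv : v₁ < v₂)
    (h : ∀ v ∈ Set.Icc v₁ v₂, e0 + e1*v + e2*v^2 + e3*v^3 + e4*v^4 = 0) :
    e4 = 0 ∧ e3 = 0 := by
  set p : ℝ[X] := C e0 + C e1 * X + C e2 * X^2 + C e3 * X^3 + C e4 * X^4 with hp
  have hz : p = 0 := by
    apply Polynomial.eq_zero_of_infinite_isRoot
    apply (Set.Icc_infinite hv).mono
    intro v hv'
    simp only [Set.mem_setOf_eq, Polynomial.IsRoot, hp, Polynomial.eval_add,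
      Polynomial.eval_mul, Polynomial.eval_pow, Polynomial.eval_C, Polynomial.eval_X]
    linarith [h v hv']
  constructor
  · have := congrArg (fun q : ℝ[X] => q.coeff 4) hz
    simpa [hp] using this
  · have := congrArg (fun q : ℝ[X] => q.coeff 3) hz
    simpa [hp] using this

lemma nonconst_deriv {a b : ℝ} {f : ℝ → ℝ} (hab : a < b)
    (hF : ∀ s ∈ Set.Ioo a b, deriv (deriv f) s ≠ 0) :
    ∃ s₁ ∈ Set.Ioo a b, ∃ s₂ ∈ Set.Ioo a b, deriv f s₁ ≠ deriv f s₂ := by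
  by_contra hcon
  push_neg at hcon
  have hs₀ : (a+b)/2 ∈ Set.Ioo a b := ⟨by linarith, by linarith⟩
  have heq : deriv f =ᶠ[nhds ((a+b)/2)] fun _ => deriv f ((a+b)/2) :=
    Filter.eventuallyEq_of_mem (isOpen_Ioo.mem_nhds hs₀)
      (fun x hx => hcon x hx ((a+b)/2) hs₀)
  have := heq.deriv_eq
  rw [deriv_const] at this
  exact hF _ hs₀ this

/-- In Lorentz–Minkowski space `L³`, there is no non-degenerate translation
surface with nonzero constant Gauss curvature generated by the planar curves
`α(s) = (s, 0, f s)` and `β(t) = (t sin θ, t cos θ, g t)` (non-orthogonal, non-parallel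
planes). -/
theorem no_lorentz_translation_CGC_two_planar_curves
    (K θ : ℝ) (hK : K ≠ 0) (hcos : Real.cos θ ≠ 0) (hsin : Real.sin θ ≠ 0) :
    ¬ ∃ (a₁ b₁ a₂ b₂ : ℝ) (f g : ℝ → ℝ),
        a₁ < b₁ ∧ a₂ < b₂ ∧
        ContDiffOn ℝ (⊤ : ℕ∞) f (Set.Ioo a₁ b₁) ∧ ContDiffOn ℝ (⊤ : ℕ∞) g (Set.Ioo a₂ b₂) ∧
        ∀ s ∈ Set.Ioo a₁ b₁, ∀ t ∈ Set.Ioo a₂ b₂,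
          (-(Real.cos θ ^ 2) * deriv (deriv f) s * deriv (deriv g) t =
            K * (-(deriv f s ^ 2) - deriv g t ^ 2 + Real.cos θ ^ 2
              + 2 * Real.sin θ * deriv f s * deriv g t) ^ 2) ∧
          (-(deriv f s ^ 2) - deriv g t ^ 2 + Real.cos θ ^ 2
              + 2 * Real.sin θ * deriv f s * deriv g t ≠ 0) := by
  rintro ⟨a₁, b₁, a₂, b₂, f, g, h1, h2, hf, hg, H⟩
  set c := Real.cos θ ^ 2 with hc_def
  set m := Real.sin θ with hm_def
  have hc : c ≠ 0 := pow_ne_zero _ hcos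
  have hs₀ : (a₁+b₁)/2 ∈ Set.Ioo a₁ b₁ := ⟨by linarith, by linarith⟩
  have ht₀ : (a₂+b₂)/2 ∈ Set.Ioo a₂ b₂ := ⟨by linarith, by linarith⟩
  -- second derivatives never vanish
  have hprod : ∀ s ∈ Set.Ioo a₁ b₁, ∀ t ∈ Set.Ioo a₂ b₂,
      deriv (deriv f) s ≠ 0 ∧ deriv (deriv g) t ≠ 0 := by
    intro s hs t ht
    obtain ⟨heq, hne⟩ := H s hs t ht
    have hR : K * (-(deriv f s ^ 2) - deriv g t ^ 2 + c
        + 2 * m * deriv f s * deriv g t) ^ 2 ≠ 0 :=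
      mul_ne_zero hK (pow_ne_zero _ hne)
    rw [← heq] at hR
    constructor
    · intro h0; rw [h0] at hR; simp at hR
    · intro h0; rw [h0] at hR; simp at hR
  have hF : ∀ s ∈ Set.Ioo a₁ b₁, deriv (deriv f) s ≠ 0 :=
    fun s hs => (hprod s hs _ ht₀).1
  have hG : ∀ t ∈ Set.Ioo a₂ b₂, deriv (deriv g) t ≠ 0 :=
    fun t ht => (hprod _ hs₀ t ht).2
  -- two points with distinct f'
  obtain ⟨s₁, hs₁, s₂, hs₂, hu⟩ := nonconst_deriv h1 hF
  obtain ⟨t₁', ht₁', t₂', ht₂', hv'⟩ := nonconst_deriv h2 hG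
  -- reorder so that deriv g t₁ < deriv g t₂
  obtain ⟨t₁, ht₁, t₂, ht₂, hv⟩ :
      ∃ t₁ ∈ Set.Ioo a₂ b₂, ∃ t₂ ∈ Set.Ioo a₂ b₂, deriv g t₁ < deriv g t₂ := by
    rcases lt_or_gt_of_ne hv' with h | h
    · exact ⟨t₁', ht₁', t₂', ht₂', h⟩
    · exact ⟨t₂', ht₂', t₁', ht₁', h⟩
  set u₁ := deriv f s₁
  set u₂ := deriv f s₂
  set A₁ := deriv (deriv f) s₁ with hA₁_def
  set A₂ := deriv (deriv f) s₂ with hA₂_def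
  have hA₁ : A₁ ≠ 0 := hF s₁ hs₁
  -- IVT: deriv g attains all values in [v₁, v₂]
  have hgc : ContinuousOn (deriv g) (Set.Ioo a₂ b₂) :=
    hg.continuousOn_deriv_of_isOpen isOpen_Ioo (by simp)
  have hsub : Set.uIcc t₁ t₂ ⊆ Set.Ioo a₂ b₂ :=
    Set.ordConnected_Ioo.uIcc_subset ht₁ ht₂
  have hivt : Set.uIcc (deriv g t₁) (deriv g t₂) ⊆ deriv g '' Set.uIcc t₁ t₂ :=
    intermediate_value_uIcc (hgc.mono hsub)
  -- the key quartic identity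
  have key : ∀ v ∈ Set.Icc (deriv g t₁) (deriv g t₂),
      (A₂*(c-u₁^2)^2 - A₁*(c-u₂^2)^2)
      + (4*m*(A₂*u₁*(c-u₁^2) - A₁*u₂*(c-u₂^2)))*v
      + (A₂*(4*m^2*u₁^2 - 2*(c-u₁^2)) - A₁*(4*m^2*u₂^2 - 2*(c-u₂^2)))*v^2
      + (-4*m*(A₂*u₁ - A₁*u₂))*v^3
      + (A₂ - A₁)*v^4 = 0 := by
    intro v hvmem
    have hv2 : v ∈ Set.uIcc (deriv g t₁) (deriv g t₂) := by
      rw [Set.uIcc_of_le hv.le]; exact hvmem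
    obtain ⟨t, htmem, htv⟩ := hivt hv2
    have ht : t ∈ Set.Ioo a₂ b₂ := hsub htmem
    obtain ⟨heq1, -⟩ := H s₁ hs₁ t ht
    obtain ⟨heq2, -⟩ := H s₂ hs₂ t ht
    rw [htv] at heq1 heq2
    have hP : K * (A₂ * (-(u₁^2) - v^2 + c + 2*m*u₁*v)^2
        - A₁ * (-(u₂^2) - v^2 + c + 2*m*u₂*v)^2) = 0 := by
      linear_combination A₁ * heq2 - A₂ * heq1
    have hP0 := (mul_eq_zero.mp hP).resolve_left hK
    linear_combination hP0
  obtain ⟨h4, h3⟩ := quartic_zero _ _ _ _ _ _ _ hv key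
  have hA12 : A₁ = A₂ := by linarith
  have : (-4) * m * (A₁ * (u₁ - u₂)) = 0 := by
    rw [hA12] at h3 ⊢
    linear_combination h3
  have := (mul_eq_zero.mp this).resolve_left (by
    simp [hm_def]
    exact hsin)
  have := (mul_eq_zero.mp this).resolve_left hA₁
  exact hu (by linarith)
end
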